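/- arXiv:2405.13174 — 4 statements merged into one kernel-verified Lean document; each statement's English description precedes it below -/
import Mathlib

section
/- For a càdlàg function x : [0,∞) → ℝ, fixed c > 0 and fixed 0 ≤ s < t, the map y ↦ D^{y,c}(x,[s,t]) sending a level y to the number of downcrossings of the interval [y−c/2, y+c/2] by x during [s,t] is Borel measurable (as a function into ℕ ∪ {+∞}). -/
open MeasureTheory Filter Set Function
open scoped ENNReal NNReal

noncomputable section

def Cadlag (x : ℝ → ℝ) : Prop :=
  (∀ u : ℝ, Tendsto x (nhdsWithin u (Ici u)) (nhds (x u))) ∧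
  (∀ u : ℝ, ∃ l : ℝ, Tendsto x (nhdsWithin u (Iio u)) (nhds l))

def jumpAt (x : ℝ → ℝ) (u : ℝ) : ℝ := x u - leftLim x u

def hitAbove (x : ℝ → ℝ) (t y : ℝ) (σ : EReal) : EReal :=
  sInf {u : EReal | ∃ r : ℝ, u = (r : EReal) ∧ σ ≤ (r : EReal) ∧ r ≤ t ∧ y ≤ x r}

def hitBelow (x : ℝ → ℝ) (t y : ℝ) (τ : EReal) : EReal :=
  sInf {u : EReal | ∃ r : ℝ, u = (r : EReal) ∧ τ ≤ (r : EReal) ∧ r ≤ t ∧ x r < y}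

def sigmaSeq (x : ℝ → ℝ) (s t y c : ℝ) : ℕ → EReal
  | 0 => (s : EReal)
  | n + 1 => hitBelow x t (y - c / 2) (hitAbove x t (y + c / 2) (sigmaSeq x s t y c n))

def downcross (x : ℝ → ℝ) (s t y c : ℝ) : ℕ∞ :=
  sSup {n : ℕ∞ | ∃ m : ℕ, n = (m : ℕ∞) ∧ sigmaSeq x s t y c m ≤ (t : EReal)}

def upcross (x : ℝ → ℝ) (s t y c : ℝ) : ℕ∞ :=
  downcross (fun u => - x u) s t (-y) c

def crossNum (x : ℝ → ℝ) (s t y c : ℝ) : ℕ∞ := upcross x s t y c + downcross x s t y c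

def levelDowncross (x : ℝ → ℝ) (s t y : ℝ) : ℕ∞ := ⨆ (c : ℝ) (_ : 0 < c), downcross x s t y c
def levelUpcross (x : ℝ → ℝ) (s t y : ℝ) : ℕ∞ := ⨆ (c : ℝ) (_ : 0 < c), upcross x s t y c
def levelCross (x : ℝ → ℝ) (s t y : ℝ) : ℕ∞ := ⨆ (c : ℝ) (_ : 0 < c), crossNum x s t y c

def LocFiniteVar (x : ℝ → ℝ) : Prop := ∀ a b : ℝ, eVariationOn x (Icc a b) ≠ ⊤

def LocBounded (g : ℝ → ℝ) : Prop := ∀ K : ℝ, ∃ M : ℝ, ∀ z ∈ Icc (-K) K, |g z| ≤ M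

def posVarOn (x : ℝ → ℝ) (s : Set ℝ) : ℝ≥0∞ :=
  ⨆ p : ℕ × { u : ℕ → ℝ // Monotone u ∧ ∀ i, u i ∈ s },
    ∑ i ∈ Finset.range p.1, ENNReal.ofReal (x (p.2.1 (i + 1)) - x (p.2.1 i))

def negVarOn (x : ℝ → ℝ) (s : Set ℝ) : ℝ≥0∞ := posVarOn (fun u => - x u) s


lemma hitSet_attain (x : ℝ → ℝ) (t : ℝ) (P : ℝ → Prop) (a : EReal) (L : ℝ) (hL : (L:EReal) ≤ a)
    (h : sInf {u : EReal | ∃ r : ℝ, u = (r : EReal) ∧ a ≤ (r : EReal) ∧ r ≤ t ∧ P r} ≤ (t : EReal)) :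
    ∃ r₀ : ℝ, sInf {u : EReal | ∃ r : ℝ, u = (r : EReal) ∧ a ≤ (r : EReal) ∧ r ≤ t ∧ P r} = (r₀ : EReal)
      ∧ a ≤ (r₀ : EReal) ∧ r₀ ≤ t ∧
      ∃ rs : ℕ → ℝ, (∀ n, P (rs n) ∧ r₀ ≤ rs n) ∧ Tendsto rs atTop (nhds r₀) := by
  set ES := {u : EReal | ∃ r : ℝ, u = (r : EReal) ∧ a ≤ (r : EReal) ∧ r ≤ t ∧ P r} with hES
  set S : Set ℝ := {r : ℝ | a ≤ (r : EReal) ∧ r ≤ t ∧ P r} with hS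
  have hne : S.Nonempty := by
    by_contra hem
    rw [Set.not_nonempty_iff_eq_empty] at hem
    have hemp : ES = ∅ := by
      ext u
      simp only [hES, mem_setOf_eq, mem_empty_iff_false, iff_false]
      rintro ⟨r, rfl, h1, h2, h3⟩
      have : r ∈ S := ⟨h1, h2, h3⟩
      rw [hem] at this
      exact this
    rw [hemp, sInf_empty] at h
    exact absurd h (by simp)
  have hbdd : BddBelow S := ⟨L, fun r hr => EReal.coe_le_coe_iff.mp (hL.trans hr.1)⟩
  set r₀ := sInf S with hr₀
  have hlb : ∀ r ∈ S, r₀ ≤ r := fun r hr => csInf_le hbdd hr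
  have hseq : ∀ n : ℕ, ∃ r ∈ S, r < r₀ + 1/(n+1) := by
    intro n
    apply exists_lt_of_csInf_lt hne
    have : (0:ℝ) < 1/(n+1) := by positivity
    linarith
  choose rs hrsS hrslt using hseq
  have hrsge : ∀ n, r₀ ≤ rs n := fun n => hlb _ (hrsS n)
  have htend : Tendsto rs atTop (nhds r₀) := by
    have h1 : Tendsto (fun n : ℕ => r₀ + 1/(n+1)) atTop (nhds (r₀ + 0)) :=
      Tendsto.const_add _ tendsto_one_div_add_atTop_nhds_zero_nat
    rw [add_zero] at h1
    exact tendsto_of_tendsto_of_tendsto_of_le_of_le tendsto_const_nhds h1 hrsge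
      (fun n => (hrslt n).le)
  have har₀ : a ≤ (r₀ : EReal) := by
    induction a using EReal.rec with
    | bot => exact bot_le
    | coe a' =>
      exact EReal.coe_le_coe_iff.mpr (le_csInf hne (fun r hr => EReal.coe_le_coe_iff.mp hr.1))
    | top =>
      obtain ⟨r, hr⟩ := hne
      exact absurd hr.1 (by simp)
  have hr₀t : r₀ ≤ t := by
    obtain ⟨r, hr⟩ := hne
    exact (hlb r hr).trans hr.2.1
  refine ⟨r₀, ?_, har₀, hr₀t, rs, fun n => ⟨(hrsS n).2.2, hrsge n⟩, htend⟩
  apply le_antisymm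
  · have hle : ∀ n, sInf ES ≤ ((rs n : ℝ) : EReal) :=
      fun n => sInf_le ⟨rs n, rfl, (hrsS n).1, (hrsS n).2.1, (hrsS n).2.2⟩
    have hcoe : Tendsto (fun n => ((rs n : ℝ) : EReal)) atTop (nhds (r₀ : EReal)) :=
      (continuous_coe_real_ereal.tendsto r₀).comp htend
    exact ge_of_tendsto' hcoe hle
  · apply le_sInf
    rintro u ⟨r, rfl, h1, h2, h3⟩
    exact EReal.coe_le_coe_iff.mpr (hlb r ⟨h1, h2, h3⟩)

lemma tendsto_right {x : ℝ → ℝ} (hx : Cadlag x) {r₀ : ℝ} {rs : ℕ → ℝ} (hge : ∀ n, r₀ ≤ rs n)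
    (ht : Tendsto rs atTop (nhds r₀)) : Tendsto (fun n => x (rs n)) atTop (nhds (x r₀)) := by
  apply (hx.1 r₀).comp
  rw [tendsto_nhdsWithin_iff]
  exact ⟨ht, Eventually.of_forall (fun n => hge n)⟩

lemma hitAbove_spec {x : ℝ → ℝ} (hx : Cadlag x) (t y : ℝ) (a : EReal) (L : ℝ) (hL : (L:EReal) ≤ a)
    (h : hitAbove x t y a ≤ (t : EReal)) :
    ∃ r₀ : ℝ, hitAbove x t y a = (r₀ : EReal) ∧ a ≤ (r₀ : EReal) ∧ r₀ ≤ t ∧ y ≤ x r₀ := by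
  obtain ⟨r₀, heq, ha, htle, rs, hprop, htend⟩ := hitSet_attain x t (fun r => y ≤ x r) a L hL h
  exact ⟨r₀, heq, ha, htle, ge_of_tendsto' (tendsto_right hx (fun n => (hprop n).2) htend)
    (fun n => (hprop n).1)⟩

lemma hitBelow_spec {x : ℝ → ℝ} (hx : Cadlag x) (t y : ℝ) (a : EReal) (L : ℝ) (hL : (L:EReal) ≤ a)
    (h : hitBelow x t y a ≤ (t : EReal)) :
    ∃ r₀ : ℝ, hitBelow x t y a = (r₀ : EReal) ∧ a ≤ (r₀ : EReal) ∧ r₀ ≤ t ∧ x r₀ ≤ y := by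
  obtain ⟨r₀, heq, ha, htle, rs, hprop, htend⟩ := hitSet_attain x t (fun r => x r < y) a L hL h
  exact ⟨r₀, heq, ha, htle, le_of_tendsto (tendsto_right hx (fun n => (hprop n).2) htend)
    (Eventually.of_forall fun n => (hprop n).1.le)⟩

lemma le_hitAbove (x : ℝ → ℝ) (t y : ℝ) (a : EReal) : a ≤ hitAbove x t y a := by
  apply le_sInf
  rintro u ⟨r, rfl, h1, _, _⟩
  exact h1

lemma le_hitBelow (x : ℝ → ℝ) (t y : ℝ) (a : EReal) : a ≤ hitBelow x t y a := by
  apply le_sInf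
  rintro u ⟨r, rfl, h1, _, _⟩
  exact h1

lemma s_le_sigma (x : ℝ → ℝ) (s t y c : ℝ) : ∀ n, (s:EReal) ≤ sigmaSeq x s t y c n := by
  intro n
  induction n with
  | zero => exact le_rfl
  | succ k ih =>
    calc (s:EReal) ≤ sigmaSeq x s t y c k := ih
    _ ≤ hitAbove x t (y + c/2) (sigmaSeq x s t y c k) := le_hitAbove _ _ _ _
    _ ≤ _ := le_hitBelow _ _ _ _

lemma sigma_mono (x : ℝ → ℝ) (s t y c : ℝ) : Monotone (sigmaSeq x s t y c) := by
  apply monotone_nat_of_le_succ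
  intro n
  calc sigmaSeq x s t y c n ≤ hitAbove x t (y + c/2) (sigmaSeq x s t y c n) := le_hitAbove _ _ _ _
  _ ≤ _ := le_hitBelow _ _ _ _

lemma le_downcross_iff {x : ℝ → ℝ} {s t y c : ℝ} (hst : s ≤ t) (m : ℕ) :
    (m:ℕ∞) ≤ downcross x s t y c ↔ sigmaSeq x s t y c m ≤ (t:EReal) := by
  constructor
  · intro h
    by_contra hns
    rcases Nat.eq_zero_or_pos m with h0 | hpos
    · subst h0
      exact hns (EReal.coe_le_coe_iff.mpr hst)
    · have hbd : downcross x s t y c ≤ ((m-1 : ℕ) : ℕ∞) := by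
        apply sSup_le
        rintro n ⟨k, rfl, hk⟩
        have hkm : k ≤ m - 1 := by
          by_contra hk'
          have hmk : m ≤ k := by omega
          exact hns ((sigma_mono x s t y c hmk).trans hk)
        exact Nat.cast_le.mpr hkm
      have hmle := h.trans hbd
      rw [Nat.cast_le] at hmle
      omega
  · intro h
    exact le_sSup ⟨m, rfl, h⟩

def ChainCond (x : ℝ → ℝ) (s t y c : ℝ) (m : ℕ) (u v : ℕ → ℝ) : Prop :=
  (∀ i, i < m → s ≤ u i ∧ u i ≤ v i ∧ v i ≤ t ∧ y + c/2 ≤ x (u i) ∧ x (v i) < y - c/2) ∧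
  (∀ i, i + 1 < m → v i ≤ u (i+1))

lemma chain_to_sigma {x : ℝ → ℝ} {s t y c : ℝ} (hst : s ≤ t) {m : ℕ} {u v : ℕ → ℝ}
    (hcc : ChainCond x s t y c m u v) : sigmaSeq x s t y c m ≤ (t : EReal) := by
  have key : ∀ k, k ≤ m →
      sigmaSeq x s t y c k ≤ (if k = 0 then (s:EReal) else ((v (k-1) : ℝ) : EReal)) := by
    intro k
    induction k with
    | zero => intro _; simp [sigmaSeq]
    | succ j ih =>
      intro hjm
      have hj : j < m := by omega
      have ihv := ih (by omega)
      have hbound : sigmaSeq x s t y c j ≤ ((u j : ℝ) : EReal) := by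
        rcases Nat.eq_zero_or_pos j with h0 | hpos
        · subst h0
          simp only [if_pos rfl] at ihv
          exact ihv.trans (EReal.coe_le_coe_iff.mpr (hcc.1 0 hj).1)
        · have hvu : v (j-1) ≤ u j := by
            have h2 := hcc.2 (j-1) (by omega)
            rwa [Nat.sub_add_cancel hpos] at h2
          have hne : j ≠ 0 := by omega
          rw [if_neg hne] at ihv
          exact ihv.trans (EReal.coe_le_coe_iff.mpr hvu)
      obtain ⟨hsu, huv, hvt, hxu, hxv⟩ := hcc.1 j hj
      have hτ : hitAbove x t (y + c/2) (sigmaSeq x s t y c j) ≤ ((u j : ℝ) : EReal) :=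
        sInf_le ⟨u j, rfl, hbound, huv.trans hvt, hxu⟩
      have hσ : sigmaSeq x s t y c (j+1) ≤ ((v j : ℝ):EReal) := by
        show hitBelow x t (y - c/2) _ ≤ _
        exact sInf_le ⟨v j, rfl, hτ.trans (EReal.coe_le_coe_iff.mpr huv), hvt, hxv⟩
      simpa using hσ
  have hkey := key m le_rfl
  rcases Nat.eq_zero_or_pos m with h0 | hpos
  · subst h0
    simp only [if_pos rfl] at hkey
    exact hkey.trans (EReal.coe_le_coe_iff.mpr hst)
  · have hne : m ≠ 0 := by omega
    rw [if_neg hne] at hkey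
    exact hkey.trans (EReal.coe_le_coe_iff.mpr (hcc.1 (m-1) (by omega)).2.2.1)

lemma sigma_to_chain {x : ℝ → ℝ} (hx : Cadlag x) {s t y c : ℝ} (hc : 0 < c) :
    ∀ m : ℕ, ∀ b : EReal, sigmaSeq x s t y c m < b →
      ∃ u v : ℕ → ℝ, ChainCond x s t y c m u v ∧
        (0 < m → ((v (m-1) : ℝ):EReal) < b ∧ v (m-1) ≤ t) := by
  intro m
  induction m with
  | zero =>
    intro b _
    exact ⟨fun _ => s, fun _ => s,
      ⟨fun i hi => absurd hi (by omega), fun i hi => absurd hi (by omega)⟩,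
      fun h => absurd h (by omega)⟩
  | succ m ih =>
    intro b hb
    have hb' : hitBelow x t (y - c/2) (hitAbove x t (y + c/2) (sigmaSeq x s t y c m)) < b := hb
    obtain ⟨uu, huumem, hub⟩ := sInf_lt_iff.mp hb'
    obtain ⟨vstar, rfl, hτv, hvt, hxv⟩ := huumem
    have hτt : hitAbove x t (y + c/2) (sigmaSeq x s t y c m) ≤ (t : EReal) :=
      hτv.trans (EReal.coe_le_coe_iff.mpr hvt)
    obtain ⟨ustar, hτeq, hσu, hut, hxu⟩ :=
      hitAbove_spec hx t (y+c/2) _ s (s_le_sigma x s t y c m) hτt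
    have huvstar : ustar ≤ vstar := EReal.coe_le_coe_iff.mp (hτeq ▸ hτv)
    have hchain : ∃ u v : ℕ → ℝ, ChainCond x s t y c m u v ∧ (0 < m → v (m-1) ≤ ustar) := by
      rcases Nat.eq_zero_or_pos m with h0 | hpos
      · subst h0
        obtain ⟨u, v, hcc, _⟩ := ih ⊤ (by
          show (s:EReal) < ⊤
          exact EReal.coe_lt_top s)
        exact ⟨u, v, hcc, fun h => absurd h (by omega)⟩
      · have hlt : sigmaSeq x s t y c m < ((ustar:ℝ):EReal) := by
          rcases eq_or_lt_of_le hσu with heq | hlt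
          · exfalso
            obtain ⟨k, rfl⟩ := Nat.exists_eq_succ_of_ne_zero (by omega : m ≠ 0)
            have hσt : sigmaSeq x s t y c (k+1) ≤ (t:EReal) := by
              rw [heq]
              exact EReal.coe_le_coe_iff.mpr hut
            have hσt' : hitBelow x t (y - c/2)
                (hitAbove x t (y + c/2) (sigmaSeq x s t y c k)) ≤ (t:EReal) := hσt
            obtain ⟨ρ, hρeq, _, _, hxρ⟩ := hitBelow_spec hx t (y - c/2) _ s
              ((s_le_sigma x s t y c k).trans (le_hitAbove x t (y + c/2) _)) hσt'
            have hcoe : (ρ:EReal) = (ustar:EReal) := by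
              rw [← hρeq, ← heq]
              rfl
            have hρu : ρ = ustar := by exact_mod_cast hcoe
            rw [hρu] at hxρ
            linarith
          · exact hlt
        obtain ⟨u, v, hcc, hextra⟩ := ih _ hlt
        exact ⟨u, v, hcc, fun _ => (EReal.coe_le_coe_iff.mp (hextra hpos).1.le)⟩
    obtain ⟨u, v, hcc, hlast⟩ := hchain
    refine ⟨fun i => if i < m then u i else ustar, fun i => if i < m then v i else vstar,
      ⟨?_, ?_⟩, ?_⟩
    · intro i hi
      by_cases him : i < m
      · simp only [if_pos him]
        exact hcc.1 i him
      · simp only [if_neg him]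
        refine ⟨?_, huvstar, hvt, hxu, hxv⟩
        exact EReal.coe_le_coe_iff.mp ((s_le_sigma x s t y c m).trans hσu)
    · intro i hi
      by_cases him : i + 1 < m
      · simp only [if_pos him, if_pos (by omega : i < m)]
        exact hcc.2 i him
      · have him1 : i + 1 = m := by omega
        have him' : i < m := by omega
        have h' := hlast (by omega : 0 < m)
        have hvi : v i ≤ ustar := by
          have hmi : m - 1 = i := by omega
          rwa [hmi] at h'
        simp only [if_pos him', if_neg him]
        exact hvi
    · intro _
      simp only [Nat.add_sub_cancel, if_neg (lt_irrefl m)]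
      exact ⟨hub, hvt⟩

lemma downcross_chain_iff {x : ℝ → ℝ} (hx : Cadlag x) {s t y c : ℝ} (hst : s ≤ t) (hc : 0 < c)
    (m : ℕ) :
    (m:ℕ∞) ≤ downcross x s t y c ↔ ∃ u v : ℕ → ℝ, ChainCond x s t y c m u v := by
  rw [le_downcross_iff hst]
  constructor
  · intro h
    have hlt : sigmaSeq x s t y c m < (⊤ : EReal) :=
      lt_of_le_of_lt h (EReal.coe_lt_top t)
    obtain ⟨u, v, hcc, _⟩ := sigma_to_chain hx hc m ⊤ hlt
    exact ⟨u, v, hcc⟩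
  · rintro ⟨u, v, hcc⟩
    exact chain_to_sigma hst hcc

lemma measurableSet_of_Ioc {S : Set ℝ} (h : ∀ y ∈ S, ∃ α, α < y ∧ Ioc α y ⊆ S) :
    MeasurableSet S := by
  classical
  choose! α hα hIoc using h
  have hT : (S \ interior S).Countable := by
    have hq : ∀ y ∈ S \ interior S, ∃ q : ℚ, α y < (q:ℝ) ∧ (q:ℝ) < y := by
      intro y hy
      exact exists_rat_btwn (hα y hy.1)
    choose! f hf1 hf2 using hq
    have hinj : ∀ y1 ∈ S \ interior S, ∀ y2 ∈ S \ interior S, f y1 = f y2 → y1 = y2 := by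
      intro y1 hy1 y2 hy2 hfeq
      by_contra hne
      rcases lt_or_gt_of_ne hne with hlt | hlt
      · -- y1 < y2, q := f y1 = f y2, q < y1 < y2 and α y2 < q
        have h1 : ((f y1 : ℚ) : ℝ) < y1 := hf2 y1 hy1
        have h2 : α y2 < ((f y2 : ℚ) : ℝ) := hf1 y2 hy2
        rw [← hfeq] at h2
        have hsub : Ioo ((f y1 : ℚ) : ℝ) y2 ⊆ S := by
          intro z hz
          exact hIoc y2 hy2.1 ⟨lt_of_le_of_lt h2.le hz.1, hz.2.le⟩
        have : y1 ∈ interior S :=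
          interior_maximal hsub isOpen_Ioo ⟨h1, hlt⟩
        exact hy1.2 this
      · have h1 : ((f y2 : ℚ) : ℝ) < y2 := hf2 y2 hy2
        have h2 : α y1 < ((f y1 : ℚ) : ℝ) := hf1 y1 hy1
        rw [hfeq] at h2
        have hsub : Ioo ((f y2 : ℚ) : ℝ) y1 ⊆ S := by
          intro z hz
          exact hIoc y1 hy1.1 ⟨lt_of_le_of_lt h2.le hz.1, hz.2.le⟩
        have : y2 ∈ interior S :=
          interior_maximal hsub isOpen_Ioo ⟨h1, hlt⟩
        exact hy2.2 this
    have : Countable ↥(S \ interior S) := by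
      have : Function.Injective (fun p : ↥(S \ interior S) => f p.1) := by
        rintro ⟨y1, hy1⟩ ⟨y2, hy2⟩ hfeq
        exact Subtype.ext (hinj y1 hy1 y2 hy2 hfeq)
      exact Function.Injective.countable this
    exact Set.countable_coe_iff.mp this
  have : S = interior S ∪ (S \ interior S) := (Set.union_diff_cancel interior_subset).symm
  rw [this]
  exact isOpen_interior.measurableSet.union hT.measurableSet


/-- measurability of the level map `y ↦ D^{y,c}(x,[s,t])`. -/
theorem measurable_downcross (x : ℝ → ℝ) (hx : Cadlag x) (s t c : ℝ)
    (hs : 0 ≤ s) (hst : s < t) (hc : 0 < c) :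
    Measurable (fun y : ℝ => downcross x s t y c) := by
  have hA : ∀ m : ℕ, MeasurableSet {y : ℝ | (m:ℕ∞) ≤ downcross x s t y c} := by
    intro m
    rcases Nat.eq_zero_or_pos m with h0 | hpos
    · subst h0
      have : {y : ℝ | ((0:ℕ):ℕ∞) ≤ downcross x s t y c} = univ := by
        ext y; simp
      rw [this]
      exact MeasurableSet.univ
    · apply measurableSet_of_Ioc
      intro y hy
      rw [mem_setOf_eq, downcross_chain_iff hx hst.le hc] at hy
      obtain ⟨u, v, h1, h2⟩ := hy
      have hnon : (Finset.range m).Nonempty := by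
        rw [Finset.nonempty_range_iff]; omega
      set α := (Finset.range m).sup' hnon (fun i => x (v i) + c/2) with hα
      have hαy : α < y := by
        rw [hα, Finset.sup'_lt_iff]
        intro i hi
        have := (h1 i (Finset.mem_range.mp hi)).2.2.2.2
        linarith
      refine ⟨α, hαy, ?_⟩
      intro y' hy'
      rw [mem_setOf_eq, downcross_chain_iff hx hst.le hc]
      refine ⟨u, v, ⟨fun i hi => ?_, h2⟩⟩
      obtain ⟨a1, a2, a3, a4, a5⟩ := h1 i hi
      have hy'le : y' ≤ y := hy'.2
      have hy'gt : α < y' := hy'.1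
      have hsup : x (v i) + c/2 ≤ α := by
        rw [hα]
        exact Finset.le_sup' (fun j => x (v j) + c/2) (Finset.mem_range.mpr hi)
      exact ⟨a1, a2, a3, by linarith, by linarith⟩
  apply measurable_to_countable'
  intro k
  rcases k with _ | k
  · have hpre : (fun y => downcross x s t y c) ⁻¹' {⊤} =
        ⋂ m : ℕ, {y | (m:ℕ∞) ≤ downcross x s t y c} := by
      ext y
      simp only [mem_preimage, mem_singleton_iff, mem_iInter, mem_setOf_eq]
      constructor
      · intro h m; rw [h]; exact le_top
      · intro h
        by_contra hne
        lift downcross x s t y c to ℕ using hne with n hn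
        have := h (n+1)
        exact absurd (Nat.cast_le.mp this) (by omega)
    show MeasurableSet ((fun y => downcross x s t y c) ⁻¹' {(⊤:ℕ∞)})
    rw [hpre]
    exact MeasurableSet.iInter (fun m => hA m)
  · have hpre : (fun y => downcross x s t y c) ⁻¹' {(k:ℕ∞)} =
        {y | (k:ℕ∞) ≤ downcross x s t y c} \ {y | ((k+1:ℕ):ℕ∞) ≤ downcross x s t y c} := by
      ext y
      simp only [mem_preimage, mem_singleton_iff, mem_diff, mem_setOf_eq]
      constructor
      · intro h
        rw [h]
        refine ⟨le_rfl, fun hcon => ?_⟩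
        exact absurd (Nat.cast_le.mp hcon) (by omega)
      · rintro ⟨h1, h2⟩
        refine le_antisymm ?_ h1
        by_contra hgt
        rw [not_le] at hgt
        apply h2
        have hadd : (k:ℕ∞) + 1 ≤ downcross x s t y c :=
          (ENat.add_one_le_iff (by simp)).mpr hgt
        rwa [show ((k+1:ℕ):ℕ∞) = (k:ℕ∞) + 1 by push_cast; ring]
    show MeasurableSet ((fun y => downcross x s t y c) ⁻¹' {(k:ℕ∞)})
    rw [hpre]
    exact (hA k).diff (hA (k+1))
end
end

section
/- Let x : [0,∞) → ℝ be càdlàg with locally finite total variation and t > 0. Then for Lebesgue-almost-every z ∈ ℝ, the level crossing number N^z(x,[0,t]) := lim_{c→0+} N^{z,c}(x,[0,t]) is finite, and ∫_ℝ N^z(x,[0,t]) dz ≤ TV(x,[0,t]). -/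
open MeasureTheory Filter Set Function
open scoped ENNReal NNReal

noncomputable section

namespace LCAux

lemma toENNReal_sSup_le {S : Set ℕ∞} {B : ℝ≥0∞} (h : ∀ a ∈ S, (a : ℝ≥0∞) ≤ B) :
    ((sSup S : ℕ∞) : ℝ≥0∞) ≤ B := by
  by_cases htop : sSup S = ⊤
  · have hB : ∀ n : ℕ, (n : ℝ≥0∞) ≤ B := by
      intro n
      have hn : ((n : ℕ∞)) < sSup S := by
        rw [htop]; exact lt_top_iff_ne_top.2 (by simp)
      obtain ⟨a, haS, hna⟩ := lt_sSup_iff.1 hn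
      calc (n : ℝ≥0∞) = ((n : ℕ∞) : ℝ≥0∞) := (ENat.toENNReal_coe n).symm
        _ ≤ (a : ℝ≥0∞) := ENat.toENNReal_mono hna.le
        _ ≤ B := h a haS
    by_contra hBB
    push_neg at hBB
    obtain ⟨n, hnB⟩ := ENNReal.exists_nat_gt (ne_top_of_lt hBB)
    exact absurd (hB n) hnB.not_ge
  · rcases Set.eq_empty_or_nonempty S with rfl | hne
    · simp
    · have hinst : Nonempty S := hne.to_subtype
      exact h _ (ENat.sSup_mem_of_nonempty_of_lt_top (lt_top_iff_ne_top.2 htop))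

lemma sSup_add_sSup_le {S T : Set ℕ∞} {A : ℕ∞} (hS : S.Nonempty) (hT : T.Nonempty)
    (h : ∀ p ∈ S, ∀ q ∈ T, p + q ≤ A) : sSup S + sSup T ≤ A := by
  obtain ⟨q0, hq0⟩ := hT
  obtain ⟨p0, hp0⟩ := hS
  have hSA : sSup S ≤ A := sSup_le fun p hp => le_trans (le_self_add) (h p hp q0 hq0)
  have hTA : sSup T ≤ A := sSup_le fun q hq => le_trans (le_add_self) (h p0 hp0 q hq)
  by_cases h1 : sSup S = ⊤
  · have : A = ⊤ := top_le_iff.1 (h1 ▸ hSA)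
    simp [this]
  by_cases h2 : sSup T = ⊤
  · have : A = ⊤ := top_le_iff.1 (h2 ▸ hTA)
    simp [this]
  · have hiS : Nonempty S := ⟨⟨p0, hp0⟩⟩
    have hiT : Nonempty T := ⟨⟨q0, hq0⟩⟩
    exact h _ (ENat.sSup_mem_of_nonempty_of_lt_top (lt_top_iff_ne_top.2 h1))
      _ (ENat.sSup_mem_of_nonempty_of_lt_top (lt_top_iff_ne_top.2 h2))

variable {x : ℝ → ℝ} {t y : ℝ} {σ : EReal}

lemma le_hitAbove (x : ℝ → ℝ) (t y : ℝ) (σ : EReal) : σ ≤ hitAbove x t y σ :=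
  le_sInf (by rintro u ⟨r, rfl, h1, -, -⟩; exact h1)

lemma le_hitBelow (x : ℝ → ℝ) (t y : ℝ) (σ : EReal) : σ ≤ hitBelow x t y σ :=
  le_sInf (by rintro u ⟨r, rfl, h1, -, -⟩; exact h1)

lemma hitAbove_attained (hx : Cadlag x) (h0 : (0 : EReal) ≤ σ)
    (hle : hitAbove x t y σ ≤ (t : EReal)) :
    ∃ a : ℝ, hitAbove x t y σ = (a : EReal) ∧ σ ≤ (a : EReal) ∧ a ≤ t ∧ y ≤ x a := by
  set A := hitAbove x t y σ with hA
  have hbot : A ≠ ⊥ := by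
    intro hb
    have h0A : (0 : EReal) ≤ A := h0.trans (le_hitAbove x t y σ)
    rw [hb] at h0A
    simp at h0A
  have htop : A ≠ ⊤ := by
    intro htp
    rw [htp] at hle
    exact absurd hle (EReal.coe_lt_top t).not_ge
  have hAa : A = ((A.toReal : ℝ) : EReal) := (EReal.coe_toReal htop hbot).symm
  set a := A.toReal with ha
  refine ⟨a, hAa, hAa ▸ le_hitAbove x t y σ, EReal.coe_le_coe_iff.1 (hAa ▸ hle), ?_⟩
  have hfreq : ∃ᶠ r in nhdsWithin a (Ici a), y ≤ x r := by
    rw [Filter.frequently_iff]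
    intro U hU
    rw [Metric.mem_nhdsWithin_iff] at hU
    obtain ⟨ε, hε, hsub⟩ := hU
    have hlt : A < ((a + ε : ℝ) : EReal) := by
      rw [hAa]; exact_mod_cast (lt_add_of_pos_right a hε)
    obtain ⟨u, huS, hu⟩ := sInf_lt_iff.1 hlt
    have hAu : A ≤ u := sInf_le huS
    obtain ⟨r, rfl, hσr, hrt, hyr⟩ := huS
    have har : a ≤ r := EReal.coe_le_coe_iff.1 (hAa ▸ hAu)
    have hrε : r < a + ε := EReal.coe_lt_coe_iff.1 hu
    refine ⟨r, hsub ⟨?_, har⟩, hyr⟩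
    rw [Metric.mem_ball, Real.dist_eq, abs_lt]
    constructor <;> linarith
  by_contra hlt
  push_neg at hlt
  have hev : ∀ᶠ r in nhdsWithin a (Ici a), x r < y := (hx.1 a).eventually_lt_const hlt
  obtain ⟨r, h1, h2⟩ := (hfreq.and_eventually hev).exists
  linarith

lemma hitBelow_attained (hx : Cadlag x) (h0 : (0 : EReal) ≤ σ)
    (hle : hitBelow x t y σ ≤ (t : EReal)) :
    ∃ a : ℝ, hitBelow x t y σ = (a : EReal) ∧ σ ≤ (a : EReal) ∧ a ≤ t ∧ x a ≤ y := by
  set A := hitBelow x t y σ with hA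
  have hbot : A ≠ ⊥ := by
    intro hb
    have h0A : (0 : EReal) ≤ A := h0.trans (le_hitBelow x t y σ)
    rw [hb] at h0A
    simp at h0A
  have htop : A ≠ ⊤ := by
    intro htp
    rw [htp] at hle
    exact absurd hle (EReal.coe_lt_top t).not_ge
  have hAa : A = ((A.toReal : ℝ) : EReal) := (EReal.coe_toReal htop hbot).symm
  set a := A.toReal with ha
  refine ⟨a, hAa, hAa ▸ le_hitBelow x t y σ, EReal.coe_le_coe_iff.1 (hAa ▸ hle), ?_⟩
  have hfreq : ∃ᶠ r in nhdsWithin a (Ici a), x r < y := by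
    rw [Filter.frequently_iff]
    intro U hU
    rw [Metric.mem_nhdsWithin_iff] at hU
    obtain ⟨ε, hε, hsub⟩ := hU
    have hlt : A < ((a + ε : ℝ) : EReal) := by
      rw [hAa]; exact_mod_cast (lt_add_of_pos_right a hε)
    obtain ⟨u, huS, hu⟩ := sInf_lt_iff.1 hlt
    have hAu : A ≤ u := sInf_le huS
    obtain ⟨r, rfl, hσr, hrt, hyr⟩ := huS
    have har : a ≤ r := EReal.coe_le_coe_iff.1 (hAa ▸ hAu)
    have hrε : r < a + ε := EReal.coe_lt_coe_iff.1 hu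
    refine ⟨r, hsub ⟨?_, har⟩, hyr⟩
    rw [Metric.mem_ball, Real.dist_eq, abs_lt]
    constructor <;> linarith
  by_contra hlt
  push_neg at hlt
  have hev : ∀ᶠ r in nhdsWithin a (Ici a), y < x r := (hx.1 a).eventually_const_lt hlt
  obtain ⟨r, h1, h2⟩ := (hfreq.and_eventually hev).exists
  linarith

lemma down_chain (hx : Cadlag x) {t y c : ℝ} (ht : 0 ≤ t) :
    ∀ p : ℕ, sigmaSeq x 0 t y c p ≤ (t : EReal) →
    ∃ w : ℕ → ℝ,
      (∀ i j, i ≤ j → j ≤ 2*p → w i ≤ w j) ∧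
      (∀ i, i ≤ 2*p → w i ∈ Icc 0 t) ∧
      (∀ k, 2*k+1 ≤ 2*p → y + c/2 ≤ x (w (2*k+1))) ∧
      (∀ k, 1 ≤ k → 2*k ≤ 2*p → x (w (2*k)) ≤ y - c/2) ∧
      w 0 = 0 ∧
      sigmaSeq x 0 t y c p = ((w (2*p) : ℝ) : EReal) ∧
      (1 ≤ p → hitAbove x t (y + c/2) (((0:ℝ) : ℝ) : EReal) = ((w 1 : ℝ) : EReal)) := by
  intro p
  induction p with
  | zero =>
    intro _
    refine ⟨fun _ => 0, ?_, ?_, ?_, ?_, rfl, rfl, ?_⟩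
    · intro i j _ _; exact le_refl 0
    · intro i _; exact ⟨le_refl 0, ht⟩
    · intro k hk; omega
    · intro k hk h2k; omega
    · intro h; omega
  | succ p ih =>
    intro hp
    have hstep : sigmaSeq x 0 t y c (p+1)
        = hitBelow x t (y - c/2) (hitAbove x t (y + c/2) (sigmaSeq x 0 t y c p)) := rfl
    have hσmono : sigmaSeq x 0 t y c p ≤ sigmaSeq x 0 t y c (p+1) := by
      rw [hstep]
      exact (le_hitAbove x t (y + c/2) _).trans (le_hitBelow x t (y - c/2) _)
    obtain ⟨w, hmono, hmem, hhigh, hlow, hw0, hwσ, hw1⟩ := ih (hσmono.trans hp)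
    have h0σ : (0 : EReal) ≤ sigmaSeq x 0 t y c p := by
      rw [hwσ]
      exact_mod_cast (hmem (2*p) (le_refl _)).1
    have hAle : hitAbove x t (y + c/2) (sigmaSeq x 0 t y c p) ≤ (t : EReal) :=
      (le_hitBelow x t (y - c/2) _).trans (hstep ▸ hp)
    obtain ⟨a, hAa, hσa, hat, hya⟩ := hitAbove_attained hx h0σ hAle
    have h0a : (0 : EReal) ≤ ((a : ℝ) : EReal) := h0σ.trans hσa
    have hBle : hitBelow x t (y - c/2) ((a : ℝ) : EReal) ≤ (t : EReal) := by
      rw [← hAa, ← hstep]; exact hp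
    obtain ⟨s, hBs, has, hst, hxs⟩ := hitBelow_attained hx h0a hBle
    have hwa : w (2*p) ≤ a := by
      have := hwσ ▸ hσa
      exact_mod_cast this
    have has' : a ≤ s := by exact_mod_cast has
    have h0a' : (0 : ℝ) ≤ a := ((hmem (2*p) (le_refl _)).1).trans hwa
    set W : ℕ → ℝ := fun i => if i ≤ 2*p then w i else if i = 2*p+1 then a else s with hW
    have hWw : ∀ i, i ≤ 2*p → W i = w i := by
      intro i hi; simp only [hW]; rw [if_pos hi]
    have hWa : ∀ i, ¬ i ≤ 2*p → i = 2*p+1 → W i = a := by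
      intro i h1 h2; simp only [hW]; rw [if_neg h1, if_pos h2]
    have hWs : ∀ i, ¬ i ≤ 2*p → ¬ i = 2*p+1 → W i = s := by
      intro i h1 h2; simp only [hW]; rw [if_neg h1, if_neg h2]
    refine ⟨W, ?_, ?_, ?_, ?_, ?_, ?_, ?_⟩
    · intro i j hij hj
      by_cases hj' : j ≤ 2*p
      · have hi' : i ≤ 2*p := hij.trans hj'
        rw [hWw i hi', hWw j hj']
        exact hmono i j hij hj'
      · rcases (by omega : j = 2*p+1 ∨ j = 2*p+2) with rfl | rfl
        · rw [hWa _ hj' rfl]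
          by_cases hi' : i ≤ 2*p
          · rw [hWw i hi']
            exact (hmono i (2*p) hi' (le_refl _)).trans hwa
          · rw [hWa i hi' (by omega)]
        · rw [hWs _ hj' (by omega)]
          by_cases hi' : i ≤ 2*p
          · rw [hWw i hi']
            exact ((hmono i (2*p) hi' (le_refl _)).trans hwa).trans has'
          · by_cases hi'' : i = 2*p+1
            · rw [hWa i hi' hi'']
              exact has'
            · rw [hWs i hi' hi'']
    · intro i hi
      by_cases hi' : i ≤ 2*p
      · rw [hWw i hi']; exact hmem i hi'
      · by_cases hi'' : i = 2*p+1
        · rw [hWa i hi' hi'']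
          exact ⟨h0a', hat⟩
        · rw [hWs i hi' hi'']
          exact ⟨h0a'.trans has', hst⟩
    · intro k hk
      by_cases hk' : 2*k+1 ≤ 2*p
      · rw [hWw _ hk']; exact hhigh k hk'
      · rw [hWa _ hk' (by omega)]
        exact hya
    · intro k hk1 hk
      by_cases hk' : 2*k ≤ 2*p
      · rw [hWw _ hk']; exact hlow k hk1 hk'
      · rw [hWs _ hk' (by omega)]
        exact hxs
    · rw [hWw 0 (by omega)]; exact hw0
    · rw [hWs (2*(p+1)) (by omega) (by omega)]
      rw [hstep, hAa]
      exact hBs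
    · intro _
      by_cases hp1 : 1 ≤ p
      · rw [hWw 1 (by omega)]
        exact hw1 hp1
      · have hp0 : p = 0 := by omega
        subst hp0
        rw [hWa 1 (by omega) (by omega)]
        have h00 : sigmaSeq x 0 t y c 0 = (((0:ℝ) : ℝ) : EReal) := rfl
        rw [← h00]
        exact hAa


def AltChain (x : ℝ → ℝ) (t z : ℝ) (m : ℕ) (u : ℕ → ℝ) : Prop :=
  (∀ i j, i ≤ j → j ≤ m → u i ≤ u j) ∧ (∀ i, i ≤ m → u i ∈ Icc 0 t) ∧
  ∀ i, i < m → (x (u i) - z) * (x (u (i+1)) - z) < 0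

def altCount (x : ℝ → ℝ) (t z : ℝ) : ℕ∞ :=
  sSup {n : ℕ∞ | ∃ m : ℕ, n = (m : ℕ∞) ∧ ∃ u : ℕ → ℝ, AltChain x t z m u}

lemma le_altCount {x : ℝ → ℝ} {t z : ℝ} {m : ℕ} {u : ℕ → ℝ} (h : AltChain x t z m u) :
    (m : ℕ∞) ≤ altCount x t z := le_sSup ⟨m, rfl, u, h⟩

lemma cadlag_neg {x : ℝ → ℝ} (hx : Cadlag x) : Cadlag (fun u => - x u) :=
  ⟨fun u => (hx.1 u).neg, fun u => (hx.2 u).elim fun l hl => ⟨-l, hl.neg⟩⟩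

lemma pq_le_altCount {x : ℝ → ℝ} (hx : Cadlag x) {t z c : ℝ} (ht : 0 ≤ t) (hc : 0 < c)
    {p q : ℕ} (hp : sigmaSeq x 0 t z c p ≤ (t : EReal))
    (hq : sigmaSeq (fun u => - x u) 0 t (-z) c q ≤ (t : EReal)) :
    ((p + q : ℕ) : ℕ∞) ≤ altCount x t z := by
  obtain ⟨w, wmono, wmem, whigh, wlow, -, -, -⟩ := down_chain hx ht p hp
  obtain ⟨w', w'mono, w'mem, w'high0, w'low0, -, -, -⟩ := down_chain (cadlag_neg hx) ht q hq
  -- translate the primed chain back to x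
  have w'low : ∀ k, 2*k+1 ≤ 2*q → x (w' (2*k+1)) ≤ z - c/2 := by
    intro k hk; have := w'high0 k hk; linarith
  have w'high : ∀ k, 1 ≤ k → 2*k ≤ 2*q → z + c/2 ≤ x (w' (2*k)) := by
    intro k h1 hk; have := w'low0 k h1 hk; linarith
  -- sign helpers
  have hpos : ∀ v : ℝ, z + c/2 ≤ v → 0 < v - z := fun v h => by linarith
  have hneg : ∀ v : ℝ, v ≤ z - c/2 → v - z < 0 := fun v h => by linarith
  rcases lt_trichotomy p q with hlt | heq | hgt
  · -- use up chain alone, with 2*q - 1 alternations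
    have hq1 : 1 ≤ q := by omega
    have hchain : AltChain x t z (2*q - 1) (fun i => w' (min (i+1) (2*q))) := by
      refine ⟨?_, ?_, ?_⟩
      · intro i j hij hj
        exact w'mono _ _ (by omega) (by omega)
      · intro i hi
        exact w'mem _ (by omega)
      · intro i hi
        have h1 : min (i+1) (2*q) = i+1 := by omega
        have h2 : min (i+1+1) (2*q) = i+2 := by omega
        simp only [h1, h2]
        rcases Nat.even_or_odd (i+1) with ⟨k, hk⟩ | ⟨k, hk⟩
        · have hk1 : 1 ≤ k := by omega
          have e1 : i+1 = 2*k := by omega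
          have e2 : i+2 = 2*k+1 := by omega
          rw [e1, e2]
          exact mul_neg_of_pos_of_neg (hpos _ (w'high k hk1 (by omega)))
            (hneg _ (w'low k (by omega)))
        · have e1 : i+1 = 2*k+1 := by omega
          have e2 : i+2 = 2*(k+1) := by omega
          rw [e1, e2]
          exact mul_neg_of_neg_of_pos (hneg _ (w'low k (by omega)))
            (hpos _ (w'high (k+1) (by omega) (by omega)))
    calc ((p + q : ℕ) : ℕ∞) ≤ ((2*q - 1 : ℕ) : ℕ∞) := Nat.cast_le.2 (by omega)
      _ ≤ altCount x t z := le_altCount hchain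
  · -- p = q
    subst heq
    rcases Nat.eq_zero_or_pos p with rfl | hp1
    · simp
    · rcases le_total (w' 1) (w 1) with hbw | hwb
      · -- prepend the low point w' 1 to the down chain
        set U : ℕ → ℝ := fun i => if i = 0 then w' 1 else w (min i (2*p)) with hU
        have hU0 : U 0 = w' 1 := by simp [hU]
        have hUi : ∀ i, ¬ i = 0 → U i = w (min i (2*p)) := by
          intro i h; simp only [hU]; rw [if_neg h]
        have hchain : AltChain x t z (2*p) U := by
          refine ⟨?_, ?_, ?_⟩
          · intro i j hij hj
            by_cases hi0 : i = 0
            · subst hi0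
              by_cases hj0 : j = 0
              · subst hj0; exact le_refl _
              · rw [hU0, hUi j hj0]
                exact hbw.trans (wmono 1 _ (by omega) (by omega))
            · have hj0 : ¬ j = 0 := by omega
              rw [hUi i hi0, hUi j hj0]
              exact wmono _ _ (by omega) (by omega)
          · intro i hi
            by_cases hi0 : i = 0
            · rw [hi0, hU0]; exact w'mem 1 (by omega)
            · rw [hUi i hi0]; exact wmem _ (by omega)
          · intro i hi
            by_cases hi0 : i = 0
            · subst hi0
              rw [hU0, hUi 1 (by omega)]
              have h1 : min 1 (2*p) = 1 := by omega
              rw [h1]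
              exact mul_neg_of_neg_of_pos (hneg _ (w'low 0 (by omega)))
                (hpos _ (whigh 0 (by omega)))
            · rw [hUi i hi0, hUi (i+1) (by omega)]
              have h1 : min i (2*p) = i := by omega
              have h2 : min (i+1) (2*p) = i+1 := by omega
              rw [h1, h2]
              rcases Nat.even_or_odd i with ⟨k, hk⟩ | ⟨k, hk⟩
              · have e1 : i = 2*k := by omega
                have e2 : i+1 = 2*k+1 := by omega
                have h3 : w i = w (2*k) := by rw [e1]
                have h4 : w (i+1) = w (2*k+1) := by rw [e2]
                rw [h3, h4]
                exact mul_neg_of_neg_of_pos (hneg _ (wlow k (by omega) (by omega)))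
                  (hpos _ (whigh k (by omega)))
              · have e1 : i = 2*k+1 := by omega
                have e2 : i+1 = 2*(k+1) := by omega
                have h3 : w i = w (2*k+1) := by rw [e1]
                have h4 : w (i+1) = w (2*(k+1)) := by rw [e2]
                rw [h3, h4]
                exact mul_neg_of_pos_of_neg (hpos _ (whigh k (by omega)))
                  (hneg _ (wlow (k+1) (by omega) (by omega)))
        calc ((p + p : ℕ) : ℕ∞) = ((2*p : ℕ) : ℕ∞) := by norm_cast; omega
          _ ≤ altCount x t z := le_altCount hchain
      · -- prepend the high point w 1 to the up chain
        set U : ℕ → ℝ := fun i => if i = 0 then w 1 else w' (min i (2*p)) with hU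
        have hU0 : U 0 = w 1 := by simp [hU]
        have hUi : ∀ i, ¬ i = 0 → U i = w' (min i (2*p)) := by
          intro i h; simp only [hU]; rw [if_neg h]
        have hchain : AltChain x t z (2*p) U := by
          refine ⟨?_, ?_, ?_⟩
          · intro i j hij hj
            by_cases hi0 : i = 0
            · subst hi0
              by_cases hj0 : j = 0
              · subst hj0; exact le_refl _
              · rw [hU0, hUi j hj0]
                exact hwb.trans (w'mono 1 _ (by omega) (by omega))
            · have hj0 : ¬ j = 0 := by omega
              rw [hUi i hi0, hUi j hj0]
              exact w'mono _ _ (by omega) (by omega)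
          · intro i hi
            by_cases hi0 : i = 0
            · rw [hi0, hU0]; exact wmem 1 (by omega)
            · rw [hUi i hi0]; exact w'mem _ (by omega)
          · intro i hi
            by_cases hi0 : i = 0
            · subst hi0
              rw [hU0, hUi 1 (by omega)]
              have h1 : min 1 (2*p) = 1 := by omega
              rw [h1]
              exact mul_neg_of_pos_of_neg (hpos _ (whigh 0 (by omega)))
                (hneg _ (w'low 0 (by omega)))
            · rw [hUi i hi0, hUi (i+1) (by omega)]
              have h1 : min i (2*p) = i := by omega
              have h2 : min (i+1) (2*p) = i+1 := by omega
              rw [h1, h2]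
              rcases Nat.even_or_odd i with ⟨k, hk⟩ | ⟨k, hk⟩
              · have e1 : i = 2*k := by omega
                have e2 : i+1 = 2*k+1 := by omega
                have h3 : w' i = w' (2*k) := by rw [e1]
                have h4 : w' (i+1) = w' (2*k+1) := by rw [e2]
                rw [h3, h4]
                exact mul_neg_of_pos_of_neg (hpos _ (w'high k (by omega) (by omega)))
                  (hneg _ (w'low k (by omega)))
              · have e1 : i = 2*k+1 := by omega
                have e2 : i+1 = 2*(k+1) := by omega
                have h3 : w' i = w' (2*k+1) := by rw [e1]
                have h4 : w' (i+1) = w' (2*(k+1)) := by rw [e2]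
                rw [h3, h4]
                exact mul_neg_of_neg_of_pos (hneg _ (w'low k (by omega)))
                  (hpos _ (w'high (k+1) (by omega) (by omega)))
        calc ((p + p : ℕ) : ℕ∞) = ((2*p : ℕ) : ℕ∞) := by norm_cast; omega
          _ ≤ altCount x t z := le_altCount hchain
  · -- use down chain alone
    have hp1 : 1 ≤ p := by omega
    have hchain : AltChain x t z (2*p - 1) (fun i => w (min (i+1) (2*p))) := by
      refine ⟨?_, ?_, ?_⟩
      · intro i j hij hj
        exact wmono _ _ (by omega) (by omega)
      · intro i hi
        exact wmem _ (by omega)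
      · intro i hi
        have h1 : min (i+1) (2*p) = i+1 := by omega
        have h2 : min (i+1+1) (2*p) = i+2 := by omega
        simp only [h1, h2]
        rcases Nat.even_or_odd (i+1) with ⟨k, hk⟩ | ⟨k, hk⟩
        · have e1 : i+1 = 2*k := by omega
          have e2 : i+2 = 2*k+1 := by omega
          rw [e1, e2]
          exact mul_neg_of_neg_of_pos (hneg _ (wlow k (by omega) (by omega)))
            (hpos _ (whigh k (by omega)))
        · have e1 : i+1 = 2*k+1 := by omega
          have e2 : i+2 = 2*(k+1) := by omega
          rw [e1, e2]
          exact mul_neg_of_pos_of_neg (hpos _ (whigh k (by omega)))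
            (hneg _ (wlow (k+1) (by omega) (by omega)))
    calc ((p + q : ℕ) : ℕ∞) ≤ ((2*p - 1 : ℕ) : ℕ∞) := Nat.cast_le.2 (by omega)
      _ ≤ altCount x t z := le_altCount hchain

lemma levelCross_le_altCount {x : ℝ → ℝ} (hx : Cadlag x) {t : ℝ} (ht : 0 ≤ t) (z : ℝ) :
    levelCross x 0 t z ≤ altCount x t z := by
  refine iSup_le fun c => iSup_le fun hc => ?_
  have h0 : sigmaSeq x 0 t z c 0 ≤ (t : EReal) := by
    show ((0:ℝ) : EReal) ≤ (t : EReal)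
    exact_mod_cast ht
  have h0' : sigmaSeq (fun u => - x u) 0 t (-z) c 0 ≤ (t : EReal) := by
    show ((0:ℝ) : EReal) ≤ (t : EReal)
    exact_mod_cast ht
  refine sSup_add_sSup_le ⟨0, 0, by simp, h0'⟩ ⟨0, 0, by simp, h0⟩ ?_
  rintro _ ⟨q, rfl, hq⟩ _ ⟨p, rfl, hp⟩
  calc (q : ℕ∞) + (p : ℕ∞) = ((p + q : ℕ) : ℕ∞) := by norm_cast; omega
    _ ≤ altCount x t z := pq_le_altCount hx ht hc hp hq


/-- discrete intermediate value property -/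
lemma ivt_discrete (v : ℕ → ℝ) (z : ℝ) :
    ∀ n a b, b - a ≤ n → a < b → min (v a) (v b) ≤ z → z ≤ max (v a) (v b) →
    ∃ j, a ≤ j ∧ j < b ∧ min (v j) (v (j+1)) ≤ z ∧ z ≤ max (v j) (v (j+1)) := by
  intro n
  induction n with
  | zero => intro a b h hab _ _; omega
  | succ n ih =>
    intro a b hn hab h1 h2
    by_cases hA : min (v a) (v (a+1)) ≤ z
    · by_cases hB : z ≤ max (v a) (v (a+1))
      · exact ⟨a, le_refl a, hab, hA, hB⟩
      · push_neg at hB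
        have hva : v a < z := lt_of_le_of_lt (le_max_left _ _) hB
        have hva1 : v (a+1) < z := lt_of_le_of_lt (le_max_right _ _) hB
        have hvb : z ≤ v b := by
          rcases le_max_iff.1 h2 with h | h
          · exact absurd h hva.not_ge
          · exact h
        have hab' : a + 1 < b := by
          rcases Nat.lt_or_ge (a+1) b with h | h
          · exact h
          · have : b = a + 1 := by omega
            rw [this] at hvb; linarith
        obtain ⟨j, hj1, hj2, hj3, hj4⟩ := ih (a+1) b (by omega) hab'
          (le_trans (min_le_left _ _) hva1.le) (le_trans hvb (le_max_right _ _))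
        exact ⟨j, by omega, hj2, hj3, hj4⟩
    · push_neg at hA
      have hva : z < v a := lt_of_lt_of_le hA (min_le_left _ _)
      have hva1 : z < v (a+1) := lt_of_lt_of_le hA (min_le_right _ _)
      have hvb : v b ≤ z := by
        rcases min_le_iff.1 h1 with h | h
        · exact absurd h hva.not_ge
        · exact h
      have hab' : a + 1 < b := by
        rcases Nat.lt_or_ge (a+1) b with h | h
        · exact h
        · have : b = a + 1 := by omega
          rw [this] at hvb; linarith
      obtain ⟨j, hj1, hj2, hj3, hj4⟩ := ih (a+1) b (by omega) hab'
        (le_trans (min_le_right _ _) hvb) (le_trans hva1.le (le_max_left _ _))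
      exact ⟨j, by omega, hj2, hj3, hj4⟩

lemma straddle_of_mul_neg {a b z : ℝ} (h : (a - z) * (b - z) < 0) :
    min a b ≤ z ∧ z ≤ max a b := by
  rcases mul_neg_iff.1 h with ⟨h1, h2⟩ | ⟨h1, h2⟩
  · exact ⟨(min_le_right a b).trans (by linarith), le_trans (by linarith) (le_max_left a b)⟩
  · exact ⟨(min_le_left a b).trans (by linarith), le_trans (by linarith) (le_max_right a b)⟩

lemma sign_transfer {A B C D : ℝ} (h1 : 0 < A * B) (h2 : 0 < C * D) (h3 : A * C < 0) :
    B * D < 0 := by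
  rcases mul_pos_iff.1 h1 with ⟨hA, hB⟩ | ⟨hA, hB⟩ <;>
    rcases mul_pos_iff.1 h2 with ⟨hC, hD⟩ | ⟨hC, hD⟩
  · exact absurd h3 (mul_pos hA hC).asymm
  · exact mul_neg_of_pos_of_neg hB hD
  · exact mul_neg_of_neg_of_pos hB hD
  · exact absurd h3 (mul_pos_of_neg_of_neg hA hC).asymm

/-- index type of weak straddle chains inside a finite set -/
def chainIdx (S : Finset ℝ) : Type := Σ m : ℕ, Fin (m+1) → {r : ℝ // r ∈ S}

instance (S : Finset ℝ) : Countable (chainIdx S) := by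
  unfold chainIdx; infer_instance

open Classical in
def gfun (x : ℝ → ℝ) (S : Finset ℝ) (p : chainIdx S) : ℝ → ℝ≥0∞ :=
  if (∀ i : Fin p.1, (p.2 i.castSucc : ℝ) < (p.2 i.succ : ℝ)) then
    (⋂ i : Fin p.1, Icc (min (x (p.2 i.castSucc)) (x (p.2 i.succ)))
      (max (x (p.2 i.castSucc)) (x (p.2 i.succ)))).indicator (fun _ => (p.1 : ℝ≥0∞))
  else fun _ => 0

def hfun (x : ℝ → ℝ) (S : Finset ℝ) (z : ℝ) : ℝ≥0∞ := ⨆ p : chainIdx S, gfun x S p z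

lemma gfun_measurable (x : ℝ → ℝ) (S : Finset ℝ) (p : chainIdx S) :
    Measurable (gfun x S p) := by
  unfold gfun
  split_ifs with h
  · exact measurable_const.indicator (MeasurableSet.iInter fun i => measurableSet_Icc)
  · exact measurable_const

lemma hfun_measurable (x : ℝ → ℝ) (S : Finset ℝ) : Measurable (hfun x S) :=
  Measurable.iSup fun p => gfun_measurable x S p

lemma hfun_mono (x : ℝ → ℝ) {S S' : Finset ℝ} (hsub : S ⊆ S') (z : ℝ) :
    hfun x S z ≤ hfun x S' z := by
  refine iSup_le ?_
  rintro ⟨m, u⟩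
  exact le_iSup_of_le (⟨m, fun i => ⟨(u i : ℝ), hsub (u i).2⟩⟩ : chainIdx S') (le_of_eq rfl)

/-- the integral of `hfun` is bounded by the total variation -/
lemma hfun_lintegral_le (x : ℝ → ℝ) {t : ℝ} (S : Finset ℝ) (hS : ∀ r ∈ S, r ∈ Icc (0:ℝ) t)
    (hSne : S.Nonempty) :
    (∫⁻ z : ℝ, hfun x S z) ≤ eVariationOn x (Icc 0 t) := by
  classical
  set l := S.sort (· ≤ ·) with hl
  have hsorted : l.Pairwise (· ≤ ·) := Finset.pairwise_sort _ _
  set len := l.length with hlen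
  have hlen1 : 1 ≤ len := by
    rw [hlen, hl, Finset.length_sort]
    exact Finset.card_pos.2 hSne
  -- getD monotonicity
  have hgetmem : ∀ k, k < len → l.getD k 0 ∈ S := by
    intro k hk
    rw [List.getD_eq_getElem l 0 hk]
    exact Finset.mem_sort (α := ℝ) (· ≤ ·) |>.1 (l.getElem_mem hk)
  have hgetmono : ∀ a b, a ≤ b → b < len → l.getD a 0 ≤ l.getD b 0 := by
    intro a b hab hb
    rcases Nat.lt_or_ge a b with h | h
    · rw [List.getD_eq_getElem l 0 (lt_trans h hb), List.getD_eq_getElem l 0 hb]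
      exact List.Pairwise.rel_get_of_lt hsorted (a := ⟨a, lt_trans h hb⟩) (b := ⟨b, hb⟩) h
    · have : a = b := by omega
      rw [this]
  -- the consecutive straddle count
  set cc : ℝ → ℝ≥0∞ := fun z => ∑ j ∈ Finset.range (len - 1),
    (Icc (min (x (l.getD j 0)) (x (l.getD (j+1) 0)))
      (max (x (l.getD j 0)) (x (l.getD (j+1) 0)))).indicator (fun _ => (1:ℝ≥0∞)) z with hcc
  -- step 1 : hfun ≤ cc pointwise
  have hle : ∀ z, hfun x S z ≤ cc z := by
    intro z
    refine iSup_le ?_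
    rintro ⟨m, u⟩
    unfold gfun
    split_ifs with hstrict
    swap
    · exact zero_le
    by_cases hz : z ∈ ⋂ i : Fin m, Icc (min (x (u i.castSucc)) (x (u i.succ)))
        (max (x (u i.castSucc)) (x (u i.succ)))
    swap
    · rw [Set.indicator_of_notMem hz]; exact zero_le
    rw [Set.indicator_of_mem hz]
    -- positions in the sorted list
    have hmeml : ∀ i : Fin (m+1), (u i : ℝ) ∈ l := fun i => Finset.mem_sort (α := ℝ) (· ≤ ·) |>.2 (u i).2
    set pos : Fin (m+1) → ℕ := fun i => l.idxOf (u i : ℝ) with hpos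
    have hposlt : ∀ i, pos i < len := fun i => List.idxOf_lt_length_iff.2 (hmeml i)
    have hget : ∀ i, l.getD (pos i) 0 = (u i : ℝ) := by
      intro i
      rw [List.getD_eq_getElem l 0 (hposlt i)]
      exact List.getElem_idxOf (hposlt i)
    -- u is strictly monotone on Fin (m+1)
    have hustrict : ∀ i j : Fin (m+1), i < j → (u i : ℝ) < (u j : ℝ) := by
      intro i j hij
      have key : ∀ d : ℕ, ∀ i j : Fin (m+1), (j : ℕ) - (i : ℕ) ≤ d → i < j → (u i : ℝ) < (u j : ℝ) := by
        intro d
        induction d with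
        | zero => intro i j h hij; have := Fin.lt_iff_val_lt_val.1 hij; omega
        | succ d ihd =>
          intro i j h hij
          have hij' := Fin.lt_iff_val_lt_val.1 hij
          by_cases hstep : (i : ℕ) + 1 = (j : ℕ)
          · have hiv : (i : ℕ) < m := by omega
            have := hstrict ⟨(i : ℕ), hiv⟩
            have e1 : (⟨(i : ℕ), hiv⟩ : Fin m).castSucc = i := by
              apply Fin.ext; simp
            have e2 : (⟨(i : ℕ), hiv⟩ : Fin m).succ = j := by
              apply Fin.ext; simp [hstep]
            rwa [e1, e2] at this
          · have hiv : (i : ℕ) + 1 < m + 1 := by omega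
            have h1 : (u i : ℝ) < (u ⟨(i:ℕ)+1, hiv⟩ : ℝ) := by
              have hiv' : (i : ℕ) < m := by omega
              have := hstrict ⟨(i : ℕ), hiv'⟩
              have e1 : (⟨(i : ℕ), hiv'⟩ : Fin m).castSucc = i := by apply Fin.ext; simp
              have e2 : (⟨(i : ℕ), hiv'⟩ : Fin m).succ = ⟨(i:ℕ)+1, hiv⟩ := by apply Fin.ext; simp
              rwa [e1, e2] at this
            have h2 : (u ⟨(i:ℕ)+1, hiv⟩ : ℝ) < (u j : ℝ) := by
              refine ihd ⟨(i:ℕ)+1, hiv⟩ j (by simp; omega) ?_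
              rw [Fin.lt_iff_val_lt_val]; simp; omega
            exact h1.trans h2
      exact key ((j : ℕ) - (i : ℕ)) i j (le_refl _) hij
    have hposmono : ∀ i j : Fin (m+1), i < j → pos i < pos j := by
      intro i j hij
      by_contra hcon
      push_neg at hcon
      rcases Nat.lt_or_ge (pos j) (pos i) with h | h
      · have : l.getD (pos j) 0 ≤ l.getD (pos i) 0 := hgetmono _ _ h.le (hposlt i)
        rw [hget i, hget j] at this
        exact absurd (hustrict i j hij) this.not_gt
      · have : pos i = pos j := by omega
        have heq : (u i : ℝ) = (u j : ℝ) := by rw [← hget i, ← hget j, this]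
        exact absurd (hustrict i j hij) heq.not_lt
    have hposmono' : ∀ i j : Fin (m+1), i ≤ j → pos i ≤ pos j := by
      intro i j hij
      rcases eq_or_lt_of_le hij with rfl | h
      · exact le_refl _
      · exact (hposmono i j h).le
    -- for each i : Fin m, find a consecutive straddling pair
    have hivt : ∀ i : Fin m, ∃ j, pos i.castSucc ≤ j ∧ j < pos i.succ ∧
        min (x (l.getD j 0)) (x (l.getD (j+1) 0)) ≤ z ∧
        z ≤ max (x (l.getD j 0)) (x (l.getD (j+1) 0)) := by
      intro i
      have hzi := Set.mem_iInter.1 hz i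
      have h1 : min (x (l.getD (pos i.castSucc) 0)) (x (l.getD (pos i.succ) 0)) ≤ z := by
        rw [hget i.castSucc, hget i.succ]; exact hzi.1
      have h2 : z ≤ max (x (l.getD (pos i.castSucc) 0)) (x (l.getD (pos i.succ) 0)) := by
        rw [hget i.castSucc, hget i.succ]; exact hzi.2
      exact ivt_discrete (fun j => x (l.getD j 0)) z (pos i.succ) (pos i.castSucc) (pos i.succ)
        (by omega) (hposmono _ _ (Fin.castSucc_lt_succ (i := i))) h1 h2
    choose φ hφ1 hφ2 hφ3 hφ4 using hivt
    -- injection into straddling consecutive pairs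
    set P : ℕ → Prop := fun j => min (x (l.getD j 0)) (x (l.getD (j+1) 0)) ≤ z ∧
        z ≤ max (x (l.getD j 0)) (x (l.getD (j+1) 0)) with hP
    have hcard : m ≤ ((Finset.range (len-1)).filter P).card := by
      have hmaps : ∀ i ∈ (Finset.univ : Finset (Fin m)), φ i ∈ (Finset.range (len-1)).filter P := by
        intro i _
        rw [Finset.mem_filter, Finset.mem_range]
        refine ⟨?_, hφ3 i, hφ4 i⟩
        have := hφ2 i
        have := hposlt i.succ
        omega
      have hinj : Set.InjOn φ (Finset.univ : Finset (Fin m)) := by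
        intro i _ j _ heq
        by_contra hne
        rcases lt_or_gt_of_ne hne with h | h
        · have : φ i < φ j :=
            lt_of_lt_of_le (hφ2 i) (le_trans (hposmono' i.succ j.castSucc
              (by rw [Fin.le_iff_val_le_val]; simp; exact Fin.lt_iff_val_lt_val.1 h)) (hφ1 j))
          omega
        · have : φ j < φ i :=
            lt_of_lt_of_le (hφ2 j) (le_trans (hposmono' j.succ i.castSucc
              (by rw [Fin.le_iff_val_le_val]; simp; exact Fin.lt_iff_val_lt_val.1 h)) (hφ1 i))
          omega
      have := Finset.card_le_card_of_injOn φ hmaps hinj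
      simpa using this
    calc (m : ℝ≥0∞) ≤ (((Finset.range (len-1)).filter P).card : ℝ≥0∞) := by
          exact_mod_cast hcard
      _ = cc z := by
          rw [hcc]
          rw [Finset.card_filter]
          push_cast
          refine Finset.sum_congr rfl ?_
          intro j _
          rw [Set.indicator_apply]
          by_cases hPj : P j
          · rw [if_pos hPj, if_pos (by exact ⟨hPj.1, hPj.2⟩ : z ∈ Icc _ _)]
          · rw [if_neg hPj, if_neg (fun hz' => hPj ⟨hz'.1, hz'.2⟩)]
    -- step 2 : integral of cc
  have hccint : (∫⁻ z : ℝ, cc z) ≤ eVariationOn x (Icc 0 t) := by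
    rw [hcc]
    rw [lintegral_finset_sum _ (fun j _ =>
      measurable_const.indicator measurableSet_Icc)]
    have hterm : ∀ j ∈ Finset.range (len - 1),
        (∫⁻ z : ℝ, (Icc (min (x (l.getD j 0)) (x (l.getD (j+1) 0)))
          (max (x (l.getD j 0)) (x (l.getD (j+1) 0)))).indicator (fun _ => (1:ℝ≥0∞)) z)
        = edist (x (l.getD (j+1) 0)) (x (l.getD j 0)) := by
      intro j _
      rw [lintegral_indicator measurableSet_Icc]
      simp only [setLIntegral_one]
      rw [Real.volume_Icc, max_sub_min_eq_abs, edist_dist, Real.dist_eq]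
    rw [Finset.sum_congr rfl hterm]
    -- compare with eVariationOn via the clamped sequence
    set v : ℕ → ℝ := fun j => l.getD (min j (len-1)) 0 with hv
    have hvmono : Monotone v := by
      apply monotone_nat_of_le_succ
      intro j
      exact hgetmono _ _ (by omega) (by omega)
    have hvmem : ∀ j, v j ∈ Icc (0:ℝ) t := fun j => hS _ (hgetmem _ (by omega))
    have := eVariationOn.sum_le (f := x) (n := len - 1) hvmono hvmem
    refine le_trans (le_of_eq ?_) this
    refine Finset.sum_congr rfl ?_
    intro j hj
    rw [Finset.mem_range] at hj
    have e1 : v j = l.getD j 0 := by rw [hv]; simp only; rw [Nat.min_eq_left (by omega)]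
    have e2 : v (j+1) = l.getD (j+1) 0 := by rw [hv]; simp only; rw [Nat.min_eq_left (by omega)]
    rw [e1, e2]
  calc (∫⁻ z : ℝ, hfun x S z) ≤ ∫⁻ z : ℝ, cc z := lintegral_mono hle
    _ ≤ eVariationOn x (Icc 0 t) := hccint


/-- perturbation of an alternating chain into a rational chain -/
lemma altCount_le_hsup {x : ℝ → ℝ} (hx : Cadlag x) {t : ℝ} (f : ℕ → ℝ)
    (hft : ∃ k, f k = t)
    (hrat : ∀ r : ℝ, (∃ q : ℚ, (q : ℝ) = r) → r ∈ Icc (0:ℝ) t → ∃ k, f k = r) (z : ℝ) :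
    ((altCount x t z : ℕ∞) : ℝ≥0∞) ≤ ⨆ n, hfun x (Finset.image f (Finset.range (n+1))) z := by
  classical
  apply toENNReal_sSup_le
  rintro _ ⟨m, rfl, u, umono, umem, ustr⟩
  rw [ENat.toENNReal_coe]
  rcases Nat.eq_zero_or_pos m with rfl | hm
  · simp
  have hne : ∀ i, i ≤ m → x (u i) ≠ z := by
    intro i hi
    rcases Nat.lt_or_ge i m with h | h
    · intro heq
      have := ustr i h
      rw [heq] at this
      simp at this
    · have hi' : i = m := by omega
      intro heq
      rw [hi'] at heq
      have h2 := ustr (m-1) (by omega)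
      have hmm : m - 1 + 1 = m := by omega
      rw [hmm, heq] at h2
      simp at h2
  have hlt : ∀ i, i < m → u i < u (i+1) := by
    intro i hi
    rcases eq_or_lt_of_le (umono i (i+1) (by omega) (by omega)) with heq | h
    · exfalso
      have := ustr i hi
      rw [heq] at this
      exact absurd this (mul_self_nonneg _).not_gt
    · exact h
  have hpick : ∀ i : ℕ, ∃ r : ℝ, i ≤ m →
      ((∃ k, f k = r) ∧ u i ≤ r ∧ (i < m → r < u (i+1)) ∧
        0 < (x (u i) - z) * (x r - z)) := by
    intro i
    by_cases him : i ≤ m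
    · by_cases hit : u i = t
      · refine ⟨t, fun _ => ⟨hft, hit.le, ?_, ?_⟩⟩
        · intro hi
          exfalso
          have h1 := hlt i hi
          have h2 := (umem (i+1) (by omega)).2
          linarith [hit ▸ h1]
        · have : x t = x (u i) := by rw [hit]
          rw [this]
          exact mul_self_pos.2 (sub_ne_zero.2 (hne i him))
      · have hui_t : u i < t := lt_of_le_of_ne (umem i him).2 hit
        have hside : ∀ᶠ r in nhdsWithin (u i) (Ici (u i)),
            0 < (x (u i) - z) * (x r - z) := by
          rcases lt_or_gt_of_ne (hne i him) with hlt' | hgt'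
          · have hev : ∀ᶠ r in nhdsWithin (u i) (Ici (u i)), x r < z :=
              (hx.1 (u i)).eventually_lt_const hlt'
            exact hev.mono fun r hr => mul_pos_of_neg_of_neg (by linarith) (by linarith)
          · have hev : ∀ᶠ r in nhdsWithin (u i) (Ici (u i)), z < x r :=
              (hx.1 (u i)).eventually_const_lt hgt'
            exact hev.mono fun r hr => mul_pos (by linarith) (by linarith)
        obtain ⟨δ, hδ, hball⟩ := Metric.mem_nhdsWithin_iff.1 hside
        set B := min (if i < m then u (i+1) else t) (min t (u i + δ)) with hB
        have huB : u i < B := by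
          rw [hB, lt_min_iff, lt_min_iff]
          refine ⟨?_, hui_t, by linarith⟩
          split_ifs with hi
          · exact hlt i hi
          · exact hui_t
        obtain ⟨qq, hq1, hq2⟩ := exists_rat_btwn huB
        have hqt : (qq : ℝ) ≤ t :=
          le_trans hq2.le ((min_le_right _ _).trans (min_le_left _ _))
        refine ⟨(qq : ℝ), fun _ => ⟨?_, hq1.le, ?_, ?_⟩⟩
        · exact hrat _ ⟨qq, rfl⟩ ⟨(umem i him).1.trans hq1.le, hqt⟩
        · intro hi
          have hB2 : B ≤ u (i+1) := by
            rw [hB, if_pos hi]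
            exact min_le_left _ _
          exact hq2.trans_le hB2
        · refine hball ⟨?_, hq1.le⟩
          rw [Metric.mem_ball, Real.dist_eq, abs_lt]
          have hB3 : B ≤ u i + δ := (min_le_right _ _).trans (min_le_right _ _)
          constructor <;> [linarith; linarith [hq2.trans_le hB3]]
    · exact ⟨0, fun h => absurd h him⟩
  choose d hd using hpick
  have dstrict : ∀ i, i < m → d i < d (i+1) := fun i hi =>
    lt_of_lt_of_le ((hd i (by omega)).2.2.1 hi) ((hd (i+1) (by omega)).2.1)
  have dsign : ∀ i, i ≤ m → 0 < (x (u i) - z) * (x (d i) - z) := fun i hi =>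
    (hd i hi).2.2.2
  have pairneg : ∀ i, i < m → (x (d i) - z) * (x (d (i+1)) - z) < 0 := fun i hi =>
    sign_transfer (dsign i (by omega)) (dsign (i+1) (by omega)) (ustr i hi)
  choose k hk using fun i : Fin (m+1) => (hd i.val (Nat.lt_succ_iff.1 i.isLt)).1
  set n := Finset.univ.sup k with hn
  have hdmem : ∀ i : Fin (m+1), d i.val ∈ Finset.image f (Finset.range (n+1)) := fun i =>
    Finset.mem_image.2 ⟨k i, Finset.mem_range.2 (Nat.lt_succ_of_le
      (Finset.le_sup (Finset.mem_univ i))), hk i⟩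
  refine le_trans ?_ (le_iSup _ n)
  set p : chainIdx (Finset.image f (Finset.range (n+1))) :=
    ⟨m, fun i => ⟨d i.val, hdmem i⟩⟩ with hp
  have hstr : ∀ i : Fin m, ((p.2 i.castSucc : ℝ)) < (p.2 i.succ : ℝ) := by
    intro i
    show d i.castSucc.val < d i.succ.val
    rw [Fin.coe_castSucc, Fin.val_succ]
    exact dstrict i.val i.isLt
  have hgval : gfun x _ p z = (m : ℝ≥0∞) := by
    unfold gfun
    rw [if_pos hstr]
    rw [Set.indicator_of_mem]
    refine Set.mem_iInter.2 fun i => ?_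
    have := straddle_of_mul_neg (pairneg i.val i.isLt)
    have e1 : (p.2 i.castSucc : ℝ) = d i.val := by
      show d i.castSucc.val = d i.val
      rw [Fin.coe_castSucc]
    have e2 : (p.2 i.succ : ℝ) = d (i.val + 1) := by
      show d i.succ.val = d (i.val + 1)
      rw [Fin.val_succ]
    rw [e1, e2]
    exact ⟨this.1, this.2⟩
  rw [← hgval]
  exact le_iSup (fun q => gfun x (Finset.image f (Finset.range (n+1))) q z) p


end LCAux

open LCAux in
/-- for a.e. level `z` the crossing number `N^z(x,[0,t])` is finite, and its
integral is bounded by the total variation. -/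
theorem levelCross_ae_finite_and_integral_le (x : ℝ → ℝ) (hx : Cadlag x)
    (hv : LocFiniteVar x) (t : ℝ) (ht : 0 < t) :
    (∀ᵐ z : ℝ, levelCross x 0 t z ≠ ⊤) ∧
    (∫⁻ z : ℝ, (levelCross x 0 t z : ℝ≥0∞)) ≤ eVariationOn x (Icc 0 t) := by

  classical
  set D : Set ℝ := insert t ((Set.range ((↑) : ℚ → ℝ)) ∩ Icc 0 t) with hD
  have hDc : D.Countable :=
    (Set.Countable.mono Set.inter_subset_left (Set.countable_range _)).insert t
  have hDne : D.Nonempty := ⟨t, Set.mem_insert _ _⟩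
  have hDsub : D ⊆ Icc 0 t := by
    rw [hD]
    exact Set.insert_subset ⟨ht.le, le_refl t⟩ Set.inter_subset_right
  obtain ⟨f, hf⟩ := hDc.exists_eq_range hDne
  have hft : ∃ k, f k = t := by
    have : t ∈ Set.range f := hf ▸ Set.mem_insert _ _
    obtain ⟨k, hk⟩ := this
    exact ⟨k, hk⟩
  have hrat : ∀ r : ℝ, (∃ q : ℚ, (q : ℝ) = r) → r ∈ Icc (0:ℝ) t → ∃ k, f k = r := by
    intro r hq hr
    have : r ∈ Set.range f := hf ▸ Set.mem_insert_of_mem _ ⟨⟨hq.choose, hq.choose_spec⟩, hr⟩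
    obtain ⟨k, hk⟩ := this
    exact ⟨k, hk⟩
  have hfmem : ∀ k, f k ∈ Icc (0:ℝ) t := by
    intro k
    exact hDsub (hf ▸ (Set.mem_range_self k))
  set Sn : ℕ → Finset ℝ := fun n => Finset.image f (Finset.range (n+1)) with hSn
  have hSn_sub : ∀ n, ∀ r ∈ Sn n, r ∈ Icc (0:ℝ) t := by
    intro n r hr
    obtain ⟨k, -, rfl⟩ := Finset.mem_image.1 hr
    exact hfmem k
  have hSn_ne : ∀ n, (Sn n).Nonempty := fun n =>
    ⟨f 0, Finset.mem_image.2 ⟨0, Finset.mem_range.2 (by omega), rfl⟩⟩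
  have hSn_mono : ∀ n, Sn n ⊆ Sn (n+1) := fun n =>
    Finset.image_subset_image (Finset.range_subset_range.2 (by omega))
  set G : ℝ → ℝ≥0∞ := fun z => ⨆ n, hfun x (Sn n) z with hG
  have hGmeas : Measurable G :=
    Measurable.iSup fun n => hfun_measurable x (Sn n)
  have hmonoseq : Monotone (fun n => hfun x (Sn n)) := by
    refine monotone_nat_of_le_succ ?_
    intro n z
    exact hfun_mono x (hSn_mono n) z
  have hGint : (∫⁻ z : ℝ, G z) ≤ eVariationOn x (Icc 0 t) := by
    rw [hG]
    rw [lintegral_iSup (fun n => hfun_measurable x (Sn n)) hmonoseq]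
    exact iSup_le fun n => hfun_lintegral_le x (Sn n) (hSn_sub n) (hSn_ne n)
  have hpt : ∀ z, ((levelCross x 0 t z : ℕ∞) : ℝ≥0∞) ≤ G z := by
    intro z
    refine le_trans (ENat.toENNReal_mono (levelCross_le_altCount hx ht.le z)) ?_
    exact altCount_le_hsup hx f hft hrat z
  constructor
  · have hfin : (∫⁻ z : ℝ, G z) ≠ ⊤ :=
      (lt_of_le_of_lt hGint (lt_top_iff_ne_top.2 (hv 0 t))).ne
    filter_upwards [ae_lt_top hGmeas hfin] with z hz
    intro heq
    have := hpt z
    rw [heq, ENat.toENNReal_top] at this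
    exact absurd (lt_of_le_of_lt this hz) (lt_irrefl _)
  · exact le_trans (lintegral_mono hpt) hGint
end
end

section
/- Let x : [0,∞) → ℝ be a continuous function with locally finite total variation, t > 0, and g : ℝ → ℝ Borel measurable and locally bounded. Then ∫_ℝ U^z(x,[0,t]) g(z) dz = ∫_{(0,t]} g(x_s) (dx_s)_+ and ∫_ℝ D^z(x,[0,t]) g(z) dz = ∫_{(0,t]} g(x_s) (dx_s)_−, where (dx_s)_± are the positive and negative variation measures of x. -/
open MeasureTheory Filter Set Function
open scoped ENNReal NNReal

noncomputable section

-- EReal helpers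
lemma ereal_real_of_between {e : EReal} {a b : ℝ} (h1 : (a : EReal) ≤ e) (h2 : e ≤ (b : EReal)) :
    ∃ r : ℝ, e = (r : EReal) := by
  induction e with
  | bot => simp at h1
  | coe r => exact ⟨r, rfl⟩
  | top => simp at h2

section hitfacts

variable {f : ℝ → ℝ} {t y : ℝ} {σ : EReal}

lemma le_hitAbove_self : σ ≤ hitAbove f t y σ :=
  le_sInf (by rintro u ⟨r, rfl, h1, h2, h3⟩; exact h1)

lemma le_hitBelow_self : σ ≤ hitBelow f t y σ :=
  le_sInf (by rintro u ⟨r, rfl, h1, h2, h3⟩; exact h1)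

lemma hitAbove_le {r : ℝ} (h1 : σ ≤ (r : EReal)) (h2 : r ≤ t) (h3 : y ≤ f r) :
    hitAbove f t y σ ≤ (r : EReal) := sInf_le ⟨r, rfl, h1, h2, h3⟩

lemma hitBelow_le {r : ℝ} (h1 : σ ≤ (r : EReal)) (h2 : r ≤ t) (h3 : f r < y) :
    hitBelow f t y σ ≤ (r : EReal) := sInf_le ⟨r, rfl, h1, h2, h3⟩

lemma hitAbove_lb {v r : ℝ} (he : hitAbove f t y σ = (v : EReal))
    (h1 : σ ≤ (r : EReal)) (h2 : r ≤ t) (h3 : y ≤ f r) : v ≤ r := by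
  have := hitAbove_le (f := f) h1 h2 h3
  rw [he] at this; exact_mod_cast this

lemma hitBelow_lb {v r : ℝ} (he : hitBelow f t y σ = (v : EReal))
    (h1 : σ ≤ (r : EReal)) (h2 : r ≤ t) (h3 : f r < y) : v ≤ r := by
  have := hitBelow_le (f := f) h1 h2 h3
  rw [he] at this; exact_mod_cast this

lemma hitAbove_approx {v : ℝ} (he : hitAbove f t y σ = (v : EReal)) {ε : ℝ} (hε : 0 < ε) :
    ∃ r : ℝ, σ ≤ (r : EReal) ∧ r ≤ t ∧ y ≤ f r ∧ r < v + ε := by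
  by_contra h
  push_neg at h
  have : ((v + ε : ℝ) : EReal) ≤ hitAbove f t y σ := by
    refine le_sInf ?_
    rintro u ⟨r, rfl, h1, h2, h3⟩
    exact_mod_cast h r h1 h2 h3
  rw [he] at this
  have : v + ε ≤ v := by exact_mod_cast this
  linarith

lemma hitBelow_approx {v : ℝ} (he : hitBelow f t y σ = (v : EReal)) {ε : ℝ} (hε : 0 < ε) :
    ∃ r : ℝ, σ ≤ (r : EReal) ∧ r ≤ t ∧ f r < y ∧ r < v + ε := by
  by_contra h
  push_neg at h
  have : ((v + ε : ℝ) : EReal) ≤ hitBelow f t y σ := by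
    refine le_sInf ?_
    rintro u ⟨r, rfl, h1, h2, h3⟩
    exact_mod_cast h r h1 h2 h3
  rw [he] at this
  have : v + ε ≤ v := by exact_mod_cast this
  linarith

end hitfacts



section sigma
variable {f : ℝ → ℝ} {s t y c : ℝ}

lemma sigmaSeq_mono : Monotone (sigmaSeq f s t y c) := by
  apply monotone_nat_of_le_succ
  intro n
  calc sigmaSeq f s t y c n ≤ hitAbove f t (y + c/2) (sigmaSeq f s t y c n) := le_hitAbove_self
    _ ≤ _ := le_hitBelow_self

lemma sigmaSeq_ge : (s : EReal) ≤ sigmaSeq f s t y c n := by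
  have := sigmaSeq_mono (f := f) (s := s) (t := t) (y := y) (c := c) (Nat.zero_le n)
  simpa [sigmaSeq] using this

lemma downcross_ge {m : ℕ} (h : sigmaSeq f s t y c m ≤ (t : EReal)) :
    (m : ℕ∞) ≤ downcross f s t y c := le_sSup ⟨m, rfl, h⟩

lemma sigma_le_of_downcross {m : ℕ} (hst : s ≤ t) (h : (m : ℕ∞) ≤ downcross f s t y c) :
    sigmaSeq f s t y c m ≤ (t : EReal) := by
  rcases Nat.eq_zero_or_pos m with hm | hm
  · subst hm; simpa [sigmaSeq] using EReal.coe_le_coe_iff.2 hst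
  by_contra h'
  have hb : ∀ k : ℕ, sigmaSeq f s t y c k ≤ (t : EReal) → k < m := by
    intro k hk
    by_contra hkm
    exact h' (le_trans (sigmaSeq_mono (not_lt.1 hkm)) hk)
  have hsup : downcross f s t y c ≤ ((m - 1 : ℕ) : ℕ∞) := by
    apply sSup_le
    rintro n ⟨k, rfl, hk⟩
    have := hb k hk
    exact_mod_cast Nat.le_sub_one_of_lt this
  have : (m : ℕ∞) ≤ ((m - 1 : ℕ) : ℕ∞) := le_trans h hsup
  have : m ≤ m - 1 := by exact_mod_cast this
  omega

end sigma


section ext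
variable {f : ℝ → ℝ} {s t y c : ℝ}

lemma step_facts (hf : Continuous f) {j : ℕ}
    (hj : sigmaSeq f s t y c (j+1) ≤ (t : EReal)) :
    ∃ a b : ℝ, sigmaSeq f s t y c j ≤ (a : EReal) ∧ a ≤ b ∧ b ≤ t ∧
      sigmaSeq f s t y c (j+1) = (b : EReal) ∧
      y + c/2 ≤ f a ∧ f b ≤ y - c/2 ∧ (∀ r, a ≤ r → r < b → y - c/2 ≤ f r) := by
  set σ := sigmaSeq f s t y c j with hσdef
  have hβdef : sigmaSeq f s t y c (j+1)
      = hitBelow f t (y - c/2) (hitAbove f t (y + c/2) σ) := rfl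
  set α := hitAbove f t (y + c/2) σ with hαdef
  have hσα : σ ≤ α := le_hitAbove_self
  have hαβ : α ≤ sigmaSeq f s t y c (j+1) := by rw [hβdef]; exact le_hitBelow_self
  have hsσ : (s : EReal) ≤ σ := sigmaSeq_ge
  obtain ⟨a, ha⟩ := ereal_real_of_between (hsσ.trans hσα) (hαβ.trans hj)
  obtain ⟨b, hb⟩ := ereal_real_of_between ((hsσ.trans hσα).trans hαβ) hj
  have hab : a ≤ b := by
    rw [ha, hb] at hαβ; exact_mod_cast hαβ
  have hbt : b ≤ t := by rw [hb] at hj; exact_mod_cast hj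
  have hσa : σ ≤ (a : EReal) := by rw [← ha]; exact hσα
  have hβb : hitBelow f t (y - c/2) α = (b : EReal) := by rw [← hβdef, hb]
  have hfa : y + c/2 ≤ f a := by
    by_contra h
    push_neg at h
    have hopen : {r : ℝ | f r < y + c/2} ∈ nhds a :=
      (isOpen_lt hf continuous_const).mem_nhds h
    obtain ⟨δ, hδ, hball⟩ := Metric.mem_nhds_iff.1 hopen
    obtain ⟨r, hr1, hr2, hr3, hr4⟩ := hitAbove_approx ha hδ
    have har : a ≤ r := hitAbove_lb ha hr1 hr2 hr3
    have : r ∈ Metric.ball a δ := by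
      rw [Metric.mem_ball, Real.dist_eq, abs_lt]; constructor <;> linarith
    exact absurd hr3 (not_le.2 (hball this))
  have hfb : f b ≤ y - c/2 := by
    by_contra h
    push_neg at h
    have hopen : {r : ℝ | y - c/2 < f r} ∈ nhds b :=
      (isOpen_lt continuous_const hf).mem_nhds h
    obtain ⟨δ, hδ, hball⟩ := Metric.mem_nhds_iff.1 hopen
    obtain ⟨r, hr1, hr2, hr3, hr4⟩ := hitBelow_approx hβb hδ
    have hbr : b ≤ r := hitBelow_lb hβb hr1 hr2 hr3
    have : r ∈ Metric.ball b δ := by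
      rw [Metric.mem_ball, Real.dist_eq, abs_lt]; constructor <;> linarith
    exact absurd (hball this) (not_lt.2 hr3.le)
  refine ⟨a, b, hσa, hab, hbt, hb, hfa, hfb, ?_⟩
  intro r h1 h2
  by_contra h
  push_neg at h
  have : b ≤ r := hitBelow_lb hβb (by rw [ha]; exact_mod_cast h1) (h2.le.trans hbt) h
  linarith

lemma downcross_ext (hf : Continuous f) (hst : s ≤ t) {m : ℕ}
    (hm : (m : ℕ∞) ≤ downcross f s t y c) :
    ∃ a b : ℕ → ℝ,
      (∀ j, j < m → s ≤ a j ∧ a j ≤ b j ∧ b j ≤ t ∧ y + c/2 ≤ f (a j) ∧ f (b j) ≤ y - c/2 ∧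
        (∀ r, a j ≤ r → r < b j → y - c/2 ≤ f r)) ∧
      (∀ j, j + 1 < m → b j ≤ a (j+1)) := by
  have hσm := sigma_le_of_downcross hst hm
  have hσ : ∀ j, j < m → sigmaSeq f s t y c (j+1) ≤ (t : EReal) := fun j hj =>
    le_trans (sigmaSeq_mono (by omega : j+1 ≤ m)) hσm
  choose a' b' h1 h2 h3 h4 h5 h6 h7 using fun (j : ℕ) (hj : j < m) => step_facts hf (hσ j hj)
  refine ⟨fun j => if h : j < m then a' j h else 0, fun j => if h : j < m then b' j h else 0,
    ?_, ?_⟩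
  · intro j hj
    simp only [dif_pos hj]
    have hsa : s ≤ a' j hj := by
      have := (sigmaSeq_ge (f := f) (s := s) (t := t) (y := y) (c := c) (n := j)).trans (h1 j hj)
      exact_mod_cast this
    exact ⟨hsa, h2 j hj, h3 j hj, h5 j hj, h6 j hj, h7 j hj⟩
  · intro j hj
    have hjm : j < m := by omega
    simp only [dif_pos hj, dif_pos hjm]
    have : ((b' j hjm : ℝ) : EReal) ≤ ((a' (j+1) hj : ℝ) : EReal) := by
      rw [← h4 j hjm]; exact h1 (j+1) hj
    exact_mod_cast this

lemma downcross_ge_of_strict {m : ℕ} (hst : s ≤ t) (a b : ℕ → ℝ)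
    (ha : ∀ j, j < m → s ≤ a j ∧ a j ≤ b j ∧ b j ≤ t ∧ y + c/2 ≤ f (a j) ∧ f (b j) < y - c/2)
    (hab : ∀ j, j + 1 < m → b j ≤ a (j+1)) :
    (m : ℕ∞) ≤ downcross f s t y c := by
  rcases Nat.eq_zero_or_pos m with hm | hm
  · subst hm; simp
  have key : ∀ j, j < m → sigmaSeq f s t y c (j+1) ≤ ((b j : ℝ) : EReal) := by
    intro j
    induction j with
    | zero =>
      intro hj
      obtain ⟨hs0, hab0, hbt0, hfa0, hfb0⟩ := ha 0 hj
      have h1 : sigmaSeq f s t y c 0 ≤ ((a 0 : ℝ) : EReal) := by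
        show ((s : ℝ) : EReal) ≤ _
        exact_mod_cast hs0
      have h2 : hitAbove f t (y + c/2) (sigmaSeq f s t y c 0) ≤ ((a 0 : ℝ) : EReal) :=
        hitAbove_le h1 (hab0.trans hbt0) hfa0
      exact hitBelow_le (h2.trans (by exact_mod_cast hab0)) hbt0 hfb0
    | succ k ih =>
      intro hj
      have hk : k < m := by omega
      have hkk : k + 1 < m := hj
      obtain ⟨hs0, hab0, hbt0, hfa0, hfb0⟩ := ha (k+1) hj
      have hba : b k ≤ a (k+1) := hab k hj
      have h1 : sigmaSeq f s t y c (k+1) ≤ ((a (k+1) : ℝ) : EReal) :=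
        (ih hk).trans (by exact_mod_cast hba)
      have h2 : hitAbove f t (y + c/2) (sigmaSeq f s t y c (k+1)) ≤ ((a (k+1) : ℝ) : EReal) :=
        hitAbove_le h1 (hab0.trans hbt0) hfa0
      exact hitBelow_le (h2.trans (by exact_mod_cast hab0)) hbt0 hfb0
  have : sigmaSeq f s t y c m ≤ (t : EReal) := by
    obtain ⟨m', rfl⟩ : ∃ m', m = m' + 1 := ⟨m - 1, by omega⟩
    have := key m' (by omega)
    exact this.trans (by exact_mod_cast (ha m' (by omega)).2.2.1)
  exact downcross_ge this

end ext


/-- weak upcrossing tuples -/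
def UWeak (x : ℝ → ℝ) (t z c : ℝ) (m : ℕ) : Prop :=
  ∃ a b : ℕ → ℝ,
    (∀ j, j < m → 0 ≤ a j ∧ a j ≤ b j ∧ b j ≤ t ∧ x (a j) ≤ z - c/2 ∧ z + c/2 ≤ x (b j)) ∧
    (∀ j, j + 1 < m → b j ≤ a (j+1))

section xside
variable {x : ℝ → ℝ} {t z c : ℝ} {m : ℕ}

lemma upcross_ext (hx : Continuous x) (hst : (0:ℝ) ≤ t)
    (hm : (m : ℕ∞) ≤ upcross x 0 t z c) :
    ∃ a b : ℕ → ℝ,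
      (∀ j, j < m → 0 ≤ a j ∧ a j ≤ b j ∧ b j ≤ t ∧ x (a j) ≤ z - c/2 ∧ z + c/2 ≤ x (b j) ∧
        (∀ r, a j ≤ r → r < b j → x r ≤ z + c/2)) ∧
      (∀ j, j + 1 < m → b j ≤ a (j+1)) := by
  obtain ⟨a, b, h1, h2⟩ := downcross_ext (f := fun u => -x u) hx.neg hst hm
  refine ⟨a, b, ?_, h2⟩
  intro j hj
  obtain ⟨c1, c2, c3, c4, c5, c6⟩ := h1 j hj
  refine ⟨c1, c2, c3, by linarith, by linarith, ?_⟩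
  intro r hr1 hr2
  have := c6 r hr1 hr2
  linarith

lemma upcross_ge_of_strict (hst : (0:ℝ) ≤ t) (a b : ℕ → ℝ)
    (ha : ∀ j, j < m → 0 ≤ a j ∧ a j ≤ b j ∧ b j ≤ t ∧ x (a j) ≤ z - c/2 ∧ z + c/2 < x (b j))
    (hab : ∀ j, j + 1 < m → b j ≤ a (j+1)) :
    (m : ℕ∞) ≤ upcross x 0 t z c := by
  refine downcross_ge_of_strict hst a b ?_ hab
  intro j hj
  obtain ⟨c1, c2, c3, c4, c5⟩ := ha j hj
  refine ⟨c1, c2, c3, ?_, ?_⟩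
  · show -z + c/2 ≤ -x (a j); linarith
  · show -x (b j) < -z - c/2; linarith

lemma uweak_of_upcross (hx : Continuous x) (hst : (0:ℝ) ≤ t)
    (hm : (m : ℕ∞) ≤ upcross x 0 t z c) : UWeak x t z c m := by
  obtain ⟨a, b, h1, h2⟩ := upcross_ext hx hst hm
  exact ⟨a, b, fun j hj => ⟨(h1 j hj).1, (h1 j hj).2.1, (h1 j hj).2.2.1, (h1 j hj).2.2.2.1,
    (h1 j hj).2.2.2.2.1⟩, h2⟩

lemma upcross_of_uweak (hst : (0:ℝ) ≤ t) {c' : ℝ} (hc' : 0 < c') (hcc : c' < c)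
    (h : UWeak x t z c m) : (m : ℕ∞) ≤ upcross x 0 t z c' := by
  obtain ⟨a, b, h1, h2⟩ := h
  refine upcross_ge_of_strict hst a b ?_ h2
  intro j hj
  obtain ⟨c1, c2, c3, c4, c5⟩ := h1 j hj
  exact ⟨c1, c2, c3, by linarith, by linarith⟩

lemma uweak_mono {c' : ℝ} (hc' : 0 < c') (hcc : c' ≤ c) (h : UWeak x t z c m) :
    UWeak x t z c' m := by
  obtain ⟨a, b, h1, h2⟩ := h
  exact ⟨a, b, fun j hj => ⟨(h1 j hj).1, (h1 j hj).2.1, (h1 j hj).2.2.1,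
    by have := (h1 j hj).2.2.2.1; linarith, by have := (h1 j hj).2.2.2.2; linarith⟩, h2⟩

lemma enat_le_of_lt_coe_succ {u : ℕ∞} {m' : ℕ} (h : u < ((m' + 1 : ℕ) : ℕ∞)) :
    u ≤ (m' : ℕ∞) := by
  cases u with
  | top => simp at h
  | coe k =>
    have : k < m' + 1 := by exact_mod_cast h
    exact_mod_cast Nat.lt_succ_iff.1 this

lemma levelUpcross_ge_iff (hx : Continuous x) (hst : (0:ℝ) ≤ t) :
    (m : ℕ∞) ≤ levelUpcross x 0 t z ↔ ∃ q : ℚ, 0 < (q : ℝ) ∧ UWeak x t z q m := by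
  constructor
  · intro h
    rcases Nat.eq_zero_or_pos m with hm | hm
    · subst hm
      exact ⟨1, by norm_num, fun _ => 0, fun _ => 0, by omega, by omega⟩
    have hex : ∃ c : ℝ, 0 < c ∧ (m : ℕ∞) ≤ upcross x 0 t z c := by
      by_contra hcon
      push_neg at hcon
      have hb : levelUpcross x 0 t z ≤ (((m - 1 : ℕ)) : ℕ∞) := by
        refine iSup₂_le fun c hc => ?_
        have hlt := hcon c hc
        have h2 : upcross x 0 t z c < ((m - 1 + 1 : ℕ) : ℕ∞) := by
          rw [show m - 1 + 1 = m by omega]; exact hlt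
        exact enat_le_of_lt_coe_succ h2
      have : (m : ℕ∞) ≤ ((m - 1 : ℕ) : ℕ∞) := h.trans hb
      have : m ≤ m - 1 := by exact_mod_cast this
      omega
    obtain ⟨c, hc, hup⟩ := hex
    have hw := uweak_of_upcross hx hst hup
    obtain ⟨q, hq1, hq2⟩ := exists_rat_btwn hc
    exact ⟨q, hq1, uweak_mono hq1 hq2.le hw⟩
  · rintro ⟨q, hq, hw⟩
    have h2 : (m : ℕ∞) ≤ upcross x 0 t z (q/2) :=
      upcross_of_uweak hst (by linarith) (by linarith) hw
    exact h2.trans (le_iSup₂ (f := fun c (_ : 0 < c) => upcross x 0 t z c) ((q:ℝ)/2) (by linarith))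

end xside


section meas
variable {x : ℝ → ℝ} {t c : ℝ} {m : ℕ}

lemma isClosed_uweak (hx : Continuous x) (ht : (0:ℝ) ≤ t) :
    IsClosed {z : ℝ | UWeak x t z c m} := by
  set K : Set (ℕ → ℝ) := Set.univ.pi (fun i => if i < m then Icc (0:ℝ) t else {0}) with hK
  have hKc : IsCompact K := isCompact_univ_pi fun i => by
    by_cases hi : i < m
    · rw [if_pos hi]; exact isCompact_Icc
    · rw [if_neg hi]; exact isCompact_singleton
  have hrw : {z : ℝ | UWeak x t z c m} = {z : ℝ | ∃ p : (ℕ → ℝ) × (ℕ → ℝ), p ∈ K ×ˢ K ∧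
      (∀ j, j < m → x (p.1 j) ≤ z - c/2 ∧ z + c/2 ≤ x (p.2 j) ∧ p.1 j ≤ p.2 j) ∧
      (∀ j, j + 1 < m → p.2 j ≤ p.1 (j+1))} := by
    ext z
    constructor
    · rintro ⟨a, b, h1, h2⟩
      refine ⟨⟨fun i => if i < m then a i else 0, fun i => if i < m then b i else 0⟩,
        ⟨?_, ?_⟩, ?_, ?_⟩
      · intro i _
        dsimp only
        by_cases hi : i < m <;> simp only [hi, if_pos, if_neg, if_true, if_false]
        · obtain ⟨d1, d2, d3, _, _⟩ := h1 i hi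
          simp [hi, Set.mem_Icc]
          exact ⟨d1, d2.trans d3⟩
        · simp [hi]
      · intro i _
        dsimp only
        by_cases hi : i < m
        · obtain ⟨d1, d2, d3, _, _⟩ := h1 i hi
          simp [hi, Set.mem_Icc]
          exact ⟨d1.trans d2, d3⟩
        · simp [hi]
      · intro j hj
        obtain ⟨d1, d2, d3, d4, d5⟩ := h1 j hj
        simp only [if_pos hj]
        exact ⟨d4, d5, d2⟩
      · intro j hj
        have hjm : j < m := by omega
        simp only [if_pos hj, if_pos hjm]
        exact h2 j hj
    · rintro ⟨⟨a, b⟩, ⟨hKa, hKb⟩, h1, h2⟩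
      refine ⟨a, b, ?_, h2⟩
      intro j hj
      have haj := hKa j (Set.mem_univ _)
      have hbj := hKb j (Set.mem_univ _)
      simp only [if_pos hj] at haj hbj
      exact ⟨haj.1, (h1 j hj).2.2, hbj.2, (h1 j hj).1, (h1 j hj).2.1⟩
  rw [hrw]
  apply IsSeqClosed.isClosed
  intro zs z hzs hz
  choose p hp1 hp2 hp3 using hzs
  obtain ⟨q, hqK, φ, hφ, hconv⟩ := (hKc.prod hKc).tendsto_subseq hp1
  refine ⟨q, hqK, ?_, ?_⟩
  · intro j hj
    have hfst : Tendsto (fun n => p (φ n) |>.1 j) atTop (nhds (q.1 j)) :=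
      ((continuous_apply j).comp continuous_fst).continuousAt.tendsto.comp hconv
    have hsnd : Tendsto (fun n => p (φ n) |>.2 j) atTop (nhds (q.2 j)) :=
      ((continuous_apply j).comp continuous_snd).continuousAt.tendsto.comp hconv
    have hzφ : Tendsto (fun n => zs (φ n)) atTop (nhds z) := hz.comp hφ.tendsto_atTop
    refine ⟨le_of_tendsto_of_tendsto' ((hx.continuousAt.tendsto).comp hfst)
        (hzφ.sub tendsto_const_nhds) (fun n => (hp2 (φ n) j hj).1), ?_, ?_⟩
    · exact le_of_tendsto_of_tendsto' (hzφ.add tendsto_const_nhds)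
        ((hx.continuousAt.tendsto).comp hsnd) (fun n => (hp2 (φ n) j hj).2.1)
    · exact le_of_tendsto_of_tendsto' hfst hsnd (fun n => (hp2 (φ n) j hj).2.2)
  · intro j hj
    have hfst : Tendsto (fun n => p (φ n) |>.1 (j+1)) atTop (nhds (q.1 (j+1))) :=
      ((continuous_apply (j+1)).comp continuous_fst).continuousAt.tendsto.comp hconv
    have hsnd : Tendsto (fun n => p (φ n) |>.2 j) atTop (nhds (q.2 j)) :=
      ((continuous_apply j).comp continuous_snd).continuousAt.tendsto.comp hconv
    exact le_of_tendsto_of_tendsto' hsnd hfst (fun n => hp3 (φ n) j hj)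

end meas


section meas2
variable {x : ℝ → ℝ} {t : ℝ}

lemma measurableSet_A (hx : Continuous x) (ht : (0:ℝ) ≤ t) (m : ℕ) :
    MeasurableSet {z : ℝ | (m : ℕ∞) ≤ levelUpcross x 0 t z} := by
  have : {z : ℝ | (m : ℕ∞) ≤ levelUpcross x 0 t z}
      = ⋃ q : ℚ, {z : ℝ | 0 < (q:ℝ) ∧ UWeak x t z q m} := by
    ext z
    simp only [Set.mem_setOf_eq, Set.mem_iUnion, levelUpcross_ge_iff hx ht]
  rw [this]
  refine MeasurableSet.iUnion fun q => ?_
  by_cases hq : 0 < (q:ℝ)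
  · have : {z : ℝ | 0 < (q:ℝ) ∧ UWeak x t z q m} = {z : ℝ | UWeak x t z q m} := by
      ext z; simp [hq]
    rw [this]
    exact (isClosed_uweak hx ht).measurableSet
  · have he : {z : ℝ | 0 < (q:ℝ) ∧ UWeak x t z q m} = ∅ := by
      ext z; simp [hq]
    rw [he]
    exact MeasurableSet.empty

lemma measurable_H (hx : Continuous x) (ht : (0:ℝ) ≤ t) :
    Measurable (fun z => ((levelUpcross x 0 t z : ℕ∞) : ℝ≥0∞)) := by
  have hrw : (fun z => ((levelUpcross x 0 t z : ℕ∞) : ℝ≥0∞))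
      = fun z => ⨆ m : ℕ, ({z : ℝ | (m : ℕ∞) ≤ levelUpcross x 0 t z}).indicator
          (fun _ => (m : ℝ≥0∞)) z := by
    funext z
    apply le_antisymm
    · cases hL : levelUpcross x 0 t z with
      | top =>
        have hmem : ∀ m : ℕ, z ∈ {z : ℝ | (m : ℕ∞) ≤ levelUpcross x 0 t z} := fun m => by
          simp [hL]
        by_contra hcon
        push_neg at hcon
        obtain ⟨n, hn⟩ := ENNReal.exists_nat_gt hcon.ne_top
        have : (n : ℝ≥0∞) ≤ ⨆ m : ℕ, ({z : ℝ | (m : ℕ∞) ≤ levelUpcross x 0 t z}).indicator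
            (fun _ => (m : ℝ≥0∞)) z := by
          refine le_trans ?_ (le_iSup _ n)
          rw [Set.indicator_of_mem (hmem n)]
        exact absurd (hn.trans_le this) (lt_irrefl _)
      | coe k =>
        refine le_trans ?_ (le_iSup _ k)
        rw [Set.indicator_of_mem (by simp [hL] : z ∈ _)]
        simp [hL]
    · refine iSup_le fun m => ?_
      by_cases hm : z ∈ {z : ℝ | (m : ℕ∞) ≤ levelUpcross x 0 t z}
      · rw [Set.indicator_of_mem hm]
        have : ((m : ℕ∞) : ℝ≥0∞) ≤ ((levelUpcross x 0 t z : ℕ∞) : ℝ≥0∞) :=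
          ENat.toENNReal_mono hm
        simpa using this
      · rw [Set.indicator_of_notMem hm]
        exact zero_le
  rw [hrw]
  exact Measurable.iSup fun m => measurable_const.indicator (measurableSet_A hx ht m)

end meas2



lemma le_levelUpcross {x : ℝ → ℝ} {t z c : ℝ} (hc : 0 < c) :
    upcross x 0 t z c ≤ levelUpcross x 0 t z :=
  le_iSup₂ (f := fun c (_ : 0 < c) => upcross x 0 t z c) c hc


section posvar
variable {x : ℝ → ℝ}

lemma posVarOn_le_eVariationOn (s : Set ℝ) : posVarOn x s ≤ eVariationOn x s := by
  refine iSup_mono fun p => Finset.sum_le_sum fun i _ => ?_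
  rw [edist_dist, Real.dist_eq]
  exact ENNReal.ofReal_le_ofReal (le_abs_self _)

lemma posVarOn_Icc_ne_top (hv : LocFiniteVar x) (a b : ℝ) : posVarOn x (Icc a b) ≠ ⊤ :=
  fun h => hv a b (top_le_iff.1 (h ▸ posVarOn_le_eVariationOn _))

lemma posVarOn_Icc_self (a : ℝ) : posVarOn x (Icc a a) = 0 := by
  refine le_antisymm (iSup_le fun p => ?_) zero_le
  have : ∀ i, p.2.1 i = a := fun i => by
    have := p.2.2.2 i
    simp only [Icc_self, Set.mem_singleton_iff] at this
    exact this
  refine le_of_eq (Finset.sum_eq_zero fun i _ => ?_)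
  rw [this, this]
  simp

lemma posVar_append (h0a : (0:ℝ) ≤ a) (hab : a ≤ b) :
    posVarOn x (Icc 0 a) + ENNReal.ofReal (x b - x a) ≤ posVarOn x (Icc 0 b) := by
  have hne : Nonempty (ℕ × { u : ℕ → ℝ // Monotone u ∧ ∀ i, u i ∈ Icc (0:ℝ) a }) :=
    ⟨⟨0, ⟨fun _ => 0, monotone_const, fun _ => ⟨le_refl _, h0a⟩⟩⟩⟩
  rw [posVarOn, ENNReal.iSup_add]
  refine iSup_le fun p => ?_
  obtain ⟨n, u, hu, hmem⟩ := p
  set u' : ℕ → ℝ := fun i => if i ≤ n then u i else if i ≤ n + 1 then a else b with hu'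
  have hu'mono : Monotone u' := by
    apply monotone_nat_of_le_succ
    intro i
    by_cases h1 : i + 1 ≤ n
    · simp only [hu', if_pos h1, if_pos (by omega : i ≤ n)]
      exact hu (Nat.le_succ i)
    · by_cases h2 : i ≤ n
      · have : i = n := by omega
        simp only [hu', if_pos h2, if_neg h1, if_pos (by omega : i + 1 ≤ n + 1)]
        exact (hmem i).2
      · by_cases h3 : i ≤ n + 1
        · simp only [hu', if_neg h2, if_neg h1, if_pos h3,
            if_neg (by omega : ¬ i + 1 ≤ n + 1)]
          exact hab
        · simp only [hu', if_neg h2, if_neg h1, if_neg h3,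
            if_neg (by omega : ¬ i + 1 ≤ n + 1), le_refl]
  have hu'mem : ∀ i, u' i ∈ Icc (0:ℝ) b := by
    intro i
    by_cases h2 : i ≤ n
    · simp only [hu', if_pos h2]
      exact ⟨(hmem i).1, (hmem i).2.trans hab⟩
    · by_cases h3 : i ≤ n + 1
      · simp only [hu', if_neg h2, if_pos h3]
        exact ⟨h0a, hab⟩
      · simp only [hu', if_neg h2, if_neg h3]
        exact ⟨h0a.trans hab, le_refl _⟩
  refine le_trans ?_ (le_iSup _ (⟨n + 2, ⟨u', hu'mono, hu'mem⟩⟩ :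
    ℕ × { u : ℕ → ℝ // Monotone u ∧ ∀ i, u i ∈ Icc (0:ℝ) b }))
  simp only
  rw [Finset.sum_range_succ, Finset.sum_range_succ]
  have he1 : ∀ i, i < n → u' (i+1) = u (i+1) ∧ u' i = u i := by
    intro i hi
    constructor <;> simp [hu', if_pos, Nat.succ_le_of_lt hi, hi.le, le_of_lt, (by omega : i ≤ n),
      (by omega : i + 1 ≤ n)]
  have hsum : ∑ i ∈ Finset.range n, ENNReal.ofReal (x (u' (i + 1)) - x (u' i))
      = ∑ i ∈ Finset.range n, ENNReal.ofReal (x (u (i + 1)) - x (u i)) := by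
    refine Finset.sum_congr rfl fun i hi => ?_
    rw [(he1 i (Finset.mem_range.1 hi)).1, (he1 i (Finset.mem_range.1 hi)).2]
  rw [hsum]
  have hun : u' (n+1) = a := by simp [hu', (by omega : ¬ n + 1 ≤ n)]
  have hun2 : u' (n+2) = b := by simp [hu', (by omega : ¬ n + 2 ≤ n), (by omega : ¬ n + 2 ≤ n + 1)]
  rw [hun, hun2]
  rw [add_assoc]
  refine add_le_add_right ?_ _
  exact le_add_self
end posvar


section pfacts
variable {x : ℝ → ℝ} {P : StieltjesFunction ℝ}

lemma P_diff (hv : LocFiniteVar x) (hP : ∀ b : ℝ, P b = (posVarOn x (Icc 0 b)).toReal)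
    {a b : ℝ} (h0a : (0:ℝ) ≤ a) (hab : a ≤ b) : x b - x a ≤ P b - P a := by
  by_cases hΔ : x b - x a ≤ 0
  · have := P.mono hab
    linarith
  push_neg at hΔ
  have happ := posVar_append (x := x) h0a hab
  have hle : (posVarOn x (Icc 0 a) + ENNReal.ofReal (x b - x a)).toReal
      ≤ (posVarOn x (Icc 0 b)).toReal :=
    ENNReal.toReal_mono (posVarOn_Icc_ne_top hv 0 b) happ
  rw [ENNReal.toReal_add (posVarOn_Icc_ne_top hv 0 a) ENNReal.ofReal_ne_top,
    ENNReal.toReal_ofReal hΔ.le] at hle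
  rw [hP a, hP b]
  linarith

end pfacts


section ball
variable {x : ℝ → ℝ} {P : StieltjesFunction ℝ} {t z c : ℝ} {m : ℕ}

lemma mul_le_map_ball (hx : Continuous x) (hv : LocFiniteVar x)
    (hP : ∀ b : ℝ, P b = (posVarOn x (Icc 0 b)).toReal)
    (ht : (0:ℝ) ≤ t) (hc : 0 < c)
    (hm : (m : ℕ∞) ≤ upcross x 0 t z c) :
    (m : ℝ≥0∞) * ENNReal.ofReal c
      ≤ (P.measure.restrict (Ioc 0 t)).map x (Metric.closedBall z (c/2)) := by
  obtain ⟨a, b, h1, h2⟩ := upcross_ext hx ht hm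
  -- chain : i < j < m → b i ≤ a j
  have hchain : ∀ j, j < m → ∀ i, i < j → b i ≤ a j := by
    intro j
    induction j with
    | zero => intro _ i hi; omega
    | succ k ih =>
      intro hk i hi
      rcases Nat.lt_succ_iff_lt_or_eq.1 hi with hik | rfl
      · exact ((ih (by omega) i hik).trans (h1 k (by omega)).2.1).trans (h2 k hk)
      · exact h2 i hk
  set p : ℕ → ℝ := fun j =>
    if h : j < m then sSup {r | r ∈ Icc (a j) (b j) ∧ x r ≤ z - c/2} else 0 with hpdef
  have hfacts : ∀ j, j < m → a j ≤ p j ∧ p j ≤ b j ∧ x (p j) ≤ z - c/2 ∧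
      (∀ r, p j < r → r ≤ b j → z - c/2 < x r) := by
    intro j hj
    obtain ⟨ha0, hab', hbt, hxa, hxb, hmin⟩ := h1 j hj
    set S := {r | r ∈ Icc (a j) (b j) ∧ x r ≤ z - c/2} with hS
    have hmemS : a j ∈ S := ⟨⟨le_refl _, hab'⟩, hxa⟩
    have hSne : S.Nonempty := ⟨a j, hmemS⟩
    have hSbdd : BddAbove S := ⟨b j, fun r hr => hr.1.2⟩
    have hpj : p j = sSup S := by rw [hpdef]; exact dif_pos hj
    have hpa : a j ≤ p j := hpj ▸ le_csSup hSbdd hmemS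
    have hpb : p j ≤ b j := hpj ▸ csSup_le hSne fun r hr => hr.1.2
    have hxp : x (p j) ≤ z - c/2 := by
      by_contra hcon
      push_neg at hcon
      have hopen : {r : ℝ | z - c/2 < x r} ∈ nhds (p j) :=
        (isOpen_lt continuous_const hx).mem_nhds hcon
      obtain ⟨δ, hδ, hball⟩ := Metric.mem_nhds_iff.1 hopen
      obtain ⟨r, hrS, hrlt⟩ := exists_lt_of_lt_csSup hSne (by
        rw [← hpj]; linarith : p j - δ < sSup S)
      have hrle : r ≤ p j := hpj ▸ le_csSup hSbdd hrS
      have : r ∈ Metric.ball (p j) δ := by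
        rw [Metric.mem_ball, Real.dist_eq, abs_lt]
        refine ⟨by linarith, by linarith⟩
      exact absurd hrS.2 (not_le.2 (hball this))
    refine ⟨hpa, hpb, hxp, ?_⟩
    intro r hr1 hr2
    by_contra hcon
    push_neg at hcon
    have : r ∈ S := ⟨⟨hpa.trans hr1.le, hr2⟩, hcon⟩
    have : r ≤ p j := hpj ▸ le_csSup hSbdd this
    linarith
  have hxbub : ∀ j, j < m → x (b j) ≤ z + c/2 := by
    intro j hj
    obtain ⟨ha0, hab', hbt, hxa, hxb, hmin⟩ := h1 j hj
    have haltb : a j < b j := by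
      rcases lt_or_eq_of_le hab' with h | h
      · exact h
      · exfalso; rw [h] at hxa; linarith
    by_contra hcon
    push_neg at hcon
    have hopen : {r : ℝ | z + c/2 < x r} ∈ nhds (b j) :=
      (isOpen_lt continuous_const hx).mem_nhds hcon
    obtain ⟨δ, hδ, hball⟩ := Metric.mem_nhds_iff.1 hopen
    set r := max (a j) (b j - δ/2) with hr
    have hrb : r < b j := by
      rw [hr]; apply max_lt haltb; linarith
    have hra : a j ≤ r := le_max_left _ _
    have : r ∈ Metric.ball (b j) δ := by
      rw [Metric.mem_ball, Real.dist_eq, abs_lt]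
      have : b j - δ/2 ≤ r := le_max_right _ _
      constructor <;> linarith
    exact absurd (hmin r hra hrb) (not_le.2 (hball this))
  -- each Ioc maps into the ball and has measure ≥ c
  have hsub : ∀ j, j < m →
      Ioc (p j) (b j) ⊆ x ⁻¹' (Metric.closedBall z (c/2)) ∩ Ioc 0 t := by
    intro j hj r hr
    obtain ⟨hpa, hpb, hxp, hmax⟩ := hfacts j hj
    obtain ⟨ha0, hab', hbt, hxa, hxb, hmin⟩ := h1 j hj
    constructor
    · rw [Set.mem_preimage, Metric.closedBall, Set.mem_setOf_eq, Real.dist_eq, abs_le]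
      have hlow : z - c/2 < x r := hmax r hr.1 hr.2
      have hup : x r ≤ z + c/2 := by
        rcases lt_or_eq_of_le hr.2 with h | h
        · exact hmin r (hpa.trans hr.1.le) h
        · rw [h]; exact hxbub j hj
      constructor <;> linarith
    · exact ⟨lt_of_le_of_lt (ha0.trans hpa) hr.1, hr.2.trans hbt⟩
  have hmeasIoc : ∀ j, j < m → ENNReal.ofReal c ≤ P.measure (Ioc (p j) (b j)) := by
    intro j hj
    obtain ⟨hpa, hpb, hxp, _⟩ := hfacts j hj
    obtain ⟨ha0, hab', hbt, hxa, hxb, _⟩ := h1 j hj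
    rw [P.measure_Ioc]
    apply ENNReal.ofReal_le_ofReal
    have := P_diff hv hP (ha0.trans hpa) hpb
    linarith
  -- disjointness
  have hdisj : (↑(Finset.range m) : Set ℕ).PairwiseDisjoint fun j => Ioc (p j) (b j) := by
    intro i hi j hj hij
    simp only [Finset.coe_range, Set.mem_Iio] at hi hj
    rcases hij.lt_or_gt with h | h
    · apply Set.disjoint_left.2
      intro r hri hrj
      have hba : b i ≤ a j := hchain j hj i h
      have : r ≤ b i := hri.2
      have : a j ≤ p j := (hfacts j hj).1
      have : p j < r := hrj.1
      linarith
    · apply Set.disjoint_left.2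
      intro r hri hrj
      have hba : b j ≤ a i := hchain i hi j h
      have e1 : r ≤ b j := hrj.2
      have e2 : a i ≤ p i := (hfacts i hi).1
      have e3 : p i < r := hri.1
      linarith
  calc (m : ℝ≥0∞) * ENNReal.ofReal c
      = ∑ j ∈ Finset.range m, ENNReal.ofReal c := by
        rw [Finset.sum_const, Finset.card_range, nsmul_eq_mul]
    _ ≤ ∑ j ∈ Finset.range m, P.measure (Ioc (p j) (b j)) :=
        Finset.sum_le_sum fun j hj => hmeasIoc j (Finset.mem_range.1 hj)
    _ = P.measure (⋃ j ∈ Finset.range m, Ioc (p j) (b j)) :=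
        (measure_biUnion_finset hdisj fun j _ => measurableSet_Ioc).symm
    _ ≤ P.measure (x ⁻¹' (Metric.closedBall z (c/2)) ∩ Ioc 0 t) := by
        apply measure_mono
        refine Set.iUnion₂_subset fun j hj => hsub j (Finset.mem_range.1 hj)
    _ = (P.measure.restrict (Ioc 0 t)).map x (Metric.closedBall z (c/2)) := by
        rw [Measure.map_apply hx.measurable measurableSet_closedBall,
          Measure.restrict_apply (hx.measurable measurableSet_closedBall)]

end ball


section layer
variable {x : ℝ → ℝ} {t : ℝ}

lemma posVar_le_lintegral (hx : Continuous x) (ht : (0:ℝ) ≤ t) :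
    posVarOn x (Icc 0 t) ≤ ∫⁻ z, ((levelUpcross x 0 t z : ℕ∞) : ℝ≥0∞) := by
  refine iSup_le ?_
  rintro ⟨n, u, hu, hmem⟩
  set N : ℝ → ℝ≥0∞ := fun z => ∑ i ∈ Finset.range n,
    (Ioc (x (u i)) (x (u (i+1)))).indicator (fun _ => (1:ℝ≥0∞)) z with hN
  have step1 : ∑ i ∈ Finset.range n, ENNReal.ofReal (x (u (i + 1)) - x (u i))
      = ∫⁻ z, N z := by
    rw [lintegral_finset_sum _ (fun i _ => measurable_const.indicator measurableSet_Ioc)]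
    refine Finset.sum_congr rfl fun i _ => ?_
    rw [lintegral_indicator_const measurableSet_Ioc, one_mul, Real.volume_Ioc]
  rw [step1]
  refine lintegral_mono_ae ?_
  set V : Finset ℝ := (Finset.range (n+1)).image (fun i => x (u i)) with hV
  have hVol : volume (↑V : Set ℝ) = 0 := V.finite_toSet.measure_zero _
  filter_upwards [measure_eq_zero_iff_ae_notMem.mp hVol] with z hzV
  -- compute N z as a cardinality
  classical
  set I : Finset ℕ := (Finset.range n).filter (fun i => z ∈ Ioc (x (u i)) (x (u (i+1)))) with hI
  have hNz : N z = (I.card : ℝ≥0∞) := by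
    rw [hN, hI]
    simp only [Set.indicator_apply]
    exact Finset.sum_boole _ _
  rw [hNz]
  set m := I.card with hm
  rcases Nat.eq_zero_or_pos m with h0 | hpos
  · rw [h0]; simp
  have hIfacts : ∀ i ∈ I, x (u i) < z ∧ z < x (u (i+1)) := by
    intro i hi
    rw [hI, Finset.mem_filter] at hi
    refine ⟨hi.2.1, lt_of_le_of_ne hi.2.2 ?_⟩
    intro h
    apply hzV
    rw [hV]
    refine Finset.mem_image.2 ⟨i+1, ?_, h.symm⟩
    rw [Finset.mem_range]
    exact Nat.succ_lt_succ (Finset.mem_range.1 hi.1)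
  have hIne : I.Nonempty := Finset.card_pos.1 hpos
  set g : ℕ → ℝ := fun i => min (z - x (u i)) (x (u (i+1)) - z) with hg
  set c : ℝ := (I.image g).min' (hIne.image g) with hc
  have hcpos : 0 < c := by
    obtain ⟨i, hiI, hgi⟩ := Finset.mem_image.1 ((I.image g).min'_mem (hIne.image g))
    rw [hc, ← hgi, hg]
    obtain ⟨e1, e2⟩ := hIfacts i hiI
    simp only [lt_min_iff]
    constructor <;> linarith
  have hcle : ∀ i ∈ I, c ≤ z - x (u i) ∧ c ≤ x (u (i+1)) - z := by
    intro i hi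
    have := (I.image g).min'_le (g i) (Finset.mem_image_of_mem g hi)
    rw [← hc] at this
    exact ⟨this.trans (min_le_left _ _), this.trans (min_le_right _ _)⟩
  -- enumerate I
  set e := I.orderIsoOfFin (rfl : I.card = m) with he
  set a' : ℕ → ℝ := fun j => if h : j < m then u ((e ⟨j, h⟩ : ℕ)) else 0 with ha'
  set b' : ℕ → ℝ := fun j => if h : j < m then u ((e ⟨j, h⟩ : ℕ) + 1) else 0 with hb'
  have hstrict : (m : ℕ∞) ≤ upcross x 0 t z c := by
    refine upcross_ge_of_strict ht a' b' ?_ ?_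
    · intro j hj
      have hiI : ((e ⟨j, hj⟩ : ℕ)) ∈ I := (e ⟨j, hj⟩).2
      set i := ((e ⟨j, hj⟩ : ℕ)) with hi
      have hin : i < n := Finset.mem_range.1 (Finset.mem_filter.1 hiI).1
      simp only [ha', hb', dif_pos hj]
      obtain ⟨d1, d2⟩ := hcle i hiI
      refine ⟨(hmem i).1, hu (Nat.le_succ i), (hmem (i+1)).2, by linarith, by linarith⟩
    · intro j hj
      have hjm : j < m := by omega
      simp only [ha', hb', dif_pos hj, dif_pos hjm]
      have hmono : ((e ⟨j, hjm⟩ : ℕ)) < ((e ⟨j+1, hj⟩ : ℕ)) := by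
        have : (⟨j, hjm⟩ : Fin m) < ⟨j+1, hj⟩ := by
          rw [Fin.mk_lt_mk]; omega
        exact e.strictMono this
      exact hu (by omega : ((e ⟨j, hjm⟩ : ℕ)) + 1 ≤ ((e ⟨j+1, hj⟩ : ℕ)))
  have : (m : ℕ∞) ≤ levelUpcross x 0 t z := hstrict.trans (le_levelUpcross hcpos)
  calc (m : ℝ≥0∞) = ((m : ℕ∞) : ℝ≥0∞) := by rw [ENat.toENNReal_coe]
    _ ≤ _ := ENat.toENNReal_mono this

end layer


section assembly
variable {x : ℝ → ℝ} {P : StieltjesFunction ℝ} {t : ℝ}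

theorem occupation_up (hx : Continuous x) (hv : LocFiniteVar x) (ht : 0 < t)
    (g : ℝ → ℝ) (hg : Measurable g)
    (hP : ∀ b : ℝ, P b = (posVarOn x (Icc 0 b)).toReal) :
    ∫ z : ℝ, ((levelUpcross x 0 t z : ℕ∞) : ℝ≥0∞).toReal * g z
      = ∫ u in Ioc 0 t, g (x u) ∂P.measure := by
  set H : ℝ → ℝ≥0∞ := fun z => ((levelUpcross x 0 t z : ℕ∞) : ℝ≥0∞) with hH
  have hHmeas : Measurable H := measurable_H hx ht.le
  set ν : Measure ℝ := (P.measure.restrict (Ioc 0 t)).map x with hν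
  have hrestr_fin : IsFiniteMeasure (P.measure.restrict (Ioc 0 t)) := by
    constructor
    rw [Measure.restrict_apply_univ, P.measure_Ioc]
    exact ENNReal.ofReal_lt_top
  have hν_fin : IsFiniteMeasure ν := by
    constructor
    rw [hν, Measure.map_apply hx.measurable MeasurableSet.univ, Set.preimage_univ,
      Measure.restrict_apply_univ, P.measure_Ioc]
    exact ENNReal.ofReal_lt_top
  have hν_univ : ν Set.univ = posVarOn x (Icc 0 t) := by
    rw [hν, Measure.map_apply hx.measurable MeasurableSet.univ, Set.preimage_univ,
      Measure.restrict_apply_univ, P.measure_Ioc, hP, hP, posVarOn_Icc_self, ENNReal.toReal_zero,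
      sub_zero, ENNReal.ofReal_toReal (posVarOn_Icc_ne_top hv 0 t)]
  -- a.e. H ≤ rnDeriv
  have hae : ∀ᵐ z, H z ≤ ν.rnDeriv volume z := by
    filter_upwards [Besicovitch.ae_tendsto_rnDeriv ν volume] with z hz
    have key : ∀ m : ℕ, (m : ℕ∞) ≤ levelUpcross x 0 t z → (m : ℝ≥0∞) ≤ ν.rnDeriv volume z := by
      intro m hm
      obtain ⟨q, hq, hw⟩ := (levelUpcross_ge_iff hx ht.le).1 hm
      have hev : ∀ᶠ r in nhdsWithin 0 (Set.Ioi 0), (m : ℝ≥0∞)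
          ≤ ν (Metric.closedBall z r) / volume (Metric.closedBall z r) := by
        filter_upwards [Ioo_mem_nhdsGT_of_mem (⟨le_refl 0, by linarith⟩ :
          (0:ℝ) ∈ Set.Ico 0 ((q:ℝ)/4))] with r hr
        obtain ⟨hr0, hrq⟩ := hr
        have hup : (m : ℕ∞) ≤ upcross x 0 t z (2*r) :=
          upcross_of_uweak ht.le (by linarith) (by linarith) hw
        have hball := mul_le_map_ball hx hv hP ht.le (by linarith : (0:ℝ) < 2*r) hup
        rw [show (2*r)/2 = r by ring] at hball
        rw [Real.volume_closedBall]
        rw [ENNReal.le_div_iff_mul_le (Or.inl ?_) (Or.inl ENNReal.ofReal_ne_top)]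
        · exact hball
        · simp only [ne_eq, ENNReal.ofReal_eq_zero, not_le]
          linarith
      exact ge_of_tendsto hz hev
    cases hL : levelUpcross x 0 t z with
    | top =>
      by_contra hcon
      push_neg at hcon
      obtain ⟨nn, hnn⟩ := ENNReal.exists_nat_gt (hcon.trans_le le_top).ne
      exact absurd (key nn (by rw [hL]; exact le_top)) (not_le.2 hnn)
    | coe k =>
      have := key k (by rw [hL])
      rw [hH]
      simp only [hL]
      rwa [ENat.toENNReal_coe]
  -- the two measures agree
  have hkey : ∀ A : Set ℝ, MeasurableSet A → ∫⁻ z in A, H z ∂volume = ν A := by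
    have half : ∀ A : Set ℝ, MeasurableSet A → ∫⁻ z in A, H z ∂volume ≤ ν A := by
      intro A hA
      calc ∫⁻ z in A, H z ∂volume ≤ ∫⁻ z in A, ν.rnDeriv volume z ∂volume :=
            lintegral_mono_ae (ae_restrict_of_ae hae)
        _ ≤ ν A := Measure.setLIntegral_rnDeriv_le A
    have htot : ∫⁻ z, H z ∂volume = ν Set.univ := by
      refine le_antisymm ?_ ?_
      · have := half Set.univ MeasurableSet.univ
        rwa [Measure.restrict_univ] at this
      · rw [hν_univ]
        exact posVar_le_lintegral hx ht.le
    intro A hA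
    refine le_antisymm (half A hA) ?_
    have h1 : ν A + ν Aᶜ = ν Set.univ := measure_add_measure_compl hA
    have h2 : ∫⁻ z in A, H z ∂volume + ∫⁻ z in Aᶜ, H z ∂volume = ∫⁻ z, H z ∂volume :=
      lintegral_add_compl H hA
    have h3 : ν Aᶜ ≠ ⊤ := measure_ne_top ν _
    have hle : ν A + ν Aᶜ ≤ ∫⁻ z in A, H z ∂volume + ν Aᶜ := by
      calc ν A + ν Aᶜ = ∫⁻ z in A, H z ∂volume + ∫⁻ z in Aᶜ, H z ∂volume := by
            rw [h1, h2, htot]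
        _ ≤ ∫⁻ z in A, H z ∂volume + ν Aᶜ := add_le_add_right (half Aᶜ hA.compl) _
    exact (ENNReal.add_le_add_iff_right h3).1 hle
  -- conclude: ν = volume.withDensity H
  have hwd : volume.withDensity H = ν := by
    refine Measure.ext fun A hA => ?_
    rw [withDensity_apply H hA, hkey A hA]
  -- convert integrals
  have hHfin : ∀ᵐ z, H z ≠ ⊤ := by
    have : ∫⁻ z, H z ∂volume ≠ ⊤ := by
      have h5 := hkey Set.univ MeasurableSet.univ
      rw [Measure.restrict_univ] at h5
      rw [h5]
      exact measure_ne_top ν _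
    filter_upwards [ae_lt_top hHmeas this] with z hz
    exact hz.ne
  set F : ℝ → ℝ≥0 := fun z => (H z).toNNReal with hF
  have hFmeas : Measurable F := hHmeas.ennreal_toNNReal
  have hwd2 : volume.withDensity (fun z => (F z : ℝ≥0∞)) = ν := by
    rw [← hwd]
    refine withDensity_congr_ae ?_
    filter_upwards [hHfin] with z hz
    rw [hF]
    exact ENNReal.coe_toNNReal hz
  calc ∫ z : ℝ, (H z).toReal * g z ∂volume = ∫ z : ℝ, F z • g z ∂volume := by
        refine integral_congr_ae (Eventually.of_forall fun z => ?_)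
        show (H z).toReal * g z = F z • g z
        rw [NNReal.smul_def, hF]
        rfl
    _ = ∫ z, g z ∂(volume.withDensity (fun z => (F z : ℝ≥0∞))) :=
        (integral_withDensity_eq_integral_smul hFmeas g).symm
    _ = ∫ z, g z ∂ν := by rw [hwd2]
    _ = ∫ u in Ioc 0 t, g (x u) ∂P.measure := by
        rw [hν]
        exact integral_map hx.measurable.aemeasurable hg.aestronglyMeasurable

end assembly


/-- for continuous `x` of locally finite variation,
`∫_ℝ U^z g = ∫ g(x_s) (dx_s)_+` and `∫_ℝ D^z g = ∫ g(x_s) (dx_s)_-`. -/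
theorem levelCross_occupation_continuous (x : ℝ → ℝ) (hx : Continuous x)
    (hv : LocFiniteVar x) (t : ℝ) (ht : 0 < t)
    (g : ℝ → ℝ) (hg : Measurable g) (hgb : LocBounded g)
    (P N : StieltjesFunction ℝ)
    (hP : ∀ b : ℝ, P b = (posVarOn x (Icc 0 b)).toReal)
    (hN : ∀ b : ℝ, N b = (negVarOn x (Icc 0 b)).toReal) :
    (∫ z : ℝ, ((levelUpcross x 0 t z : ℝ≥0∞)).toReal * g z
        = ∫ u in Ioc 0 t, g (x u) ∂P.measure) ∧
    (∫ z : ℝ, ((levelDowncross x 0 t z : ℝ≥0∞)).toReal * g z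
        = ∫ u in Ioc 0 t, g (x u) ∂N.measure) := by

  constructor
  · exact occupation_up hx hv ht g hg hP
  · have hx' : Continuous (fun u => -x u) := hx.neg
    have hv' : LocFiniteVar (fun u => -x u) := by
      intro a b
      have hvar : eVariationOn (fun u => -x u) (Icc a b) = eVariationOn x (Icc a b) := by
        unfold eVariationOn
        simp only [edist_neg_neg]
      rw [hvar]; exact hv a b
    have hN' : ∀ b : ℝ, N b = (posVarOn (fun u => -x u) (Icc 0 b)).toReal := fun b => hN b
    have key := occupation_up hx' hv' ht (fun z => g (-z)) (hg.comp measurable_neg) hN'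
    have hld : ∀ z : ℝ, levelUpcross (fun u => -x u) 0 t (-z) = levelDowncross x 0 t z := by
      intro z
      unfold levelUpcross levelDowncross upcross
      simp only [neg_neg]
    set F : ℝ → ℝ := fun z => ((levelUpcross (fun u => -x u) 0 t z : ℕ∞) : ℝ≥0∞).toReal * g (-z)
      with hF
    have hmp : MeasurePreserving (fun z : ℝ => -z) volume volume :=
      Measure.measurePreserving_neg _
    have hme : MeasurableEmbedding (fun z : ℝ => -z) :=
      (Homeomorph.neg ℝ).measurableEmbedding
    have hchg : ∫ z, F (-z) ∂volume = ∫ z, F z ∂volume := hmp.integral_comp hme F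
    have hlhs : ∫ z : ℝ, ((levelDowncross x 0 t z : ℕ∞) : ℝ≥0∞).toReal * g z ∂volume
        = ∫ z, F (-z) ∂volume := by
      refine integral_congr_ae (Eventually.of_forall fun z => ?_)
      rw [hF]
      simp only [neg_neg, hld z]
    rw [hlhs, hchg, hF, key]
    refine integral_congr_ae (Eventually.of_forall fun u => ?_)
    simp only [neg_neg]
end
end

section
/- Let x : [0,∞) → ℝ be càdlàg with locally finite total variation, t > 0, and z ∈ ℝ. Let n^z(t) := Card{s ∈ [0,t] : x(s) = z} and r^z(t) := n^z(t) − Card(I(z) ∩ (0,t]) − Card(D(z) ∩ (0,t]). Then r^z(t) ≥ 0, and ∫_ℝ r^z(t) dz = 0 (i.e., r^z(t) = 0 for Lebesgue-a.e. z). -/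
open MeasureTheory Filter Set Function
open scoped ENNReal NNReal

noncomputable section

/-- Times at which `x` increases continuously through the level `z`. -/
def incrSet (x : ℝ → ℝ) (z : ℝ) : Set ℝ :=
  {u : ℝ | ContinuousAt x u ∧ x u = z ∧
    ∃ ε > 0, ∀ v : ℝ, |v - u| < ε → (v < u → x v < x u) ∧ (u < v → x u < x v)}

/-- Times at which `x` decreases continuously through the level `z`. -/
def decrSet (x : ℝ → ℝ) (z : ℝ) : Set ℝ :=
  {u : ℝ | ContinuousAt x u ∧ x u = z ∧
    ∃ ε > 0, ∀ v : ℝ, |v - u| < ε → (v < u → x u < x v) ∧ (u < v → x v < x u)}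


/-- The set of local max values of any real function is countable. -/
theorem countable_localMax_image (x : ℝ → ℝ) :
    Set.Countable (x '' {u | IsLocalMax x u}) := by
  have hsub : {u | IsLocalMax x u} ⊆ ⋃ n : ℕ,
      {u | ∀ v, dist v u < 1/(n+1) → x v ≤ x u} := by
    intro u hu
    have hu' : ∀ᶠ v in nhds u, x v ≤ x u := hu
    rw [Metric.eventually_nhds_iff] at hu'
    obtain ⟨ε, hε, h⟩ := hu'
    obtain ⟨n, hn⟩ := exists_nat_one_div_lt hε
    exact mem_iUnion.2 ⟨n, fun v hv => h (hv.trans hn)⟩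
  apply Set.Countable.mono (Set.image_mono hsub)
  rw [Set.image_iUnion]
  apply Set.countable_iUnion
  intro n
  set c : ℝ := 1/(2*(n+1)) with hc
  have hcpos : 0 < c := by positivity
  have hcover : x '' {u | ∀ v, dist v u < 1/(n+1) → x v ≤ x u}
      ⊆ ⋃ k : ℤ, x '' ({u | ∀ v, dist v u < 1/(n+1) → x v ≤ x u} ∩ Ico (k*c) ((k+1)*c)) := by
    rintro _ ⟨u, hu, rfl⟩
    refine mem_iUnion.2 ⟨⌊u/c⌋, mem_image_of_mem _ ⟨hu, ?_, ?_⟩⟩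
    · exact (le_div_iff₀ hcpos).1 (Int.floor_le (u/c))
    · exact (div_lt_iff₀ hcpos).1 (Int.lt_floor_add_one (u/c))
  apply Set.Countable.mono hcover
  apply Set.countable_iUnion
  intro k
  apply Set.Subsingleton.countable
  rintro _ ⟨u, ⟨hu, hu2⟩, rfl⟩ _ ⟨w, ⟨hw, hw2⟩, rfl⟩
  have hd : dist u w < 1/(n+1) := by
    rw [Real.dist_eq]
    have : |u - w| < c := by
      rw [abs_sub_lt_iff]
      constructor <;> nlinarith [hu2.1, hu2.2, hw2.1, hw2.2]
    refine this.trans ?_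
    rw [hc]
    rw [div_lt_div_iff₀ (by positivity) (by positivity)]
    nlinarith
  have h1 := hw u hd
  have h2 := hu w (by rwa [dist_comm])
  linarith

theorem countable_localMin_image (x : ℝ → ℝ) :
    Set.Countable (x '' {u | IsLocalMin x u}) := by
  have h := (countable_localMax_image (fun u => - x u)).image Neg.neg
  apply h.mono
  rintro _ ⟨u, hu, rfl⟩
  refine ⟨(fun u => - x u) u, ⟨u, ?_, rfl⟩, by simp⟩
  exact IsLocalMin.neg hu

theorem Cadlag.tendsto_leftLim {x : ℝ → ℝ} (hx : Cadlag x) (u : ℝ) :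
    Tendsto x (nhdsWithin u (Iio u)) (nhds (leftLim x u)) := by
  obtain ⟨l, hl⟩ := hx.2 u
  rwa [leftLim_eq_of_tendsto hl]

theorem Cadlag.neg {x : ℝ → ℝ} (hx : Cadlag x) : Cadlag (fun u => - x u) := by
  constructor
  · exact fun u => (hx.1 u).neg
  · exact fun u => ⟨- leftLim x u, (hx.tendsto_leftLim u).neg⟩

theorem Cadlag.leftLim_neg {x : ℝ → ℝ} (hx : Cadlag x) (u : ℝ) :
    leftLim (fun v => - x v) u = - leftLim x u :=
  leftLim_eq_of_tendsto (hx.tendsto_leftLim u).neg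

theorem cross_up (x : ℝ → ℝ) (hx : Cadlag x) {α β z : ℝ} (hαβ : α < β)
    (hα : x α < z) (hβ : z < x β) (hno : ∀ r, r ∈ Icc α β → x r ≠ z) :
    ∃ p, p ∈ Ioc α β ∧ ¬ContinuousAt x p ∧ leftLim x p ≤ z ∧ z < x p := by
  set S := {r | r ∈ Icc α β ∧ z < x r} with hS
  have hSne : β ∈ S := ⟨⟨hαβ.le, le_rfl⟩, hβ⟩
  have hbdd : BddBelow S := ⟨α, fun r hr => hr.1.1⟩
  set p := sInf S with hp
  have hαlep : α ≤ p := le_csInf ⟨β, hSne⟩ (fun r hr => hr.1.1)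
  have hpβ : p ≤ β := csInf_le hbdd hSne
  have hxp : z ≤ x p := by
    by_contra hlt
    push_neg at hlt
    have hev : ∀ᶠ r in nhdsWithin p (Ici p), x r < z :=
      (hx.1 p).eventually (Filter.Tendsto.eventually_lt_const hlt tendsto_id) |>.mono (fun r hr => hr)
    rw [eventually_iff, mem_nhdsGE_iff_exists_Ico_subset] at hev
    obtain ⟨u', hu', hsub⟩ := hev
    have : u' ≤ p := by
      apply le_csInf ⟨β, hSne⟩
      intro r hr
      by_contra hru
      push_neg at hru
      have hpr : p ≤ r := csInf_le hbdd hr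
      have : x r < z := hsub ⟨hpr, hru⟩
      exact absurd hr.2 (not_lt.2 this.le)
    exact absurd hu' (not_lt.2 this)
  have hppIcc : p ∈ Icc α β := ⟨hαlep, hpβ⟩
  have hxp' : z < x p := lt_of_le_of_ne hxp (Ne.symm (hno p hppIcc))
  have hαp : α < p := by
    rcases eq_or_lt_of_le hαlep with h | h
    · exfalso; rw [← h] at hxp'; linarith
    · exact h
  have hll : leftLim x p ≤ z := by
    apply le_of_tendsto (hx.tendsto_leftLim p)
    filter_upwards [Ioo_mem_nhdsLT_of_mem (⟨hαp, le_rfl⟩ : p ∈ Ioc α p)] with r hr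
    by_contra hrz
    push_neg at hrz
    have hrS : r ∈ S := ⟨⟨hr.1.le, hr.2.le.trans hpβ⟩, hrz⟩
    exact absurd (csInf_le hbdd hrS) (not_le.2 hr.2)
  refine ⟨p, ⟨hαp, hpβ⟩, ?_, hll, hxp'⟩
  intro hc
  have : leftLim x p = x p :=
    leftLim_eq_of_tendsto (hc.tendsto.mono_left nhdsWithin_le_nhds)
  rw [this] at hll
  linarith

theorem cross_down (x : ℝ → ℝ) (hx : Cadlag x) {α β z : ℝ} (hαβ : α < β)
    (hα : z < x α) (hβ : x β < z) (hno : ∀ r, r ∈ Icc α β → x r ≠ z) :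
    ∃ p, p ∈ Ioc α β ∧ ¬ContinuousAt x p ∧ x p < z ∧ z ≤ leftLim x p := by
  obtain ⟨p, hpmem, hpdisc, h1, h2⟩ := cross_up (fun u => - x u) hx.neg (z := -z) hαβ
    (by simpa using hα) (by simpa using hβ)
    (fun r hr => by simpa using (hno r hr))
  rw [hx.leftLim_neg] at h1
  refine ⟨p, hpmem, ?_, by linarith [h2], by linarith [h1]⟩
  intro hc
  exact hpdisc hc.neg

theorem mono_jump_sum (p : ℝ → ℝ) (hp : Monotone p) {a : ℝ} (F : Finset ℝ) :
    ∀ c : ℝ, a < c → (∀ v ∈ F, a < v ∧ v < c) →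
    ∑ v ∈ F, (p v - leftLim p v) ≤ leftLim p c - p a := by
  induction F using Finset.induction_on_max with
  | empty =>
    intro c hac _
    simp only [Finset.sum_empty]
    have := hp.le_leftLim hac
    linarith
  | insert m F hlt IH =>
    intro c hac hF
    have hm := hF m (Finset.mem_insert_self m F)
    have hmF : m ∉ F := fun h => lt_irrefl m (hlt m h)
    rw [Finset.sum_insert hmF]
    have h1 : ∑ v ∈ F, (p v - leftLim p v) ≤ leftLim p m - p a :=
      IH m hm.1 (fun v hv => ⟨(hF v (Finset.mem_insert_of_mem hv)).1, hlt v hv⟩)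
    have h2 : p m ≤ leftLim p c := hp.le_leftLim hm.2
    linarith

theorem exists_mono_decomp (x : ℝ → ℝ) (hv : LocFiniteVar x) :
    ∃ p q : ℝ → ℝ, Monotone p ∧ Monotone q ∧ ∀ u, x u = p u - q u := by
  have hlbv : LocallyBoundedVariationOn x univ := by
    intro a b _ _
    rw [BoundedVariationOn, univ_inter]
    exact hv a b
  obtain ⟨p, q, hp, hq, hpq⟩ := hlbv.exists_monotoneOn_sub_monotoneOn
  exact ⟨p, q, monotoneOn_univ.1 hp, monotoneOn_univ.1 hq,
    fun u => by rw [hpq]; rfl⟩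

theorem discont_countable (x : ℝ → ℝ) (hv : LocFiniteVar x) :
    Set.Countable {u : ℝ | ¬ContinuousAt x u} := by
  obtain ⟨p, q, hp, hq, hpq⟩ := exists_mono_decomp x hv
  apply (hp.countable_not_continuousAt.union hq.countable_not_continuousAt).mono
  intro u hu
  by_contra hcon
  simp only [mem_union, mem_setOf_eq, not_or, not_not] at hcon
  apply hu
  have : x = fun v => p v - q v := funext hpq
  rw [this]
  exact hcon.1.sub hcon.2

theorem jump_tsum_ne_top (x : ℝ → ℝ) (hv : LocFiniteVar x) {a b : ℝ} (hab : a ≤ b)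
    (Jb : Set ℝ) (hJb : Jb ⊆ Icc a b) :
    ∑' (v : ↥Jb), ENNReal.ofReal |x v.1 - leftLim x v.1| ≠ ⊤ := by
  obtain ⟨p, q, hp, hq, hpq⟩ := exists_mono_decomp x hv
  have hxll : ∀ u : ℝ, leftLim x u = leftLim p u - leftLim q u := by
    intro u
    have : Tendsto x (nhdsWithin u (Iio u)) (nhds (leftLim p u - leftLim q u)) := by
      have := (hp.tendsto_leftLim u).sub (hq.tendsto_leftLim u)
      apply this.congr
      intro v; rw [hpq v]
    exact leftLim_eq_of_tendsto this
  set C : ℝ := (leftLim p (b+1) - p (a-1)) + (leftLim q (b+1) - q (a-1)) with hC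
  have key : ∀ s : Finset ↥Jb,
      ∑ v ∈ s, ENNReal.ofReal |x v.1 - leftLim x v.1| ≤ ENNReal.ofReal C := by
    intro s
    have hterm : ∀ v : ↥Jb, |x v.1 - leftLim x v.1|
        ≤ (p v.1 - leftLim p v.1) + (q v.1 - leftLim q v.1) := by
      intro v
      rw [hpq v.1, hxll v.1]
      have h1 : leftLim p v.1 ≤ p v.1 := hp.leftLim_le le_rfl
      have h2 : leftLim q v.1 ≤ q v.1 := hq.leftLim_le le_rfl
      rw [abs_le]
      constructor <;> linarith
    set F : Finset ℝ := s.image Subtype.val with hF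
    have hFmem : ∀ v ∈ F, (a-1) < v ∧ v < b + 1 := by
      intro v hv
      rw [hF, Finset.mem_image] at hv
      obtain ⟨w, _, rfl⟩ := hv
      have := hJb w.2
      constructor <;> [linarith [this.1]; linarith [this.2]]
    have hsump := mono_jump_sum p hp F (b+1) (by linarith) hFmem
    have hsumq := mono_jump_sum q hq F (b+1) (by linarith) hFmem
    calc ∑ v ∈ s, ENNReal.ofReal |x v.1 - leftLim x v.1|
        ≤ ∑ v ∈ s, ENNReal.ofReal ((p v.1 - leftLim p v.1) + (q v.1 - leftLim q v.1)) := by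
          apply Finset.sum_le_sum
          intro v _
          exact ENNReal.ofReal_le_ofReal (hterm v)
      _ = ENNReal.ofReal (∑ v ∈ s, ((p v.1 - leftLim p v.1) + (q v.1 - leftLim q v.1))) := by
          rw [ENNReal.ofReal_sum_of_nonneg]
          intro v _
          have h1 : leftLim p v.1 ≤ p v.1 := hp.leftLim_le le_rfl
          have h2 : leftLim q v.1 ≤ q v.1 := hq.leftLim_le le_rfl
          linarith
      _ ≤ ENNReal.ofReal C := by
          apply ENNReal.ofReal_le_ofReal
          have hsum_eq : ∑ v ∈ s, ((p v.1 - leftLim p v.1) + (q v.1 - leftLim q v.1))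
              = ∑ v ∈ F, ((p v - leftLim p v) + (q v - leftLim q v)) := by
            rw [hF, Finset.sum_image]
            intro w _ w' _ h
            exact Subtype.ext h
          rw [hsum_eq, Finset.sum_add_distrib, hC]
          exact add_le_add hsump hsumq
  have : ∑' (v : ↥Jb), ENNReal.ofReal |x v.1 - leftLim x v.1| ≤ ENNReal.ofReal C := by
    rw [ENNReal.tsum_eq_iSup_sum]
    exact iSup_le key
  exact ne_top_of_le_ne_top ENNReal.ofReal_ne_top this

/-- separation of a finite set of reals -/
theorem finset_separation (F : Finset ℝ) :
    ∃ δ > (0:ℝ), ∀ p ∈ F, ∀ q ∈ F, p ≠ q → δ ≤ |p - q| := by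
  classical
  set D : Finset ℝ := ((F ×ˢ F).filter (fun pq => pq.1 ≠ pq.2)).image
    (fun pq => |pq.1 - pq.2|) with hD
  rcases D.eq_empty_or_nonempty with h | h
  · refine ⟨1, one_pos, fun p hp q hq hpq => ?_⟩
    exfalso
    have : |p - q| ∈ D := by
      rw [hD, Finset.mem_image]
      exact ⟨(p, q), Finset.mem_filter.2 ⟨Finset.mem_product.2 ⟨hp, hq⟩, hpq⟩, rfl⟩
    rw [h] at this; exact absurd this (Finset.notMem_empty _)
  · refine ⟨D.min' h, ?_, fun p hp q hq hpq => ?_⟩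
    · obtain ⟨pq, hpq, heq⟩ := Finset.mem_image.1 (D.min'_mem h)
      rw [Finset.mem_filter] at hpq
      exact lt_of_lt_of_eq (abs_pos.2 (sub_ne_zero.2 hpq.2)) heq
    · apply D.min'_le
      rw [hD, Finset.mem_image]
      exact ⟨(p, q), Finset.mem_filter.2 ⟨Finset.mem_product.2 ⟨hp, hq⟩, hpq⟩, rfl⟩

section partition
variable (x : ℝ → ℝ) (a b : ℝ)

/-- partition point -/
def pt (k i : ℕ) : ℝ := a + i * ((b - a) / k)

def cellInf (k i : ℕ) : ℝ := sInf (x '' Icc (pt a b k i) (pt a b k (i+1)))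
def cellSup (k i : ℕ) : ℝ := sSup (x '' Icc (pt a b k i) (pt a b k (i+1)))

def Nk (k : ℕ) (z : ℝ) : ℝ≥0∞ :=
  ∑ i ∈ Finset.range k, (Icc (cellInf x a b k i) (cellSup x a b k i)).indicator
    (fun _ => (1:ℝ≥0∞)) z

end partition

theorem infinite_level_null (x : ℝ → ℝ) (hv : LocFiniteVar x) {a b : ℝ} (hab : a < b) :
    ∀ᵐ z : ℝ, ¬ ({v : ℝ | v ∈ Icc a b ∧ x v = z}.Infinite) := by
  -- basic facts
  have hmeas : ∀ k, Measurable (Nk x a b k) := by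
    intro k
    apply Finset.measurable_sum
    intro i _
    exact Measurable.indicator measurable_const measurableSet_Icc
  have hpt_mono : ∀ k : ℕ, 1 ≤ k → ∀ i j : ℕ, i ≤ j → pt a b k i ≤ pt a b k j := by
    intro k hk i j hij
    unfold pt
    have hw : 0 ≤ (b - a) / k := div_nonneg (by linarith) (Nat.cast_nonneg k)
    have : (i:ℝ) ≤ j := by exact_mod_cast hij
    nlinarith
  have hpt0 : ∀ k, pt a b k 0 = a := by intro k; simp [pt]
  have hptk : ∀ k : ℕ, 1 ≤ k → pt a b k k = b := by
    intro k hk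
    have hk0 : (k:ℝ) ≠ 0 := Nat.cast_ne_zero.2 (by omega)
    unfold pt
    rw [mul_div_cancel₀ _ hk0]
    ring
  have hpt_ge : ∀ k : ℕ, 1 ≤ k → ∀ i : ℕ, a ≤ pt a b k i := by
    intro k hk i
    have := hpt_mono k hk 0 i (Nat.zero_le _)
    rwa [hpt0] at this
  have hpt_le : ∀ k : ℕ, 1 ≤ k → ∀ i : ℕ, i ≤ k → pt a b k i ≤ b := by
    intro k hk i hi
    have := hpt_mono k hk i k hi
    rwa [hptk k hk] at this
  have hsub : ∀ k : ℕ, 1 ≤ k → ∀ i : ℕ, i < k →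
      Icc (pt a b k i) (pt a b k (i+1)) ⊆ Icc a b := by
    intro k hk i hi
    exact Icc_subset_Icc (hpt_ge k hk i) (hpt_le k hk (i+1) hi)
  -- each subinterval has finite variation and bounded image
  have hvar_ne : ∀ c d : ℝ, eVariationOn x (Icc c d) ≠ ⊤ := fun c d => hv c d
  have hdist : ∀ c d : ℝ, ∀ v ∈ Icc c d, ∀ w ∈ Icc c d,
      dist (x v) (x w) ≤ (eVariationOn x (Icc c d)).toReal := by
    intro c d v hvm w hwm
    have h1 : edist (x v) (x w) ≤ eVariationOn x (Icc c d) := eVariationOn.edist_le x hvm hwm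
    have h2 : edist (x v) (x w) ≠ ⊤ := edist_ne_top _ _
    rw [edist_dist] at h1
    calc dist (x v) (x w) = (ENNReal.ofReal (dist (x v) (x w))).toReal := by
          rw [ENNReal.toReal_ofReal dist_nonneg]
      _ ≤ (eVariationOn x (Icc c d)).toReal := ENNReal.toReal_mono (hvar_ne c d) h1
  -- cell bounds
  have hcell : ∀ k : ℕ, 1 ≤ k → ∀ i : ℕ,
      ENNReal.ofReal (cellSup x a b k i - cellInf x a b k i)
        ≤ 2 * eVariationOn x (Icc (pt a b k i) (pt a b k (i+1))) := by
    intro k hk i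
    set c := pt a b k i
    set d := pt a b k (i+1)
    have hcd : c ≤ d := hpt_mono k hk i (i+1) (Nat.le_succ _)
    set C := (eVariationOn x (Icc c d)).toReal with hC
    have hCnn : 0 ≤ C := ENNReal.toReal_nonneg
    have hne : (x '' Icc c d).Nonempty := ⟨x c, mem_image_of_mem x (left_mem_Icc.2 hcd)⟩
    have hub : ∀ y ∈ x '' Icc c d, y ≤ x c + C := by
      rintro _ ⟨v, hvm, rfl⟩
      have := hdist c d v hvm c (left_mem_Icc.2 hcd)
      rw [Real.dist_eq, abs_le] at this
      linarith [this.1]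
    have hlb : ∀ y ∈ x '' Icc c d, x c - C ≤ y := by
      rintro _ ⟨v, hvm, rfl⟩
      have := hdist c d v hvm c (left_mem_Icc.2 hcd)
      rw [Real.dist_eq, abs_le] at this
      linarith [this.2]
    have h1 : cellSup x a b k i ≤ x c + C := csSup_le hne hub
    have h2 : x c - C ≤ cellInf x a b k i := le_csInf hne hlb
    calc ENNReal.ofReal (cellSup x a b k i - cellInf x a b k i)
        ≤ ENNReal.ofReal (2 * C) := ENNReal.ofReal_le_ofReal (by linarith)
      _ = 2 * ENNReal.ofReal C := by
          rw [ENNReal.ofReal_mul (by norm_num : (0:ℝ) ≤ 2)]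
          norm_num
      _ = 2 * eVariationOn x (Icc c d) := by
          rw [hC, ENNReal.ofReal_toReal (hvar_ne c d)]
  -- telescoping variation sum
  have htel : ∀ k : ℕ, 1 ≤ k →
      (∑ i ∈ Finset.range k, eVariationOn x (Icc (pt a b k i) (pt a b k (i+1))))
        ≤ eVariationOn x (Icc a b) := by
    intro k hk
    have key : ∀ j : ℕ, j ≤ k →
        (∑ i ∈ Finset.range j, eVariationOn x (Icc (pt a b k i) (pt a b k (i+1))))
          ≤ eVariationOn x (Icc a (pt a b k j)) := by
      intro j
      induction j with
      | zero => intro _; simp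
      | succ j IH =>
        intro hjk
        rw [Finset.sum_range_succ]
        have h1 := IH (Nat.le_of_succ_le hjk)
        have haj : a ≤ pt a b k j := hpt_ge k hk j
        have hjj : pt a b k j ≤ pt a b k (j+1) := hpt_mono k hk j (j+1) (Nat.le_succ _)
        have := eVariationOn.Icc_add_Icc x (s := univ) haj hjj (mem_univ _)
        simp only [univ_inter] at this
        calc _ ≤ eVariationOn x (Icc a (pt a b k j))
              + eVariationOn x (Icc (pt a b k j) (pt a b k (j+1))) := add_le_add h1 le_rfl
          _ = eVariationOn x (Icc a (pt a b k (j+1))) := this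
    have := key k le_rfl
    rwa [hptk k hk] at this
  -- integral bound
  have hint : ∀ k : ℕ, 1 ≤ k → ∫⁻ z, Nk x a b k z ≤ 2 * eVariationOn x (Icc a b) := by
    intro k hk
    rw [show (fun z => Nk x a b k z) = Nk x a b k from rfl]
    unfold Nk
    rw [lintegral_finset_sum]
    swap
    · intro i _; exact Measurable.indicator measurable_const measurableSet_Icc
    calc ∑ i ∈ Finset.range k, ∫⁻ z, (Icc (cellInf x a b k i) (cellSup x a b k i)).indicator
          (fun _ => (1:ℝ≥0∞)) z
        = ∑ i ∈ Finset.range k, volume (Icc (cellInf x a b k i) (cellSup x a b k i)) := by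
          apply Finset.sum_congr rfl
          intro i _
          rw [lintegral_indicator_const measurableSet_Icc, one_mul]
      _ ≤ ∑ i ∈ Finset.range k, 2 * eVariationOn x (Icc (pt a b k i) (pt a b k (i+1))) := by
          apply Finset.sum_le_sum
          intro i hi
          rw [Real.volume_Icc]
          exact hcell k hk i
      _ = 2 * ∑ i ∈ Finset.range k, eVariationOn x (Icc (pt a b k i) (pt a b k (i+1))) := by
          rw [Finset.mul_sum]
      _ ≤ 2 * eVariationOn x (Icc a b) := by
          apply mul_le_mul_right (htel k hk)
  -- index assignment
  have hwidth : ∀ k : ℕ, ∀ i : ℕ, pt a b k (i+1) - pt a b k i = (b-a)/k := by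
    intro k i
    unfold pt
    push_cast
    ring
  have hidx : ∀ k : ℕ, 1 ≤ k → ∀ v ∈ Icc a b,
      min (⌊(v-a)/((b-a)/k)⌋₊) (k-1) < k ∧
      v ∈ Icc (pt a b k (min (⌊(v-a)/((b-a)/k)⌋₊) (k-1)))
              (pt a b k (min (⌊(v-a)/((b-a)/k)⌋₊) (k-1) + 1)) := by
    intro k hk v hvm
    have hkpos : (0:ℝ) < k := by
      have : (1:ℝ) ≤ k := by exact_mod_cast hk
      linarith
    set w : ℝ := (b-a)/k with hwdef
    have hwpos : 0 < w := div_pos (by linarith) hkpos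
    set n : ℕ := ⌊(v-a)/w⌋₊ with hn
    set i : ℕ := min n (k-1) with hi
    have hik : i < k := by omega
    refine ⟨hik, ?_, ?_⟩
    · -- pt i ≤ v
      have h1 : (i:ℝ) ≤ n := by exact_mod_cast min_le_left n (k-1)
      have h2 : (n:ℝ) ≤ (v-a)/w := Nat.floor_le (div_nonneg (by linarith [hvm.1]) hwpos.le)
      have h3 : (n:ℝ) * w ≤ v - a := by
        calc (n:ℝ) * w ≤ ((v-a)/w) * w := by nlinarith
          _ = v - a := div_mul_cancel₀ _ hwpos.ne'
      show a + (i:ℝ) * w ≤ v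
      nlinarith
    · -- v ≤ pt (i+1)
      rcases le_or_gt n (k-1) with hcase | hcase
      · have hieq : i = n := min_eq_left hcase
        have h2 : (v-a)/w < n + 1 := Nat.lt_floor_add_one _
        have h3 : v - a < ((n:ℝ)+1) * w := by
          calc v - a = ((v-a)/w) * w := (div_mul_cancel₀ _ hwpos.ne').symm
            _ < ((n:ℝ)+1) * w := by nlinarith
        have hpti1 : pt a b k (i+1) = a + ((i:ℝ)+1)*w := by
          unfold pt; push_cast; ring
        rw [hpti1, hieq]
        linarith
      · have hieq : i = k-1 := min_eq_right (by omega)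
        have : i + 1 = k := by omega
        rw [this]
        show v ≤ pt a b k k
        rw [hptk k hk]
        exact hvm.2
  -- bounded cells : z in cell interval
  have hmemcell : ∀ k : ℕ, 1 ≤ k → ∀ i : ℕ, ∀ v ∈ Icc (pt a b k i) (pt a b k (i+1)),
      x v ∈ Icc (cellInf x a b k i) (cellSup x a b k i) := by
    intro k hk i v hvm
    set c := pt a b k i
    set d := pt a b k (i+1)
    have hcd : c ≤ d := hpt_mono k hk i (i+1) (Nat.le_succ _)
    set C := (eVariationOn x (Icc c d)).toReal
    have hbddb : BddBelow (x '' Icc c d) := by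
      refine ⟨x c - C, ?_⟩
      rintro _ ⟨v', hv'm, rfl⟩
      have := hdist c d v' hv'm c (left_mem_Icc.2 hcd)
      rw [Real.dist_eq, abs_le] at this
      linarith [this.2]
    have hbdda : BddAbove (x '' Icc c d) := by
      refine ⟨x c + C, ?_⟩
      rintro _ ⟨v', hv'm, rfl⟩
      have := hdist c d v' hv'm c (left_mem_Icc.2 hcd)
      rw [Real.dist_eq, abs_le] at this
      linarith [this.1]
    exact ⟨csInf_le hbddb (mem_image_of_mem x hvm), le_csSup hbdda (mem_image_of_mem x hvm)⟩
  -- liminf is infinite on infinite level sets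
  have hpointwise : ∀ z : ℝ, ({v : ℝ | v ∈ Icc a b ∧ x v = z}.Infinite) →
      Filter.liminf (fun k => Nk x a b k z) Filter.atTop = ⊤ := by
    intro z hinf
    by_contra hne
    obtain ⟨m, hm⟩ := ENNReal.exists_nat_gt hne
    have : (m:ℝ≥0∞) ≤ Filter.liminf (fun k => Nk x a b k z) Filter.atTop := by
      apply Filter.le_liminf_of_le (by isBoundedDefault)
      obtain ⟨F, hFsub, hFcard⟩ := hinf.exists_subset_card_eq m
      obtain ⟨δ, hδpos, hδ⟩ := finset_separation F
      obtain ⟨K₀, hK₀⟩ := exists_nat_gt ((b-a)/δ)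
      filter_upwards [Filter.eventually_ge_atTop (K₀+1)] with k hkK
      have hk : 1 ≤ k := by omega
      have hkpos : (0:ℝ) < k := by
        have : (1:ℝ) ≤ k := by exact_mod_cast hk
        linarith
      have hmesh : (b-a)/k < δ := by
        rw [div_lt_iff₀ hkpos]
        have h1 : (b-a)/δ < K₀ + 1 := by
          have : (K₀:ℝ) ≤ K₀ + 1 := by linarith
          linarith
        have h2 : (K₀:ℝ)+1 ≤ k := by exact_mod_cast hkK
        rw [div_lt_iff₀ hδpos] at h1
        nlinarith
      set φ : ℝ → ℕ := fun v => min (⌊(v-a)/((b-a)/k)⌋₊) (k-1) with hφ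
      set G : Finset ℕ := F.image φ with hG
      have hinj : Set.InjOn φ ↑F := by
        intro v hv v' hv' heq
        by_contra hne'
        have hvS := hFsub hv
        have hv'S := hFsub hv'
        have h1 : v ∈ Icc (pt a b k (φ v)) (pt a b k (φ v + 1)) := (hidx k hk v hvS.1).2
        have h2 : v' ∈ Icc (pt a b k (φ v')) (pt a b k (φ v' + 1)) := (hidx k hk v' hv'S.1).2
        rw [heq] at h1
        have hd : |v - v'| ≤ (b-a)/k := by
          rw [abs_sub_le_iff]
          have hw := hwidth k (φ v')
          constructor <;> [linarith [h1.1, h1.2, h2.1, h2.2]; linarith [h1.1, h1.2, h2.1, h2.2]]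
        have := hδ v hv v' hv' hne'
        linarith
      have hGcard : G.card = m := by
        rw [hG, Finset.card_image_of_injOn hinj, hFcard]
      have hGsub : G ⊆ Finset.range k := by
        intro i hi
        rw [hG, Finset.mem_image] at hi
        obtain ⟨v, hv, rfl⟩ := hi
        exact Finset.mem_range.2 (hidx k hk v (hFsub hv).1).1
      have hGone : ∀ i ∈ G, (Icc (cellInf x a b k i) (cellSup x a b k i)).indicator
          (fun _ => (1:ℝ≥0∞)) z = 1 := by
        intro i hi
        rw [hG, Finset.mem_image] at hi
        obtain ⟨v, hv, rfl⟩ := hi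
        have hvS := hFsub hv
        have hmem := hmemcell k hk (φ v) v ((hidx k hk v hvS.1).2 :
          v ∈ Icc (pt a b k (φ v)) (pt a b k (φ v + 1)))
        rw [hvS.2] at hmem
        exact Set.indicator_of_mem hmem _
      calc (m:ℝ≥0∞) = ∑ i ∈ G, (Icc (cellInf x a b k i) (cellSup x a b k i)).indicator
            (fun _ => (1:ℝ≥0∞)) z := by
            rw [Finset.sum_congr rfl hGone]
            simp [hGcard]
        _ ≤ Nk x a b k z := by
            unfold Nk
            exact Finset.sum_le_sum_of_subset hGsub
    exact absurd (lt_of_le_of_lt this hm) (lt_irrefl _)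
  -- measure-theoretic conclusion
  have hint_liminf : ∫⁻ z, Filter.liminf (fun k => Nk x a b k z) Filter.atTop
      ≤ 2 * eVariationOn x (Icc a b) := by
    calc ∫⁻ z, Filter.liminf (fun k => Nk x a b k z) Filter.atTop
        ≤ Filter.liminf (fun k => ∫⁻ z, Nk x a b k z) Filter.atTop := lintegral_liminf_le hmeas
      _ ≤ 2 * eVariationOn x (Icc a b) := by
          apply Filter.liminf_le_of_frequently_le'
          apply Filter.Eventually.frequently
          filter_upwards [Filter.eventually_ge_atTop 1] with k hk
          exact hint k hk
  have hae : ∀ᵐ z : ℝ, Filter.liminf (fun k => Nk x a b k z) Filter.atTop < ⊤ := by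
    apply ae_lt_top (Measurable.liminf hmeas)
    exact ne_top_of_le_ne_top (ENNReal.mul_ne_top (by norm_num) (hv a b)) hint_liminf
  filter_upwards [hae] with z hz hcon
  rw [hpointwise z hcon] at hz
  exact absurd hz (lt_irrefl _)

theorem straddle_null (x : ℝ → ℝ) (hv : LocFiniteVar x) {a b : ℝ} (hab : a ≤ b) :
    ∀ᵐ z : ℝ, ¬ ({p : ℝ | p ∈ Icc a b ∧ ¬ContinuousAt x p ∧
      min (leftLim x p) (x p) < z ∧ z < max (leftLim x p) (x p)}.Infinite) := by
  set Jb : Set ℝ := {p | p ∈ Icc a b ∧ ¬ContinuousAt x p} with hJbdef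
  have hJbc : Jb.Countable := (discont_countable x hv).mono (fun p hp => hp.2)
  have hJbsub : Jb ⊆ Icc a b := fun p hp => hp.1
  haveI : Countable ↥Jb := hJbc.to_subtype
  set G : ℝ → ℝ≥0∞ := fun z => ∑' (v : ↥Jb),
    (Ioo (min (leftLim x v.1) (x v.1)) (max (leftLim x v.1) (x v.1))).indicator
      (fun _ => (1:ℝ≥0∞)) z with hGdef
  have hGmeas : Measurable G := by
    apply Measurable.ennreal_tsum
    intro v
    exact Measurable.indicator measurable_const measurableSet_Ioo
  have hGint : ∫⁻ z, G z ≠ ⊤ := by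
    have : ∫⁻ z, G z = ∑' (v : ↥Jb), volume
        (Ioo (min (leftLim x v.1) (x v.1)) (max (leftLim x v.1) (x v.1))) := by
      rw [hGdef]
      rw [lintegral_tsum (fun v => (Measurable.indicator measurable_const
        measurableSet_Ioo).aemeasurable)]
      congr 1
      funext v
      rw [lintegral_indicator_const measurableSet_Ioo, one_mul]
    rw [this]
    have heq : ∀ v : ↥Jb, volume
        (Ioo (min (leftLim x v.1) (x v.1)) (max (leftLim x v.1) (x v.1)))
        = ENNReal.ofReal |x v.1 - leftLim x v.1| := by
      intro v
      rw [Real.volume_Ioo, max_sub_min_eq_abs, abs_sub_comm]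
    rw [tsum_congr heq]
    exact jump_tsum_ne_top x hv hab Jb hJbsub
  have hae : ∀ᵐ z : ℝ, G z < ⊤ := ae_lt_top hGmeas hGint
  filter_upwards [hae] with z hz hcon
  -- hcon : infinite straddle set; derive G z = ⊤
  set S : Set ℝ := {p : ℝ | p ∈ Icc a b ∧ ¬ContinuousAt x p ∧
      min (leftLim x p) (x p) < z ∧ z < max (leftLim x p) (x p)} with hSdef
  have hSsub : S ⊆ Jb := fun p hp => ⟨hp.1, hp.2.1⟩
  have hT : (Subtype.val ⁻¹' S : Set ↥Jb).Infinite := by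
    apply Set.Infinite.preimage hcon
    rw [Subtype.range_coe]
    exact hSsub
  have htop : ∀ m : ℕ, (m : ℝ≥0∞) ≤ G z := by
    intro m
    obtain ⟨F, hFsub, hFcard⟩ := hT.exists_subset_card_eq m
    calc (m:ℝ≥0∞) = ∑ v ∈ F, (1:ℝ≥0∞) := by simp [hFcard]
      _ = ∑ v ∈ F, (Ioo (min (leftLim x v.1) (x v.1))
            (max (leftLim x v.1) (x v.1))).indicator (fun _ => (1:ℝ≥0∞)) z := by
          apply Finset.sum_congr rfl
          intro v hvF
          have hvS : v.1 ∈ S := hFsub hvF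
          have hzmem : z ∈ Ioo (min (leftLim x v.1) (x v.1))
              (max (leftLim x v.1) (x v.1)) := ⟨hvS.2.2.1, hvS.2.2.2⟩
          rw [Set.indicator_of_mem hzmem]
      _ ≤ G z := ENNReal.sum_le_tsum F
  obtain ⟨n, hn⟩ := ENNReal.exists_nat_gt hz.ne
  exact absurd (lt_of_le_of_lt (htop n) hn) (lt_irrefl _)

theorem accum_right_infinite {S : Set ℝ} {u : ℝ}
    (h : ∀ ε > (0:ℝ), ∃ v, v ∈ Ioo u (u+ε) ∧ v ∈ S) : S.Infinite := by
  by_contra hinf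
  rw [Set.not_infinite] at hinf
  have hfin : S.Finite := hinf
  set T : Set ℝ := S ∩ Ioi u with hT
  have hTfin : T.Finite := hfin.subset inter_subset_left
  have hTmem : ∀ ε > (0:ℝ), ∃ v, v ∈ Ioo u (u+ε) ∧ v ∈ T := by
    intro ε hε
    obtain ⟨v, hv1, hv2⟩ := h ε hε
    exact ⟨v, hv1, hv2, hv1.1⟩
  obtain ⟨v₁, hv₁, hv₁T⟩ := hTmem 1 one_pos
  have hFne : hTfin.toFinset.Nonempty := ⟨v₁, hTfin.mem_toFinset.2 hv₁T⟩
  set m := hTfin.toFinset.min' hFne with hm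
  have hmT : m ∈ T := hTfin.mem_toFinset.1 (hTfin.toFinset.min'_mem hFne)
  have hum : u < m := hmT.2
  obtain ⟨v, hv1, hv2⟩ := hTmem (m - u) (by linarith)
  have : m ≤ v := hTfin.toFinset.min'_le v (hTfin.mem_toFinset.2 hv2)
  have : v < m := by have := hv1.2; linarith
  linarith

theorem accum_left_infinite {S : Set ℝ} {u : ℝ}
    (h : ∀ ε > (0:ℝ), ∃ v, v ∈ Ioo (u-ε) u ∧ v ∈ S) : S.Infinite := by
  have himg : ((fun v : ℝ => -v) '' S).Infinite := by
    apply accum_right_infinite (u := -u)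
    intro ε hε
    obtain ⟨v, hv1, hv2⟩ := h ε hε
    exact ⟨-v, ⟨by linarith [hv1.2], by linarith [hv1.1]⟩, mem_image_of_mem _ hv2⟩
  exact Set.Infinite.of_image _ himg

/-- The central pointwise lemma: at a good level, every visit is a continuous crossing. -/
theorem good_level (x : ℝ → ℝ) (hx : Cadlag x) {t : ℝ} (ht : 0 < t) {z : ℝ}
    (hz0 : z ≠ x 0)
    (hzJ : ∀ p : ℝ, p ∈ Icc (-1:ℝ) (t+1) → ¬ContinuousAt x p → x p ≠ z ∧ leftLim x p ≠ z)
    (hzM : ∀ p : ℝ, (IsLocalMax x p ∨ IsLocalMin x p) → x p ≠ z)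
    (hzS : ¬ ({p : ℝ | p ∈ Icc (-1:ℝ) (t+1) ∧ ¬ContinuousAt x p ∧
      min (leftLim x p) (x p) < z ∧ z < max (leftLim x p) (x p)}.Infinite))
    (hzL : ¬ ({v : ℝ | v ∈ Icc (-1:ℝ) (t+1) ∧ x v = z}.Infinite)) :
    ∀ u ∈ Icc (0:ℝ) t, x u = z →
      u ∈ (incrSet x z ∩ Ioc 0 t) ∪ (decrSet x z ∩ Ioc 0 t) := by
  intro u hu hxu
  have hu0 : 0 < u := by
    rcases eq_or_lt_of_le hu.1 with h | h
    · exact absurd (h ▸ hxu : x 0 = z).symm hz0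
    · exact h
  have huIoc : u ∈ Ioc (0:ℝ) t := ⟨hu0, hu.2⟩
  have huw : u ∈ Icc (-1:ℝ) (t+1) := ⟨by linarith [hu.1], by linarith [hu.2]⟩
  have hcont : ContinuousAt x u := by
    by_contra hnc
    exact absurd hxu (hzJ u huw hnc).1
  by_contra hcon
  simp only [mem_union, not_or] at hcon
  obtain ⟨hni, hnd⟩ := hcon
  have hni' : u ∉ incrSet x z := fun h => hni ⟨h, huIoc⟩
  have hnd' : u ∉ decrSet x z := fun h => hnd ⟨h, huIoc⟩
  -- dichotomy extraction from failure of incr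
  have hIdich : ∀ ε > (0:ℝ), (∃ v, v ∈ Ioo (u-ε) u ∧ z ≤ x v) ∨
      (∃ v, v ∈ Ioo u (u+ε) ∧ x v ≤ z) := by
    intro ε hε
    have hne : ¬ ∃ ε > (0:ℝ), ∀ v : ℝ, |v - u| < ε →
        (v < u → x v < x u) ∧ (u < v → x u < x v) := by
      intro h
      exact hni' ⟨hcont, hxu, h⟩
    push_neg at hne
    obtain ⟨v, hvd, hv⟩ := hne ε hε
    rcases lt_trichotomy v u with hlt | heq | hgt
    · left
      refine ⟨v, ⟨by cases' abs_sub_lt_iff.1 hvd with h1 h2; linarith, hlt⟩, ?_⟩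
      by_cases hc : x v < x u
      · exact absurd (hv (fun _ => hc)).1 (by linarith)
      · rw [← hxu]; linarith [not_lt.1 hc]
    · exfalso
      subst heq
      exact absurd (hv (fun h => absurd h (lt_irrefl v))).1 (lt_irrefl v)
    · right
      refine ⟨v, ⟨hgt, by cases' abs_sub_lt_iff.1 hvd with h1 h2; linarith⟩, ?_⟩
      rw [← hxu]
      exact (hv (fun h => absurd h (by linarith))).2
  have hDdich : ∀ ε > (0:ℝ), (∃ v, v ∈ Ioo (u-ε) u ∧ x v ≤ z) ∨
      (∃ v, v ∈ Ioo u (u+ε) ∧ z ≤ x v) := by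
    intro ε hε
    have hne : ¬ ∃ ε > (0:ℝ), ∀ v : ℝ, |v - u| < ε →
        (v < u → x u < x v) ∧ (u < v → x v < x u) := by
      intro h
      exact hnd' ⟨hcont, hxu, h⟩
    push_neg at hne
    obtain ⟨v, hvd, hv⟩ := hne ε hε
    rcases lt_trichotomy v u with hlt | heq | hgt
    · left
      refine ⟨v, ⟨by cases' abs_sub_lt_iff.1 hvd with h1 h2; linarith, hlt⟩, ?_⟩
      by_cases hc : x u < x v
      · exact absurd (hv (fun _ => hc)).1 (by linarith)
      · rw [← hxu]; linarith [not_lt.1 hc]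
    · exfalso
      subst heq
      exact absurd (hv (fun h => absurd h (lt_irrefl v))).1 (lt_irrefl v)
    · right
      refine ⟨v, ⟨hgt, by cases' abs_sub_lt_iff.1 hvd with h1 h2; linarith⟩, ?_⟩
      rw [← hxu]
      exact (hv (fun h => absurd h (by linarith))).2
  -- uniformized one-sided predicates
  have hImain : (∀ ε > (0:ℝ), ∃ v, v ∈ Ioo (u-ε) u ∧ z ≤ x v) ∨
      (∀ ε > (0:ℝ), ∃ v, v ∈ Ioo u (u+ε) ∧ x v ≤ z) := by
    by_cases hLge : ∀ ε > (0:ℝ), ∃ v, v ∈ Ioo (u-ε) u ∧ z ≤ x v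
    · exact Or.inl hLge
    · right
      push_neg at hLge
      obtain ⟨ε₀, hε₀, hL⟩ := hLge
      intro ε hε
      rcases hIdich (min ε ε₀) (by positivity) with ⟨v, hv1, hv2⟩ | ⟨v, hv1, hv2⟩
      · exfalso
        have : v ∈ Ioo (u-ε₀) u := ⟨by have := hv1.1; have := min_le_right ε ε₀; linarith, hv1.2⟩
        exact absurd hv2 (not_le.2 (hL v this))
      · exact ⟨v, ⟨hv1.1, by have := hv1.2; have := min_le_left ε ε₀; linarith⟩, hv2⟩
  have hDmain : (∀ ε > (0:ℝ), ∃ v, v ∈ Ioo (u-ε) u ∧ x v ≤ z) ∨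
      (∀ ε > (0:ℝ), ∃ v, v ∈ Ioo u (u+ε) ∧ z ≤ x v) := by
    by_cases hLle : ∀ ε > (0:ℝ), ∃ v, v ∈ Ioo (u-ε) u ∧ x v ≤ z
    · exact Or.inl hLle
    · right
      push_neg at hLle
      obtain ⟨ε₀, hε₀, hL⟩ := hLle
      intro ε hε
      rcases hDdich (min ε ε₀) (by positivity) with ⟨v, hv1, hv2⟩ | ⟨v, hv1, hv2⟩
      · exfalso
        have : v ∈ Ioo (u-ε₀) u := ⟨by have := hv1.1; have := min_le_right ε ε₀; linarith, hv1.2⟩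
        exact absurd hv2 (not_le.2 (hL v this))
      · exact ⟨v, ⟨hv1.1, by have := hv1.2; have := min_le_left ε ε₀; linarith⟩, hv2⟩
  -- oscillation on the right leads to contradiction
  have hosc_right : (∀ ε > (0:ℝ), ∃ v, v ∈ Ioo u (u+ε) ∧ z ≤ x v) →
      (∀ ε > (0:ℝ), ∃ v, v ∈ Ioo u (u+ε) ∧ x v ≤ z) → False := by
    intro hRge hRle
    by_cases hhit : ∀ ε > (0:ℝ), ∃ v, v ∈ Ioo u (u+ε) ∧ x v = z
    · apply hzL
      apply accum_right_infinite (u := u)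
      intro ε hε
      obtain ⟨v, hv1, hv2⟩ := hhit (min ε 1) (by positivity)
      have h1 := hv1.1
      have h2 := hv1.2
      have hm1 := min_le_left ε (1:ℝ)
      have hm2 := min_le_right ε (1:ℝ)
      exact ⟨v, ⟨h1, by linarith⟩,
        ⟨⟨by linarith [hu.1], by linarith [hu.2]⟩, hv2⟩⟩
    · push_neg at hhit
      obtain ⟨ε₀, hε₀, hne0⟩ := hhit
      apply hzS
      apply accum_right_infinite (u := u)
      intro ε hε
      set ε' : ℝ := min (min ε ε₀) 1 with hε'def
      have hε' : 0 < ε' := by positivity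
      have hε'ε : ε' ≤ ε := (min_le_left _ _).trans (min_le_left _ _)
      have hε'ε₀ : ε' ≤ ε₀ := (min_le_left _ _).trans (min_le_right _ _)
      have hε'1 : ε' ≤ 1 := min_le_right _ _
      obtain ⟨w, hw1, hw2⟩ := hRge ε' hε'
      obtain ⟨v, hv1, hv2⟩ := hRle ε' hε'
      have hsubset : Ioo u (u+ε') ⊆ Ioo u (u+ε₀) :=
        Ioo_subset_Ioo le_rfl (by linarith)
      have hwgt : z < x w := lt_of_le_of_ne hw2 (Ne.symm (hne0 w (hsubset hw1)))
      have hvlt : x v < z := lt_of_le_of_ne hv2 (hne0 v (hsubset hv1))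
      have hno : ∀ r, r ∈ Icc (min v w) (max v w) → x r ≠ z := by
        intro r hr
        apply hne0
        constructor
        · calc u < min v w := lt_min hv1.1 hw1.1
            _ ≤ r := hr.1
        · calc r ≤ max v w := hr.2
            _ < u + ε₀ := max_lt (by linarith [hv1.2]) (by linarith [hw1.2])
      have hvw : v ≠ w := by intro h; rw [h] at hvlt; linarith
      have hkey : ∃ p, p ∈ Ioo u (u+ε) ∧ p ∈ Icc (-1:ℝ) (t+1) ∧ ¬ContinuousAt x p ∧
          min (leftLim x p) (x p) < z ∧ z < max (leftLim x p) (x p) := by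
        rcases lt_or_gt_of_ne hvw with hlt | hgt
        · obtain ⟨p, hp1, hp2, hp3, hp4⟩ := cross_up x hx hlt hvlt hwgt (by
            intro r hr
            apply hno r
            rwa [min_eq_left hlt.le, max_eq_right hlt.le])
          have hpIoo : p ∈ Ioo u (u+ε) :=
            ⟨lt_trans hv1.1 hp1.1, by linarith [hp1.2, hw1.2]⟩
          have hpw : p ∈ Icc (-1:ℝ) (t+1) :=
            ⟨by linarith [hpIoo.1, hu.1], by linarith [hp1.2, hw1.2, hε'1, hu.2]⟩
          have hllne : leftLim x p ≠ z := (hzJ p hpw hp2).2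
          have hll : leftLim x p < z := lt_of_le_of_ne hp3 hllne
          exact ⟨p, hpIoo, hpw, hp2, lt_of_le_of_lt (min_le_left _ _) hll,
            lt_of_lt_of_le hp4 (le_max_right _ _)⟩
        · obtain ⟨p, hp1, hp2, hp3, hp4⟩ := cross_down x hx hgt hwgt hvlt (by
            intro r hr
            apply hno r
            rwa [min_eq_right hgt.le, max_eq_left hgt.le])
          have hpIoo : p ∈ Ioo u (u+ε) :=
            ⟨lt_trans hw1.1 hp1.1, by linarith [hp1.2, hv1.2]⟩
          have hpw : p ∈ Icc (-1:ℝ) (t+1) :=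
            ⟨by linarith [hpIoo.1, hu.1], by linarith [hp1.2, hv1.2, hε'1, hu.2]⟩
          have hllne : leftLim x p ≠ z := (hzJ p hpw hp2).2
          have hll : z < leftLim x p := lt_of_le_of_ne hp4 (Ne.symm hllne)
          exact ⟨p, hpIoo, hpw, hp2, lt_of_le_of_lt (min_le_right _ _) hp3,
            lt_of_lt_of_le hll (le_max_left _ _)⟩
      obtain ⟨p, hpIoo, hpw, hpd, hp5, hp6⟩ := hkey
      exact ⟨p, hpIoo, hpw, hpd, hp5, hp6⟩
  -- oscillation on the left
  have hosc_left : (∀ ε > (0:ℝ), ∃ v, v ∈ Ioo (u-ε) u ∧ z ≤ x v) →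
      (∀ ε > (0:ℝ), ∃ v, v ∈ Ioo (u-ε) u ∧ x v ≤ z) → False := by
    intro hLge hLle
    by_cases hhit : ∀ ε > (0:ℝ), ∃ v, v ∈ Ioo (u-ε) u ∧ x v = z
    · apply hzL
      apply accum_left_infinite (u := u)
      intro ε hε
      obtain ⟨v, hv1, hv2⟩ := hhit (min ε 1) (by positivity)
      have h1 := hv1.1
      have h2 := hv1.2
      have hm1 := min_le_left ε (1:ℝ)
      have hm2 := min_le_right ε (1:ℝ)
      exact ⟨v, ⟨by linarith, h2⟩,
        ⟨⟨by linarith [hu.1], by linarith [hu.2]⟩, hv2⟩⟩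
    · push_neg at hhit
      obtain ⟨ε₀, hε₀, hne0⟩ := hhit
      apply hzS
      apply accum_left_infinite (u := u)
      intro ε hε
      set ε' : ℝ := min (min ε ε₀) 1 with hε'def
      have hε' : 0 < ε' := by positivity
      have hε'ε : ε' ≤ ε := (min_le_left _ _).trans (min_le_left _ _)
      have hε'ε₀ : ε' ≤ ε₀ := (min_le_left _ _).trans (min_le_right _ _)
      have hε'1 : ε' ≤ 1 := min_le_right _ _
      obtain ⟨w, hw1, hw2⟩ := hLge ε' hε'
      obtain ⟨v, hv1, hv2⟩ := hLle ε' hε'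
      have hsubset : Ioo (u-ε') u ⊆ Ioo (u-ε₀) u :=
        Ioo_subset_Ioo (by linarith) le_rfl
      have hwgt : z < x w := lt_of_le_of_ne hw2 (Ne.symm (hne0 w (hsubset hw1)))
      have hvlt : x v < z := lt_of_le_of_ne hv2 (hne0 v (hsubset hv1))
      have hno : ∀ r, r ∈ Icc (min v w) (max v w) → x r ≠ z := by
        intro r hr
        apply hne0
        constructor
        · calc u - ε₀ < min v w := lt_min (by linarith [hv1.1]) (by linarith [hw1.1])
            _ ≤ r := hr.1
        · calc r ≤ max v w := hr.2
            _ < u := max_lt hv1.2 hw1.2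
      have hvw : v ≠ w := by intro h; rw [h] at hvlt; linarith
      have hkey : ∃ p, p ∈ Ioo (u-ε) u ∧ p ∈ Icc (-1:ℝ) (t+1) ∧ ¬ContinuousAt x p ∧
          min (leftLim x p) (x p) < z ∧ z < max (leftLim x p) (x p) := by
        rcases lt_or_gt_of_ne hvw with hlt | hgt
        · obtain ⟨p, hp1, hp2, hp3, hp4⟩ := cross_up x hx hlt hvlt hwgt (by
            intro r hr
            apply hno r
            rwa [min_eq_left hlt.le, max_eq_right hlt.le])
          have hpIoo : p ∈ Ioo (u-ε) u :=
            ⟨by linarith [hv1.1, hp1.1], lt_of_le_of_lt hp1.2 hw1.2⟩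
          have hpw : p ∈ Icc (-1:ℝ) (t+1) :=
            ⟨by linarith [hp1.1, hv1.1, hε'1, hu.1], by linarith [hpIoo.2, hu.2]⟩
          have hllne : leftLim x p ≠ z := (hzJ p hpw hp2).2
          have hll : leftLim x p < z := lt_of_le_of_ne hp3 hllne
          exact ⟨p, hpIoo, hpw, hp2, lt_of_le_of_lt (min_le_left _ _) hll,
            lt_of_lt_of_le hp4 (le_max_right _ _)⟩
        · obtain ⟨p, hp1, hp2, hp3, hp4⟩ := cross_down x hx hgt hwgt hvlt (by
            intro r hr
            apply hno r
            rwa [min_eq_right hgt.le, max_eq_left hgt.le])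
          have hpIoo : p ∈ Ioo (u-ε) u :=
            ⟨by linarith [hw1.1, hp1.1], lt_of_le_of_lt hp1.2 hv1.2⟩
          have hpw : p ∈ Icc (-1:ℝ) (t+1) :=
            ⟨by linarith [hp1.1, hw1.1, hε'1, hu.1], by linarith [hpIoo.2, hu.2]⟩
          have hllne : leftLim x p ≠ z := (hzJ p hpw hp2).2
          have hll : z < leftLim x p := lt_of_le_of_ne hp4 (Ne.symm hllne)
          exact ⟨p, hpIoo, hpw, hp2, lt_of_le_of_lt (min_le_right _ _) hp3,
            lt_of_lt_of_le hll (le_max_left _ _)⟩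
      obtain ⟨p, hpIoo, hpw, hpd, hp5, hp6⟩ := hkey
      exact ⟨p, hpIoo, hpw, hpd, hp5, hp6⟩
  -- final case analysis
  rcases hImain with hLge | hRle <;> rcases hDmain with hLle | hRge
  · exact hosc_left hLge hLle
  · -- Lge and Rge
    by_cases hLle : ∀ ε > (0:ℝ), ∃ v, v ∈ Ioo (u-ε) u ∧ x v ≤ z
    · exact hosc_left hLge hLle
    by_cases hRle : ∀ ε > (0:ℝ), ∃ v, v ∈ Ioo u (u+ε) ∧ x v ≤ z
    · exact hosc_right hRge hRle
    push_neg at hLle hRle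
    obtain ⟨ε₁, hε₁, hL⟩ := hLle
    obtain ⟨ε₂, hε₂, hR⟩ := hRle
    apply hzM u (Or.inr _) hxu
    have : ∀ᶠ v in nhds u, x u ≤ x v := by
      rw [Metric.eventually_nhds_iff]
      refine ⟨min ε₁ ε₂, by positivity, ?_⟩
      intro v hvd
      rw [Real.dist_eq, abs_sub_lt_iff] at hvd
      have hm1 := min_le_left ε₁ ε₂
      have hm2 := min_le_right ε₁ ε₂
      rcases lt_trichotomy v u with hlt | heq | hgt
      · have : z < x v := hL v ⟨by linarith [hvd.2], hlt⟩
        linarith [hxu ▸ this]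
      · rw [heq]
      · have : z < x v := hR v ⟨hgt, by linarith [hvd.1]⟩
        linarith [hxu ▸ this]
    exact this
  · -- Rle and Lle
    by_cases hLge : ∀ ε > (0:ℝ), ∃ v, v ∈ Ioo (u-ε) u ∧ z ≤ x v
    · exact hosc_left hLge hLle
    by_cases hRge : ∀ ε > (0:ℝ), ∃ v, v ∈ Ioo u (u+ε) ∧ z ≤ x v
    · exact hosc_right hRge hRle
    push_neg at hLge hRge
    obtain ⟨ε₁, hε₁, hL⟩ := hLge
    obtain ⟨ε₂, hε₂, hR⟩ := hRge
    apply hzM u (Or.inl _) hxu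
    have : ∀ᶠ v in nhds u, x v ≤ x u := by
      rw [Metric.eventually_nhds_iff]
      refine ⟨min ε₁ ε₂, by positivity, ?_⟩
      intro v hvd
      rw [Real.dist_eq, abs_sub_lt_iff] at hvd
      have hm1 := min_le_left ε₁ ε₂
      have hm2 := min_le_right ε₁ ε₂
      rcases lt_trichotomy v u with hlt | heq | hgt
      · have : x v < z := hL v ⟨by linarith [hvd.2], hlt⟩
        linarith [hxu ▸ this]
      · rw [heq]
      · have : x v < z := hR v ⟨hgt, by linarith [hvd.1]⟩
        linarith [hxu ▸ this]
    exact this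
  · exact hosc_right hRge hRle

/-- with `n^z(t)` the Banach indicatrix,
`r^z(t) = n^z(t) - Card(I(z) ∩ (0,t]) - Card(D(z) ∩ (0,t]) ≥ 0`, and `r^z(t) = 0` for a.e. `z`. -/
theorem banach_indicatrix_ae (x : ℝ → ℝ) (hx : Cadlag x) (hv : LocFiniteVar x)
    (t : ℝ) (ht : 0 < t) :
    (∀ z : ℝ, (incrSet x z ∩ Ioc 0 t).encard + (decrSet x z ∩ Ioc 0 t).encard
        ≤ {u : ℝ | u ∈ Icc (0:ℝ) t ∧ x u = z}.encard) ∧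
    (∀ᵐ z : ℝ, {u : ℝ | u ∈ Icc (0:ℝ) t ∧ x u = z}.encard
        = (incrSet x z ∩ Ioc 0 t).encard + (decrSet x z ∩ Ioc 0 t).encard) := by
  have hdisj : ∀ z : ℝ, Disjoint (incrSet x z ∩ Ioc 0 t) (decrSet x z ∩ Ioc 0 t) := by
    intro z
    rw [Set.disjoint_left]
    rintro u ⟨hui, _⟩ ⟨hud, _⟩
    obtain ⟨_, _, ε₁, hε₁, h1⟩ := hui
    obtain ⟨_, _, ε₂, hε₂, h2⟩ := hud
    set v := u + min ε₁ ε₂ / 2 with hv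
    have hm : 0 < min ε₁ ε₂ := lt_min hε₁ hε₂
    have hm1 := min_le_left ε₁ ε₂
    have hm2 := min_le_right ε₁ ε₂
    have hd : |v - u| < ε₁ ∧ |v - u| < ε₂ := by
      rw [hv]
      constructor <;> (rw [abs_of_pos (by linarith)] <;> try linarith) <;> linarith
    have huv : u < v := by rw [hv]; linarith
    have := (h1 v hd.1).2 huv
    have := (h2 v hd.2).2 huv
    linarith
  have hsub : ∀ z : ℝ, (incrSet x z ∩ Ioc 0 t) ∪ (decrSet x z ∩ Ioc 0 t)
      ⊆ {u : ℝ | u ∈ Icc (0:ℝ) t ∧ x u = z} := by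
    intro z u hu
    rcases hu with ⟨hi, hIoc⟩ | ⟨hd, hIoc⟩
    · exact ⟨⟨hIoc.1.le, hIoc.2⟩, hi.2.1⟩
    · exact ⟨⟨hIoc.1.le, hIoc.2⟩, hd.2.1⟩
  constructor
  · intro z
    rw [← Set.encard_union_eq (hdisj z)]
    exact Set.encard_le_encard (hsub z)
  · -- bad sets
    have hB1 : ∀ᵐ z : ℝ, z ∉ ({x 0} : Set ℝ) :=
      measure_eq_zero_iff_ae_notMem.1 ((Set.countable_singleton _).measure_zero _)
    set J : Set ℝ := {p : ℝ | ¬ContinuousAt x p} with hJdef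
    have hJc : J.Countable := discont_countable x hv
    have hB2 : ∀ᵐ z : ℝ, z ∉ (x '' J ∪ leftLim x '' J) :=
      measure_eq_zero_iff_ae_notMem.1 (((hJc.image x).union (hJc.image (leftLim x))).measure_zero _)
    have hB3 : ∀ᵐ z : ℝ, z ∉ (x '' {p | IsLocalMax x p} ∪ x '' {p | IsLocalMin x p}) :=
      measure_eq_zero_iff_ae_notMem.1
        (((countable_localMax_image x).union (countable_localMin_image x)).measure_zero _)
    have hB5 := straddle_null x hv (a := -1) (b := t+1) (by linarith)
    have hB6 := infinite_level_null x hv (a := -1) (b := t+1) (by linarith)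
    filter_upwards [hB1, hB2, hB3, hB5, hB6] with z h1 h2 h3 h5 h6
    have hz0 : z ≠ x 0 := by
      intro h; exact h1 (by rw [h]; exact rfl)
    have hzJ : ∀ p : ℝ, p ∈ Icc (-1:ℝ) (t+1) → ¬ContinuousAt x p →
        x p ≠ z ∧ leftLim x p ≠ z := by
      intro p _ hpd
      constructor
      · intro h
        exact h2 (Or.inl ⟨p, hpd, h⟩)
      · intro h
        exact h2 (Or.inr ⟨p, hpd, h⟩)
    have hzM : ∀ p : ℝ, (IsLocalMax x p ∨ IsLocalMin x p) → x p ≠ z := by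
      intro p hp h
      rcases hp with hmax | hmin
      · exact h3 (Or.inl ⟨p, hmax, h⟩)
      · exact h3 (Or.inr ⟨p, hmin, h⟩)
    have hgl := good_level x hx ht hz0 hzJ hzM h5 h6
    have heq : {u : ℝ | u ∈ Icc (0:ℝ) t ∧ x u = z}
        = (incrSet x z ∩ Ioc 0 t) ∪ (decrSet x z ∩ Ioc 0 t) := by
      apply Set.Subset.antisymm
      · intro u hu
        exact hgl u hu.1 hu.2
      · exact hsub z
    rw [heq, Set.encard_union_eq (hdisj z)]
end
end
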